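/- arXiv:2510.18624 — 13 statements merged into one kernel-verified Lean document; each statement's English description precedes it below -/
import Mathlib

section
/- Let m be coprime to q, d | m, γ ∈ Z, and let f_T(X) = X^{m/d} − ζ_m^{γm/d} be the binomial induced by the equal-difference set T = {γ, γ+d, ..., γ+(m/d−1)d} ⊆ Z/mZ. Then f_T(X) has all coefficients in F_q if and only if γq ≡ γ (mod d). -/
open Polynomial

lemma mem_range_iff_pow_card {F : Type*} [Field F] [Fintype F] (q : ℕ)
    (hq : Fintype.card F = q) (x : AlgebraicClosure F) :
    x ∈ Set.range (algebraMap F (AlgebraicClosure F)) ↔ x ^ q = x := by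
  classical
  subst hq
  constructor
  · rintro ⟨a, rfl⟩
    rw [← map_pow, FiniteField.pow_card]
  · intro hx
    have h1 : 1 < Fintype.card F := Fintype.one_lt_card
    set P : (AlgebraicClosure F)[X] := X ^ Fintype.card F - X with hP
    have hPne : P ≠ 0 := FiniteField.X_pow_card_sub_X_ne_zero _ h1
    have hPdeg : P.natDegree = Fintype.card F :=
      FiniteField.X_pow_card_sub_X_natDegree_eq _ h1
    have hroot : ∀ y : AlgebraicClosure F, y ^ Fintype.card F = y → y ∈ P.roots.toFinset := by
      intro y hy
      rw [Multiset.mem_toFinset, mem_roots hPne]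
      simp only [IsRoot, hP, eval_sub, eval_pow,
        eval_X, hy, sub_self]
    have hcard : P.roots.toFinset.card ≤ Fintype.card F := by
      calc P.roots.toFinset.card ≤ Multiset.card P.roots := P.roots.toFinset_card_le
        _ ≤ P.natDegree := P.card_roots'
        _ = Fintype.card F := hPdeg
    have himg : (Finset.univ.image (algebraMap F (AlgebraicClosure F))) ⊆ P.roots.toFinset := by
      intro y hy
      simp only [Finset.mem_image] at hy
      obtain ⟨a, -, rfl⟩ := hy
      exact hroot _ (by rw [← map_pow, FiniteField.pow_card])
    have hcardimg : (Finset.univ.image (algebraMap F (AlgebraicClosure F))).card = Fintype.card F := by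
      rw [Finset.card_image_of_injective _ (algebraMap F (AlgebraicClosure F)).injective, Finset.card_univ]
    have heq : P.roots.toFinset = Finset.univ.image (algebraMap F (AlgebraicClosure F)) :=
      (Finset.eq_of_subset_of_card_le himg (hcardimg ▸ hcard)).symm
    have hx' := hroot x hx
    rw [heq, Finset.mem_image] at hx'
    obtain ⟨a, -, ha⟩ := hx'
    exact ⟨a, ha⟩

/-- The binomial `f_T(X) = X^{m/d} − ζ^{γ·m/d}` induced by the equal-difference set
`{γ, γ+d, ..., γ+(m/d−1)d}` has all its coefficients in `F_q` iff `γq ≡ γ (mod d)`. -/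
theorem stmt_3 {F : Type*} [Field F] [Fintype F] (q : ℕ) (hq : Fintype.card F = q)
    (m d : ℕ) (hm : 0 < m) (hco : Nat.Coprime m q) (hd : d ∣ m) (hd0 : 0 < d)
    (ζ : AlgebraicClosure F) (hζ : IsPrimitiveRoot ζ m) (γ : ℤ) :
    (∀ k : ℕ, ((X : (AlgebraicClosure F)[X]) ^ (m / d) - C (ζ ^ (γ * ((m / d : ℕ) : ℤ)))).coeff k
        ∈ Set.range (algebraMap F (AlgebraicClosure F))) ↔
      γ * (q : ℤ) ≡ γ [ZMOD (d : ℤ)] := by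
  classical
  have he0 : 0 < m / d := Nat.div_pos (Nat.le_of_dvd hm hd) hd0
  have hme : m = d * (m / d) := (Nat.mul_div_cancel' hd).symm
  have hζ0 : ζ ≠ 0 := hζ.ne_zero hm.ne'
  set e : ℕ := m / d
  -- key equivalence : ζ^(γe) ∈ range ↔ d ∣ γ*(q-1)
  have key : ζ ^ (γ * (e : ℤ)) ∈ Set.range (algebraMap F (AlgebraicClosure F)) ↔
      (d : ℤ) ∣ γ * ((q : ℤ) - 1) := by
    rw [mem_range_iff_pow_card q hq, ← zpow_natCast _ q, ← zpow_mul]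
    have step : ζ ^ (γ * (e : ℤ) * (q : ℤ)) = ζ ^ (γ * (e : ℤ)) ↔
        (m : ℤ) ∣ γ * (e : ℤ) * ((q : ℤ) - 1) := by
      constructor
      · intro h
        have h1 : ζ ^ (γ * (e : ℤ) * (q : ℤ) - γ * (e : ℤ)) = 1 := by
          rw [zpow_sub₀ hζ0, h, div_self (zpow_ne_zero _ hζ0)]
        have h2 := (hζ.zpow_eq_one_iff_dvd _).mp h1
        have heq : γ * (e : ℤ) * (q : ℤ) - γ * (e : ℤ) = γ * (e : ℤ) * ((q : ℤ) - 1) := by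
          ring
        rwa [heq] at h2
      · intro h
        have h1 : ζ ^ (γ * (e : ℤ) * ((q : ℤ) - 1)) = 1 := (hζ.zpow_eq_one_iff_dvd _).mpr h
        have heq : γ * (e : ℤ) * (q : ℤ) = γ * (e : ℤ) * ((q : ℤ) - 1) + γ * (e : ℤ) := by
          ring
        rw [heq, zpow_add₀ hζ0, h1, one_mul]
    rw [step]
    have hre : γ * (e : ℤ) * ((q : ℤ) - 1) = (γ * ((q : ℤ) - 1)) * (e : ℤ) := by ring
    have hme' : (m : ℤ) = (d : ℤ) * (e : ℤ) := by exact_mod_cast hme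
    have he0' : (e : ℤ) ≠ 0 := by exact_mod_cast he0.ne'
    rw [hre, hme']
    exact mul_dvd_mul_iff_right he0'
  have keymod : (γ * (q : ℤ) ≡ γ [ZMOD (d : ℤ)]) ↔ (d : ℤ) ∣ γ * ((q : ℤ) - 1) := by
    rw [Int.modEq_iff_dvd]
    constructor <;> intro h
    · have heq : γ - γ * (q : ℤ) = -(γ * ((q : ℤ) - 1)) := by ring
      rw [heq, dvd_neg] at h
      exact h
    · have heq : γ - γ * (q : ℤ) = -(γ * ((q : ℤ) - 1)) := by ring
      rw [heq, dvd_neg]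
      exact h
  rw [keymod, ← key]
  have hrange : -(ζ ^ (γ * (e : ℤ))) ∈ Set.range (algebraMap F (AlgebraicClosure F)) ↔
      ζ ^ (γ * (e : ℤ)) ∈ Set.range (algebraMap F (AlgebraicClosure F)) := by
    constructor
    · rintro ⟨a, ha⟩
      exact ⟨-a, by rw [map_neg, ha, neg_neg]⟩
    · rintro ⟨a, ha⟩
      exact ⟨-a, by rw [map_neg, ha]⟩
  constructor
  · intro h
    have h0 := h 0
    rw [coeff_sub, coeff_X_pow, coeff_C, if_neg he0.ne, if_pos rfl, zero_sub] at h0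
    exact hrange.mp h0
  · intro h k
    rw [coeff_sub, coeff_X_pow, coeff_C]
    by_cases hk0 : k = 0
    · subst hk0
      rw [if_neg he0.ne, if_pos rfl, zero_sub]
      exact hrange.mpr h
    · rw [if_neg hk0, sub_zero]
      by_cases hke : k = e
      · rw [if_pos hke]; exact ⟨1, map_one _⟩
      · rw [if_neg hke]; exact ⟨0, map_zero _⟩
end

section
/- Let f(X) be a nonconstant squarefree polynomial over F_q coprime to X, with order m (the smallest positive integer with f(X) | X^m − 1) and primitive defining set T_f ⊆ Z/mZ, i.e., f(X) = a·∏_{γ ∈ T_f}(X − ζ_m^γ) for some a ∈ F_q^*. Then f(X) is a binomial (of the form a(X^n − λ) with λ ≠ 0) if and only if T_f is an equal-difference subset of Z/mZ. -/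
open Polynomial

/-- Equal-difference subset of `ℤ/mℤ`. -/
def IsEqDiff (m : ℕ) (E : Finset (ZMod m)) : Prop :=
  ∃ (γ : ZMod m) (d : ℕ), d ∣ m ∧ 0 < d ∧
    E = (Finset.range (m / d)).image (fun i => γ + ((i * d : ℕ) : ZMod m))

/-- A nonconstant squarefree polynomial `f` over `F_q`, coprime to `X`, of order `m`,
with primitive defining set `T ⊆ ℤ/mℤ`, is a binomial iff `T` is an equal-difference
subset of `ℤ/mℤ`. -/
theorem stmt_4 {F : Type*} [Field F] [Fintype F]
    (f : F[X]) (hdeg : 0 < f.natDegree) (hsq : Squarefree f) (h0 : f.coeff 0 ≠ 0)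
    (m : ℕ) (hm : 0 < m) (hdvd : f ∣ X ^ m - 1)
    (hmin : ∀ k, 0 < k → f ∣ X ^ k - 1 → m ≤ k)
    (ζ : AlgebraicClosure F) (hζ : IsPrimitiveRoot ζ m)
    (T : Finset (ZMod m)) (a : F) (ha : a ≠ 0)
    (hT : f.map (algebraMap F (AlgebraicClosure F)) =
      C ((algebraMap F (AlgebraicClosure F)) a) * ∏ γ ∈ T, (X - C (ζ ^ γ.val))) :
    (∃ (n : ℕ) (l b : F), 0 < n ∧ l ≠ 0 ∧ f = C b * (X ^ n - C l)) ↔ IsEqDiff m T := by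
  classical
  haveI : NeZero m := ⟨hm.ne'⟩
  set φ := algebraMap F (AlgebraicClosure F) with hφdef
  have hφinj : Function.Injective φ := (algebraMap F _).injective
  have hφa : φ a ≠ 0 := fun h => ha (hφinj (by simpa using h))
  have hmod : ∀ c : ℕ, ζ ^ (c % m) = ζ ^ c := by
    intro c
    conv_rhs => rw [← Nat.div_add_mod c m]
    rw [pow_add, pow_mul, hζ.pow_eq_one, one_pow, one_mul]
  have hadd : ∀ x y : ZMod m, ζ ^ (x + y).val = ζ ^ x.val * ζ ^ y.val := by
    intro x y
    rw [ZMod.val_add, hmod, pow_add]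
  have hcard : T.card = f.natDegree := by
    have h1 : (f.map φ).natDegree = f.natDegree :=
      natDegree_map_eq_of_injective hφinj f
    have h2 : (C (φ a) * ∏ γ ∈ T, (X - C (ζ ^ γ.val))).natDegree = T.card := by
      rw [natDegree_C_mul hφa, natDegree_prod _ _ (fun γ _ => X_sub_C_ne_zero _)]
      simp only [natDegree_X_sub_C, Finset.sum_const, smul_eq_mul, mul_one]
    rw [← h1, hT, h2]
  have hroot : ∀ γ ∈ T, (f.map φ).eval (ζ ^ γ.val) = 0 := by
    intro γ hγ
    rw [hT, eval_mul, eval_prod]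
    exact mul_eq_zero_of_right _ (Finset.prod_eq_zero hγ (by simp))
  constructor
  · rintro ⟨n, l, b, hn, hl, hf⟩
    have hb : b ≠ 0 := by
      intro h; apply h0; rw [hf, h]; simp
    have hφl : φ l ≠ 0 := fun h => hl (hφinj (by simpa using h))
    have hdegf : f.natDegree = n := by
      rw [hf, natDegree_C_mul hb, natDegree_X_pow_sub_C]
    have hTcard : T.card = n := hcard.trans hdegf
    obtain ⟨γ0, hγ0⟩ : T.Nonempty := Finset.card_pos.mp (by omega)
    have hrn : ∀ γ ∈ T, (ζ ^ γ.val) ^ n = φ l := by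
      intro γ hγ
      have h := hroot γ hγ
      rw [hf] at h
      simp only [Polynomial.map_mul, Polynomial.map_sub, Polynomial.map_pow, map_X,
        Polynomial.map_C, eval_mul, eval_C, eval_sub, eval_pow, eval_X] at h
      rcases mul_eq_zero.mp h with h' | h'
      · exact absurd (hφinj (by simpa using h')) hb
      · exact sub_eq_zero.mp h'
    set g := Nat.gcd m n with hg
    have hg0 : 0 < g := Nat.gcd_pos_of_pos_left _ hm
    have hgn : g ∣ n := Nat.gcd_dvd_right m n
    have hgm : g ∣ m := Nat.gcd_dvd_left m n
    set d := m / g with hd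
    have hdm : d ∣ m := Nat.div_dvd_of_dvd hgm
    have hd0 : 0 < d := Nat.div_pos (Nat.le_of_dvd hm hgm) hg0
    have hmd : m / d = g := Nat.div_div_self hgm hm.ne'
    refine ⟨γ0, d, hdm, hd0, ?_⟩
    set E := (Finset.range (m / d)).image (fun i => γ0 + ((i * d : ℕ) : ZMod m)) with hE
    have hsub : T ⊆ E := by
      intro γ hγ
      have hx : (ζ ^ (γ - γ0).val) ^ n = 1 := by
        have h1 : ζ ^ (γ - γ0).val * ζ ^ γ0.val = ζ ^ γ.val := by
          rw [← hadd, sub_add_cancel]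
        have h2 : (ζ ^ (γ - γ0).val) ^ n * φ l = φ l := by
          conv_lhs => rw [← hrn γ0 hγ0, ← mul_pow, h1]
          exact hrn γ hγ
        exact mul_right_cancel₀ hφl (by rw [h2, one_mul])
      have hdvdn : m ∣ (γ - γ0).val * n :=
        (hζ.pow_eq_one_iff_dvd _).mp (by rw [pow_mul]; exact hx)
      set v := (γ - γ0).val with hv
      have hdv : d ∣ v := by
        have hcop : Nat.Coprime (m / g) (n / g) := Nat.coprime_div_gcd_div_gcd hg0
        have h1 : m / g ∣ v * (n / g) := by
          have hm' : m = g * (m / g) := (Nat.mul_div_cancel' hgm).symm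
          have hn' : n = g * (n / g) := (Nat.mul_div_cancel' hgn).symm
          have : g * (m / g) ∣ g * (v * (n / g)) := by
            rw [← hm']
            calc m ∣ v * n := hdvdn
              _ = v * (g * (n / g)) := by conv_lhs => rw [hn']
              _ = g * (v * (n / g)) := by ring
          exact (mul_dvd_mul_iff_left hg0.ne').mp this
        exact hcop.dvd_of_dvd_mul_right h1
      obtain ⟨j, hj⟩ := hdv
      have hjg : j < g := by
        have hvm : v < m := ZMod.val_lt _
        have : d * j < d * g := by
          rw [← hj]
          calc v < m := hvm
            _ = d * g := by rw [hd, Nat.div_mul_cancel hgm]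
        exact lt_of_mul_lt_mul_left this (Nat.zero_le d)
      refine Finset.mem_image.mpr ⟨j, Finset.mem_range.mpr (by rw [hmd]; exact hjg), ?_⟩
      have : ((j * d : ℕ) : ZMod m) = γ - γ0 := by
        rw [show j * d = v by rw [hj]; ring, hv, ZMod.natCast_zmod_val]
      rw [this, add_sub_cancel]
    have hEcard : E.card ≤ g := le_trans Finset.card_image_le (by simp [hmd])
    have hng : n ≤ g := by
      calc n = T.card := hTcard.symm
        _ ≤ E.card := Finset.card_le_card hsub
        _ ≤ g := hEcard
    exact Finset.eq_of_subset_of_card_le hsub (by rw [hTcard]; exact le_trans hEcard (Nat.le_of_dvd hn hgn))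
  · rintro ⟨γ0, d, hdm, hd0, hTE⟩
    set n := m / d with hndef
    have hn : 0 < n := Nat.div_pos (Nat.le_of_dvd hm hdm) hd0
    have hnd : n * d = m := Nat.div_mul_cancel hdm
    have hinj : ∀ i ∈ Finset.range n, ∀ j ∈ Finset.range n,
        γ0 + ((i * d : ℕ) : ZMod m) = γ0 + ((j * d : ℕ) : ZMod m) → i = j := by
      intro i hi j hj h
      have h' := add_left_cancel h
      have hi' : i * d < m := by
        rw [← hnd]; exact Nat.mul_lt_mul_of_lt_of_le (Finset.mem_range.mp hi) le_rfl hd0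
      have hj' : j * d < m := by
        rw [← hnd]; exact Nat.mul_lt_mul_of_lt_of_le (Finset.mem_range.mp hj) le_rfl hd0
      exact Nat.eq_of_mul_eq_mul_right hd0
        (by rw [← ZMod.val_cast_of_lt hi', ← ZMod.val_cast_of_lt hj', h'])
    have hω : IsPrimitiveRoot (ζ ^ d) n := hζ.pow hm (by rw [← hnd, mul_comm])
    have hprod : ∏ γ ∈ T, (X - C (ζ ^ γ.val)) =
        X ^ n - C ((ζ ^ γ0.val) ^ n) := by
      rw [hTE, Finset.prod_image hinj, X_pow_sub_C_eq_prod hω hn rfl]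
      apply Finset.prod_congr rfl
      intro i _
      congr 1
      rw [hadd, ZMod.val_natCast, hmod, pow_mul', mul_comm]
    set c := (ζ ^ γ0.val) ^ n with hc
    have hfK : f.map φ = C (φ a) * (X ^ n - C c) := by rw [hT, hprod]
    set l := -(f.coeff 0 / a) with hl
    have hlne : l ≠ 0 := by
      simp only [hl, neg_ne_zero, div_ne_zero_iff]
      exact ⟨h0, ha⟩
    have hφl : φ l = c := by
      have h1 : φ (f.coeff 0) = (f.map φ).coeff 0 := (Polynomial.coeff_map φ 0).symm
      rw [hfK] at h1
      have h2 : (C (φ a) * (X ^ n - C c)).coeff 0 = φ a * (0 - c) := by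
        simp [coeff_X_pow, hn.ne]
      rw [h2] at h1
      rw [hl]
      rw [map_neg, map_div₀]
      field_simp
      rw [h1]; ring
    refine ⟨n, l, a, hn, hlne, ?_⟩
    apply map_injective φ hφinj
    rw [hfK]
    simp only [Polynomial.map_mul, Polynomial.map_sub, Polynomial.map_pow, map_X,
      Polynomial.map_C, hφl]
end

section
/- Let f(X) be an irreducible polynomial over F_q of order m, coprime to X, defined by the q-cyclotomic coset c_{m/q}(γ) modulo m with gcd(γ, m) = 1. Set d_f = gcd(m, q−1). Then the minimal binomial multiple of f(X) is X^{m/d_f} − ζ_m^{γm/d_f}, and in particular the minimal binomial order of f is m/d_f. -/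
open Polynomial

noncomputable section

/-- A binomial: `X^n - λ` with `n ≥ 1` and `λ ≠ 0`. -/
def IsBinomial {F : Type*} [Field F] (g : F[X]) : Prop :=
  ∃ (n : ℕ) (l : F), 0 < n ∧ l ≠ 0 ∧ g = X ^ n - C l

/-- The order of `f`: the least `m ≥ 1` with `f ∣ X^m − 1`. -/
def polyOrder {F : Type*} [Field F] (f : F[X]) : ℕ :=
  sInf {m | 0 < m ∧ f ∣ X ^ m - 1}

/-- The minimal binomial order of `f`: the least degree of a binomial divisible by `f`. -/
def minBinOrder {F : Type*} [Field F] (f : F[X]) : ℕ :=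
  sInf {n | 0 < n ∧ ∃ l : F, l ≠ 0 ∧ f ∣ X ^ n - C l}

/-- `f` is free of binomials: it divides no binomial of degree less than its order. -/
def FreeOfBinomials {F : Type*} [Field F] (f : F[X]) : Prop :=
  ∀ (k : ℕ) (l : F), 0 < k → k < polyOrder f → l ≠ 0 → ¬ f ∣ X ^ k - C l

/-- `g` is the minimal binomial multiple of `f`: a binomial of least degree divisible by `f`. -/
def IsMinBinMultiple {F : Type*} [Field F] (f g : F[X]) : Prop :=
  IsBinomial g ∧ f ∣ g ∧
    ∀ h : F[X], IsBinomial h → f ∣ h → g.natDegree ≤ h.natDegree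

end
/-- Any element of an `F`-algebra field satisfying `x^(q-1) = 1` lies in the image of `F`. -/
lemma aux_mem_range {F K : Type*} [Field F] [Fintype F] [Field K] [Algebra F K] {x : K}
    (hx : x ^ (Fintype.card F - 1) = 1) : ∃ c : F, algebraMap F K c = x := by
  classical
  obtain ⟨g, hg⟩ := IsCyclic.exists_generator (α := Fˣ)
  have hord : orderOf ((g : F)) = Fintype.card F - 1 := by
    rw [orderOf_units, orderOf_eq_card_of_forall_mem_zpowers hg, Nat.card_eq_fintype_card,
      Fintype.card_units]
  have hprim : IsPrimitiveRoot ((g : F)) (Fintype.card F - 1) :=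
    hord ▸ IsPrimitiveRoot.orderOf (g : F)
  have hprimK : IsPrimitiveRoot (algebraMap F K (g : F)) (Fintype.card F - 1) :=
    hprim.map_of_injective (algebraMap F K).injective
  have hqpos : 0 < Fintype.card F - 1 := by
    have := Fintype.one_lt_card (α := F); omega
  haveI : NeZero (Fintype.card F - 1) := ⟨hqpos.ne'⟩
  obtain ⟨i, _, hi⟩ := hprimK.eq_pow_of_pow_eq_one hx
  exact ⟨(g : F) ^ i, by rw [map_pow, hi]⟩

/-- For `f` irreducible over `F_q` of order `m`, defined by the cyclotomic coset of `γ`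
(with `gcd(γ,m)=1`, i.e. `ζ^γ` is a root of `f`), and `d_f = gcd(m, q−1)`, the minimal
binomial multiple of `f` is `X^{m/d_f} − ζ^{γ·m/d_f}`, of degree `m/d_f`. -/
theorem stmt_8 {F : Type*} [Field F] [Fintype F] (q : ℕ) (hq : Fintype.card F = q)
    (f : F[X]) (hirr : Irreducible f) (hmonic : f.Monic) (h0 : f.coeff 0 ≠ 0)
    (m : ℕ) (hm : 0 < m) (hord : polyOrder f = m)
    (ζ : AlgebraicClosure F) (hζ : IsPrimitiveRoot ζ m)
    (γ : ℕ) (hγ : Nat.Coprime γ m)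
    (hroot : (f.map (algebraMap F (AlgebraicClosure F))).IsRoot (ζ ^ γ)) :
    minBinOrder f = m / Nat.gcd m (q - 1) ∧
    ∃ c : F, algebraMap F (AlgebraicClosure F) c = ζ ^ (γ * (m / Nat.gcd m (q - 1))) ∧
      IsMinBinMultiple f (X ^ (m / Nat.gcd m (q - 1)) - C c) := by
  set α : AlgebraicClosure F := ζ ^ γ with hαdef
  have hα : IsPrimitiveRoot α m := hζ.pow_of_coprime γ hγ
  have haf : (aeval α) f = 0 := by
    rwa [aeval_def, ← eval_map]
  set d : ℕ := Nat.gcd m (q - 1) with hddef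
  have hd : 0 < d := Nat.gcd_pos_of_pos_left _ hm
  set n0 : ℕ := m / d with hn0def
  have hdm : d ∣ m := Nat.gcd_dvd_left _ _
  have hn0d : n0 * d = m := Nat.div_mul_cancel hdm
  have hn0 : 0 < n0 := Nat.div_pos (Nat.le_of_dvd hm hdm) hd
  have hfmin : f = minpoly F α := minpoly.eq_of_irreducible_of_monic hirr haf hmonic
  -- forward: divisibility of a binomial forces n0 ∣ n
  have fwd : ∀ (n : ℕ) (l : F), l ≠ 0 → f ∣ X ^ n - C l → n0 ∣ n := by
    intro n l hl hdvd
    obtain ⟨t, ht⟩ := hdvd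
    have hev : (aeval α) (X ^ n - C l) = 0 := by
      rw [ht, map_mul, haf, zero_mul]
    simp only [map_sub, aeval_X_pow, aeval_C] at hev
    have hαn : α ^ n = algebraMap F (AlgebraicClosure F) l := sub_eq_zero.mp hev
    have h1 : α ^ (n * (q - 1)) = 1 := by
      rw [pow_mul, hαn, ← map_pow, ← hq, FiniteField.pow_card_sub_one_eq_one l hl, map_one]
    have hmd : m ∣ n * (q - 1) := (hα.pow_eq_one_iff_dvd _).mp h1
    have hco : Nat.Coprime n0 ((q - 1) / d) := Nat.coprime_div_gcd_div_gcd hd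
    have h2 : n0 * d ∣ (n * ((q - 1) / d)) * d := by
      rw [hn0d, mul_assoc, Nat.div_mul_cancel (Nat.gcd_dvd_right m (q - 1))]
      exact hmd
    have h3 : n0 ∣ n * ((q - 1) / d) := (Nat.mul_dvd_mul_iff_right hd).mp h2
    exact hco.dvd_of_dvd_mul_right h3
  -- the constant c with algebraMap c = α ^ n0
  obtain ⟨c, hcval⟩ : ∃ c : F, algebraMap F (AlgebraicClosure F) c = α ^ n0 := by
    apply aux_mem_range
    rw [hq, ← pow_mul]
    apply (hα.pow_eq_one_iff_dvd _).mpr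
    obtain ⟨k, hk⟩ := Nat.gcd_dvd_right m (q - 1)
    rw [← hddef] at hk
    exact ⟨k, by rw [hk, ← mul_assoc, hn0d]⟩
  have hc0 : c ≠ 0 := by
    intro h
    have hz : α ^ n0 = 0 := by rw [← hcval, h, map_zero]
    exact (pow_ne_zero n0 (hα.ne_zero hm.ne')) hz
  -- backward: f divides the binomial of any multiple of n0
  have bwd : ∀ n : ℕ, n0 ∣ n → f ∣ X ^ n - C (c ^ (n / n0)) := by
    intro n hn
    rw [hfmin]
    apply minpoly.dvd
    simp only [map_sub, map_pow, aeval_X, aeval_C, hcval, ← pow_mul,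
      Nat.mul_div_cancel' hn, sub_self]
  have hdvd0 : f ∣ X ^ n0 - C c := by
    have h := bwd n0 dvd_rfl
    rwa [Nat.div_self hn0, pow_one] at h
  have hmem : n0 ∈ {n | 0 < n ∧ ∃ l : F, l ≠ 0 ∧ f ∣ X ^ n - C l} :=
    ⟨hn0, c, hc0, hdvd0⟩
  have hsInf : minBinOrder f = n0 := by
    unfold minBinOrder
    apply le_antisymm (Nat.sInf_le hmem)
    have hne : {n | 0 < n ∧ ∃ l : F, l ≠ 0 ∧ f ∣ X ^ n - C l}.Nonempty := ⟨n0, hmem⟩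
    obtain ⟨hpos, l, hl, hdvd⟩ := Nat.sInf_mem hne
    exact Nat.le_of_dvd hpos (fwd _ l hl hdvd)
  refine ⟨hsInf, c, ?_, ⟨n0, c, hn0, hc0, rfl⟩, hdvd0, ?_⟩
  · rw [hcval, hαdef, ← pow_mul]
  · rintro h ⟨k, l, hk, hl, rfl⟩ hdvd
    rw [natDegree_X_pow_sub_C, natDegree_X_pow_sub_C]
    exact Nat.le_of_dvd hk (fwd k l hl hdvd)
end

section
/- Let f₁, f₂ be squarefree polynomials over F_q coprime to X. If both f₁ and f₂ are free of binomials, then so is lcm(f₁, f₂). -/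
open Polynomial

/-- Existence of an order: a nonzero polynomial with nonzero constant term
divides `X^m - 1` for some `m > 0`. -/
lemma exists_order {F : Type*} [Field F] [Fintype F] (f : F[X])
    (hf : f ≠ 0) (h0 : f.coeff 0 ≠ 0) : ∃ m : ℕ, 0 < m ∧ f ∣ X ^ m - 1 := by
  have hcop : IsCoprime f (X : F[X]) :=
    ((Polynomial.irreducible_X.coprime_iff_not_dvd).mpr
      (by rwa [Polynomial.X_dvd_iff])).symm
  obtain ⟨u, v, huv⟩ := hcop
  -- AdjoinRoot f is a finite ring
  have : Module.Finite F (AdjoinRoot f) := (AdjoinRoot.powerBasis hf).finite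
  have : Finite (AdjoinRoot f) := Module.finite_of_finite F
  have hroot : AdjoinRoot.mk f v * AdjoinRoot.root f = 1 := by
    have := congrArg (AdjoinRoot.mk f) huv
    simpa [map_add, map_mul, AdjoinRoot.mk_self] using this
  have hu : IsUnit (AdjoinRoot.root f) := IsUnit.of_mul_eq_one (a := AdjoinRoot.root f) (AdjoinRoot.mk f v) (by rw [mul_comm]; exact hroot)
  obtain ⟨w, hw⟩ := hu
  have hfin : IsOfFinOrder w := isOfFinOrder_of_finite w
  refine ⟨orderOf w, hfin.orderOf_pos, ?_⟩
  rw [← AdjoinRoot.mk_eq_zero]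
  have : (AdjoinRoot.root f) ^ (orderOf w) = 1 := by
    rw [← hw, ← Units.val_pow_eq_pow_val, pow_orderOf_eq_one, Units.val_one]
  simp [map_sub, map_pow, AdjoinRoot.mk_X, this]

/-- If `f` is free of binomials and divides `X^k - C l` (`k > 0`, `l ≠ 0`),
then it divides `X^k - 1`. -/
lemma key {F : Type*} [Field F] [Fintype F] (f : F[X]) (hf : f ≠ 0)
    (h0 : f.coeff 0 ≠ 0) (hb : FreeOfBinomials f) (k : ℕ) (l : F)
    (hk : 0 < k) (hl : l ≠ 0) (hdvd : f ∣ X ^ k - C l) : f ∣ X ^ k - 1 := by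
  have hne : {m | 0 < m ∧ f ∣ X ^ m - 1}.Nonempty := exists_order f hf h0
  have hmem : 0 < polyOrder f ∧ f ∣ X ^ (polyOrder f) - 1 := Nat.sInf_mem hne
  set m := polyOrder f with hm
  set r := k % m with hr
  -- f ∣ X^k - X^r
  have h1 : f ∣ X ^ k - X ^ r := by
    have : (X : F[X]) ^ m - 1 ∣ (X ^ m) ^ (k / m) - 1 := by
      simpa using sub_dvd_pow_sub_pow ((X : F[X]) ^ m) 1 (k / m)
    have h2 : f ∣ (X ^ m) ^ (k / m) - 1 := hmem.2.trans this
    have h3 : (X : F[X]) ^ k - X ^ r = X ^ r * ((X ^ m) ^ (k / m) - 1) := by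
      rw [mul_sub, mul_one, ← pow_mul, ← pow_add]
      rw [Nat.add_comm, Nat.div_add_mod]
    rw [h3]
    exact Dvd.dvd.mul_left h2 _
  have h4 : f ∣ X ^ r - C l := by
    have : (X : F[X]) ^ r - C l = (X ^ k - C l) - (X ^ k - X ^ r) := by ring
    rw [this]; exact dvd_sub hdvd h1
  rcases Nat.eq_zero_or_pos r with hr0 | hrpos
  · -- r = 0 : f ∣ C (1 - l)
    have h5 : f ∣ C (1 - l) := by
      have : C (1 - l) = (X : F[X]) ^ r - C l := by
        rw [hr0, pow_zero, map_sub, map_one]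
      rwa [this]
    by_cases hl1 : l = 1
    · subst hl1; simpa using hdvd
    · have : IsUnit f := isUnit_of_dvd_unit h5 (isUnit_C.mpr (isUnit_iff_ne_zero.mpr (sub_ne_zero.mpr (Ne.symm hl1))))
      exact this.dvd
  · exact absurd h4 (hb r l hrpos (Nat.mod_lt _ hmem.1) hl)

/-- If squarefree `f₁, f₂` over `F_q`, coprime to `X`, are both free of binomials,
then so is their least common multiple `f` (characterized by its universal property). -/
theorem stmt_10 {F : Type*} [Field F] [Fintype F] (f₁ f₂ : F[X])
    (hs₁ : Squarefree f₁) (hs₂ : Squarefree f₂)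
    (h01 : f₁.coeff 0 ≠ 0) (h02 : f₂.coeff 0 ≠ 0)
    (hb1 : FreeOfBinomials f₁) (hb2 : FreeOfBinomials f₂)
    (f : F[X]) (hd1 : f₁ ∣ f) (hd2 : f₂ ∣ f)
    (hlcm : ∀ g : F[X], f₁ ∣ g → f₂ ∣ g → f ∣ g) :
    FreeOfBinomials f := by
  intro k l hk hkm hl hdvd
  have hf1 : f₁ ∣ X ^ k - 1 :=
    key f₁ hs₁.ne_zero h01 hb1 k l hk hl (hd1.trans hdvd)
  have hf2 : f₂ ∣ X ^ k - 1 :=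
    key f₂ hs₂.ne_zero h02 hb2 k l hk hl (hd2.trans hdvd)
  have hfk : f ∣ X ^ k - 1 := hlcm _ hf1 hf2
  have : polyOrder f ≤ k := Nat.sInf_le ⟨hk, hfk⟩
  omega
end

section
/- Let f(X) be a squarefree polynomial over F_q of order m with primitive defining set T_f ⊆ Z/mZ. Let d be the maximal divisor of m for which there exists an equal-difference subset E ⊆ Z/mZ with common difference d, defined over F_q, containing T_f. Then the binomial f_E(X) = ∏_{γ∈E}(X − ζ_m^γ) is the minimal binomial multiple of f(X), and ord^b(f) = m/d. -/
open Polynomial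

/-- An equal-difference subset of `ℤ/mℤ` with common difference `d`, defined over `F_q`:
`{γ, γ+d, ..., γ+(m/d−1)d}` with `γq ≡ γ (mod d)`. -/
def IsEqDiffOver (q m d : ℕ) (E : Finset (ZMod m)) : Prop :=
  d ∣ m ∧ 0 < d ∧ ∃ γ : ℕ,
    E = (Finset.range (m / d)).image (fun i => ((γ + i * d : ℕ) : ZMod m)) ∧
    γ * q ≡ γ [MOD d]

/-- Every element of a field extension of a finite field `F` of cardinality `q`
fixed by the `q`-power map lies in the image of `F`. -/
theorem aux_fixed_pt {F K : Type*} [Field F] [Fintype F] [Field K] [Algebra F K]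
    (x : K) (hx : x ^ Fintype.card F = x) : ∃ a : F, algebraMap F K a = x := by
  classical
  by_contra hcon
  push_neg at hcon
  set q := Fintype.card F with hq
  have hq2 : 2 ≤ q := Fintype.one_lt_card
  set p : K[X] := X ^ q - X with hp
  have hpm : p.Monic := by
    refine monic_X_pow_sub (lt_of_le_of_lt degree_X_le ?_)
    exact_mod_cast (show 1 < q by omega)
  have hpne : p ≠ 0 := hpm.ne_zero
  have hroot : ∀ y : K, y ^ q = y → y ∈ p.roots := by
    intro y hy
    rw [mem_roots hpne]
    simp [hp, IsRoot.def, hy]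
  set S : Finset K := Finset.univ.image (algebraMap F K) with hS
  have hScard : S.card = q := by
    rw [hS, Finset.card_image_of_injective _ (algebraMap F K).injective, Finset.card_univ, hq]
  have hxS : x ∉ S := by
    simp only [hS, Finset.mem_image, Finset.mem_univ, true_and]
    rintro ⟨a, rfl⟩
    exact hcon a rfl
  have hsub : insert x S ⊆ p.roots.toFinset := by
    intro y hy
    rw [Multiset.mem_toFinset]
    rcases Finset.mem_insert.mp hy with rfl | hyS
    · exact hroot y hx
    · obtain ⟨a, -, rfl⟩ := Finset.mem_image.mp hyS
      exact hroot _ (by rw [← map_pow, FiniteField.pow_card])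
  have h1 : (insert x S).card = q + 1 := by rw [Finset.card_insert_of_notMem hxS, hScard]
  have h2 : (insert x S).card ≤ p.roots.toFinset.card := Finset.card_le_card hsub
  have h3 : p.roots.toFinset.card ≤ Multiset.card p.roots := Multiset.toFinset_card_le _
  have h4 : Multiset.card p.roots ≤ p.natDegree := p.card_roots'
  have h5 : p.natDegree ≤ q := by
    calc p.natDegree ≤ max (X ^ q : K[X]).natDegree (X : K[X]).natDegree := natDegree_sub_le _ _
    _ ≤ q := by simp [natDegree_X_pow, natDegree_X]; omega
  omega

/-- For a squarefree `f` over `F_q` of order `m` with primitive defining set `T`, if `d`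
is the maximal divisor of `m` admitting an equal-difference set over `F_q` of common
difference `d` containing `T`, then for any such set `E`, the binomial
`f_E = ∏_{γ∈E}(X − ζ_m^γ)` is the minimal binomial multiple of `f`, and
`ord^b(f) = m/d`. -/
theorem stmt_11 {F : Type*} [Field F] [Fintype F] (q : ℕ) (hq : Fintype.card F = q)
    (f : F[X]) (hdeg : 0 < f.natDegree) (hsq : Squarefree f) (h0 : f.coeff 0 ≠ 0)
    (m : ℕ) (hm : 0 < m) (hord : polyOrder f = m)
    (ζ : AlgebraicClosure F) (hζ : IsPrimitiveRoot ζ m)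
    (T : Finset (ZMod m)) (a : F) (ha : a ≠ 0)
    (hT : f.map (algebraMap F (AlgebraicClosure F)) =
      C ((algebraMap F (AlgebraicClosure F)) a) * ∏ x ∈ T, (X - C (ζ ^ x.val)))
    (d : ℕ) (hd : ∃ E : Finset (ZMod m), IsEqDiffOver q m d E ∧ T ⊆ E)
    (hdmax : ∀ d' : ℕ, (∃ E' : Finset (ZMod m), IsEqDiffOver q m d' E' ∧ T ⊆ E') → d' ≤ d) :
    minBinOrder f = m / d ∧
    ∀ E : Finset (ZMod m), IsEqDiffOver q m d E → T ⊆ E →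
      ∃ g : F[X], g.map (algebraMap F (AlgebraicClosure F)) = ∏ x ∈ E, (X - C (ζ ^ x.val)) ∧
        IsMinBinMultiple f g := by
  classical
  haveI : NeZero m := ⟨hm.ne'⟩
  set φ := algebraMap F (AlgebraicClosure F) with hφ
  have hq2 : 2 ≤ q := hq ▸ Fintype.one_lt_card
  obtain ⟨E₀, hE₀, hTE₀⟩ := hd
  have hdm : d ∣ m := hE₀.1
  have hdpos : 0 < d := hE₀.2.1
  have hk : 0 < m / d := Nat.div_pos (Nat.le_of_dvd hm hdm) hdpos
  have hkd : d * (m / d) = m := Nat.mul_div_cancel' hdm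
  have hpowmod : ∀ i : ℕ, ζ ^ i = ζ ^ (i % m) := by
    intro i
    conv_lhs => rw [← Nat.mod_add_div i m]
    rw [pow_add, pow_mul, hζ.pow_eq_one, one_pow, mul_one]
  have powEq : ∀ i j : ℕ, (ζ ^ i = ζ ^ j ↔ i ≡ j [MOD m]) := by
    intro i j
    constructor
    · intro h
      exact hζ.pow_inj (Nat.mod_lt i hm) (Nat.mod_lt j hm)
        (by rw [← hpowmod, ← hpowmod, h])
    · intro h
      rw [hpowmod i, hpowmod j, h]
  have hζne : ζ ≠ 0 := hζ.ne_zero hm.ne'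
  have hvalpow : ∀ n : ℕ, ζ ^ ((n : ZMod m)).val = ζ ^ n := by
    intro n
    rw [powEq, ZMod.val_natCast]
    exact Nat.mod_modEq n m
  have hfroot : ∀ x ∈ T, (f.map φ).eval (ζ ^ x.val) = 0 := by
    intro x hx
    rw [hT, eval_mul, eval_prod]
    rw [Finset.prod_eq_zero hx (by simp)]
    ring
  -- Lower bound: any binomial multiple has degree ≥ m / d.
  have keyB : ∀ (n : ℕ) (l : F), 0 < n → l ≠ 0 → f ∣ X ^ n - C l → m / d ≤ n := by
    intro n l hn hl hdvd
    have hTne : T.Nonempty := by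
      rcases T.eq_empty_or_nonempty with h | h
      · exfalso
        have he : f.map φ = C (φ a) := by rw [hT, h]; simp
        have := congrArg natDegree he
        rw [natDegree_map, natDegree_C] at this
        omega
      · exact h
    obtain ⟨γ₀, hγ₀T⟩ := hTne
    have hmapdvd : f.map φ ∣ X ^ n - C (φ l) := by
      have h1 := Polynomial.map_dvd φ hdvd
      simpa using h1
    have hrootl : ∀ x ∈ T, (ζ ^ x.val) ^ n = φ l := by
      intro x hx
      obtain ⟨c, hc⟩ := hmapdvd
      have h2 : (X ^ n - C (φ l) : (AlgebraicClosure F)[X]).eval (ζ ^ x.val) = 0 := by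
        rw [hc, eval_mul, hfroot x hx, zero_mul]
      simpa [sub_eq_zero] using h2
    have hg' : 0 < Nat.gcd m n := Nat.gcd_pos_of_pos_left _ hm
    have hgd : Nat.gcd m n ∣ m := Nat.gcd_dvd_left m n
    have hd'm : m / Nat.gcd m n ∣ m := Nat.div_dvd_of_dvd hgd
    have hd'pos : 0 < m / Nat.gcd m n := Nat.div_pos (Nat.le_of_dvd hm hgd) hg'
    have hmd' : m / (m / Nat.gcd m n) = Nat.gcd m n := Nat.div_div_self hgd hm.ne'
    have hcm : γ₀.val < m := ZMod.val_lt γ₀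
    -- γ₀ is "fixed" mod d'
    have hcq : γ₀.val * q ≡ γ₀.val [MOD m / Nat.gcd m n] := by
      have h1 : (ζ ^ γ₀.val) ^ n = φ l := hrootl γ₀ hγ₀T
      have h2 : ζ ^ (γ₀.val * n * q) = ζ ^ (γ₀.val * n) := by
        rw [pow_mul, pow_mul, h1, ← map_pow]
        congr 1
        rw [← hq, FiniteField.pow_card]
      have h3 : γ₀.val * n * q ≡ γ₀.val * n [MOD m] := (powEq _ _).mp h2
      have h4 : m ∣ γ₀.val * n * q - γ₀.val * n :=
        (Nat.modEq_iff_dvd' (Nat.le_mul_of_pos_right _ (by omega))).mp h3.symm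
      have h5 : γ₀.val * n * q - γ₀.val * n = γ₀.val * n * (q - 1) := by
        rw [Nat.mul_sub, mul_one]
      rw [h5] at h4
      obtain ⟨n', hn'⟩ := Nat.gcd_dvd_right m n
      have hn'' : n / Nat.gcd m n = n' := Nat.div_eq_of_eq_mul_left hg' (hn'.trans (Nat.mul_comm _ _))
      have h6 : Nat.gcd m n * (m / Nat.gcd m n) ∣
          Nat.gcd m n * (γ₀.val * n' * (q - 1)) := by
        have e1 : Nat.gcd m n * (γ₀.val * n' * (q - 1))
            = γ₀.val * (Nat.gcd m n * n') * (q - 1) := by ring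
        rw [← hn'] at e1
        rw [Nat.mul_div_cancel' hgd, e1]
        exact h4
      have h7 : m / Nat.gcd m n ∣ γ₀.val * n' * (q - 1) :=
        (mul_dvd_mul_iff_left (show (Nat.gcd m n : ℕ) ≠ 0 by omega)).mp h6
      have hcop : Nat.Coprime (m / Nat.gcd m n) (n / Nat.gcd m n) :=
        Nat.coprime_div_gcd_div_gcd hg'
      rw [hn''] at hcop
      have h8 : m / Nat.gcd m n ∣ γ₀.val * (q - 1) := by
        refine hcop.dvd_of_dvd_mul_right ?_
        have : γ₀.val * n' * (q - 1) = γ₀.val * (q - 1) * n' := by ring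
        rw [← this]
        exact h7
      have h9 : γ₀.val ≡ γ₀.val * q [MOD m / Nat.gcd m n] := by
        refine (Nat.modEq_iff_dvd' (Nat.le_mul_of_pos_right _ (by omega))).mpr ?_
        rw [show γ₀.val * q - γ₀.val = γ₀.val * (q - 1) by rw [Nat.mul_sub, mul_one]]
        exact h8
      exact h9.symm
    -- T is contained in the arithmetic progression through γ₀ with difference d'
    have hTsub : ∀ x ∈ T, x.val ≡ γ₀.val [MOD m / Nat.gcd m n] := by
      intro x hx
      have h1 : ζ ^ (x.val * n) = ζ ^ (γ₀.val * n) := by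
        rw [pow_mul, pow_mul, hrootl x hx, hrootl γ₀ hγ₀T]
      have h2 : n * x.val ≡ n * γ₀.val [MOD m] := by
        have h3 := (powEq _ _).mp h1
        rwa [mul_comm x.val n, mul_comm γ₀.val n] at h3
      exact Nat.ModEq.cancel_left_div_gcd hm h2
    have hE'mem : ∀ x ∈ T, x ∈ (Finset.range (m / (m / Nat.gcd m n))).image
        (fun i => ((γ₀.val + i * (m / Nat.gcd m n) : ℕ) : ZMod m)) := by
      intro x hx
      have hmod := hTsub x hx
      have hxm : x.val < m := ZMod.val_lt x
      have hdvd_t : m / Nat.gcd m n ∣ x.val + m - γ₀.val := by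
        have ha1 : x.val ≡ x.val + m [MOD m / Nat.gcd m n] := by
          refine (Nat.modEq_iff_dvd' (by omega)).mpr ?_
          simpa using hd'm
        have ha2 : γ₀.val ≡ x.val + m [MOD m / Nat.gcd m n] := hmod.symm.trans ha1
        exact (Nat.modEq_iff_dvd' (by omega)).mp ha2
      have hjd : ((x.val + m - γ₀.val) / (m / Nat.gcd m n)) * (m / Nat.gcd m n)
          = x.val + m - γ₀.val := Nat.div_mul_cancel hdvd_t
      set j := (x.val + m - γ₀.val) / (m / Nat.gcd m n) with hjdef
      refine Finset.mem_image.mpr ⟨j % (m / (m / Nat.gcd m n)),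
        Finset.mem_range.mpr (Nat.mod_lt _ (by rw [hmd']; exact hg')), ?_⟩
      have hcast : ((x.val : ℕ) : ZMod m) = x := ZMod.natCast_rightInverse x
      rw [← hcast, ZMod.natCast_eq_natCast_iff]
      have hm1 : j % (m / (m / Nat.gcd m n)) ≡ j [MOD m / (m / Nat.gcd m n)] :=
        Nat.mod_modEq j _
      have hm2 : (j % (m / (m / Nat.gcd m n))) * (m / Nat.gcd m n) ≡
          j * (m / Nat.gcd m n) [MOD (m / (m / Nat.gcd m n)) * (m / Nat.gcd m n)] :=
        hm1.mul_right' _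
      rw [Nat.div_mul_cancel hd'm] at hm2
      have hm3 : γ₀.val + (j % (m / (m / Nat.gcd m n))) * (m / Nat.gcd m n) ≡
          γ₀.val + j * (m / Nat.gcd m n) [MOD m] := hm2.add_left _
      have hm4 : γ₀.val + j * (m / Nat.gcd m n) = x.val + m := by
        rw [hjd]; omega
      rw [hm4] at hm3
      exact hm3.trans (by simpa using (Nat.add_modEq_right (n := m) (a := x.val)))
    have hd'le : d ≥ m / Nat.gcd m n := by
      refine hdmax _ ⟨_, ⟨hd'm, hd'pos, γ₀.val, rfl, hcq⟩, fun x hx => hE'mem x hx⟩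
    have hb1 : m / d ≤ m / (m / Nat.gcd m n) := Nat.div_le_div_left hd'le hd'pos
    rw [hmd'] at hb1
    have hb2 : Nat.gcd m n ≤ n := Nat.le_of_dvd hn (Nat.gcd_dvd_right m n)
    omega
  -- Construction of the binomial for any valid E.
  have keyA : ∀ E : Finset (ZMod m), IsEqDiffOver q m d E → T ⊆ E →
      ∃ g : F[X], g.map φ = ∏ x ∈ E, (X - C (ζ ^ x.val)) ∧
        ∃ a₀ : F, a₀ ≠ 0 ∧ g = X ^ (m / d) - C a₀ ∧ f ∣ g := by
    intro E hE hTE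
    obtain ⟨-, -, γ, hEeq, hγq⟩ := hE
    have hμ : IsPrimitiveRoot (ζ ^ d) (m / d) := hζ.pow hm hkd.symm
    have hfix : (ζ ^ (γ * (m / d))) ^ q = ζ ^ (γ * (m / d)) := by
      rw [← pow_mul]
      rw [powEq]
      have h1 : γ * q * (m / d) ≡ γ * (m / d) [MOD d * (m / d)] := hγq.mul_right' _
      rw [hkd] at h1
      have h2 : γ * (m / d) * q = γ * q * (m / d) := by ring
      rw [h2]
      exact h1
    obtain ⟨a₀, ha₀⟩ := aux_fixed_pt (K := AlgebraicClosure F) (ζ ^ (γ * (m / d)))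
      (by rw [hq]; exact hfix)
    have ha₀ne : a₀ ≠ 0 := by
      intro h
      rw [h, map_zero] at ha₀
      exact pow_ne_zero _ hζne ha₀.symm
    have hgmap : (X ^ (m / d) - C a₀ : F[X]).map φ = ∏ x ∈ E, (X - C (ζ ^ x.val)) := by
      have hmap1 : (X ^ (m / d) - C a₀ : F[X]).map φ = X ^ (m / d) - C (ζ ^ (γ * (m / d))) := by
        rw [Polynomial.map_sub, Polynomial.map_pow, map_X, map_C, ha₀]
      rw [hmap1, X_pow_sub_C_eq_prod hμ hk (show (ζ ^ γ) ^ (m / d) = ζ ^ (γ * (m / d)) from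
        (pow_mul ζ γ (m / d)).symm), hEeq]
      rw [Finset.prod_image]
      · refine Finset.prod_congr rfl fun i hi => ?_
        congr 2
        rw [hvalpow, ← pow_mul, ← pow_add]
        congr 1
        ring
      · intro i hi j hj hij
        have h1 : γ + i * d ≡ γ + j * d [MOD m] := (ZMod.natCast_eq_natCast_iff _ _ _).mp hij
        have h2 : i * d ≡ j * d [MOD m] := h1.add_left_cancel' γ
        have h3 : d * i ≡ d * j [MOD m] := by rwa [mul_comm i d, mul_comm j d] at h2
        have h4 : i ≡ j [MOD m / Nat.gcd m d] := Nat.ModEq.cancel_left_div_gcd hm h3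
        have hgcd : Nat.gcd m d = d := Nat.gcd_eq_right hdm
        rw [hgcd] at h4
        have hi' := Finset.mem_range.mp hi
        have hj' := Finset.mem_range.mp hj
        unfold Nat.ModEq at h4
        rwa [Nat.mod_eq_of_lt hi', Nat.mod_eq_of_lt hj'] at h4
    refine ⟨X ^ (m / d) - C a₀, hgmap, a₀, ha₀ne, rfl, ?_⟩
    rw [← map_dvd_map' φ, hgmap, hT]
    rw [IsUnit.mul_left_dvd (isUnit_C.mpr (isUnit_iff_ne_zero.mpr
      (fun h => ha ((_root_.map_eq_zero φ).mp h))))]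
    exact Finset.prod_dvd_prod_of_subset T E _ hTE
  obtain ⟨g₀, hg₀map, a₀, ha₀ne, hg₀eq, hfg₀⟩ := keyA E₀ hE₀ hTE₀
  constructor
  · apply le_antisymm
    · exact Nat.sInf_le ⟨hk, a₀, ha₀ne, hg₀eq ▸ hfg₀⟩
    · refine le_csInf ⟨m / d, hk, a₀, ha₀ne, hg₀eq ▸ hfg₀⟩ ?_
      rintro n ⟨hn, l, hl, hdvd⟩
      exact keyB n l hn hl hdvd
  · intro E hE hTE
    obtain ⟨g, hgmap, a₀', ha₀'ne, hgeq, hfg⟩ := keyA E hE hTE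
    refine ⟨g, hgmap, ⟨m / d, a₀', hk, ha₀'ne, hgeq⟩, hfg, ?_⟩
    rintro h ⟨n, l, hn, hl, rfl⟩ hfh
    rw [hgeq, natDegree_X_pow_sub_C, natDegree_X_pow_sub_C]
    exact keyB n l hn hl hfh
end

section
/- Let f(X) be a squarefree polynomial over F_q coprime to X, with order m, minimal binomial order n = ord^b(f), and minimal binomial multiple f_E(X). If a binomial X^k − β over F_q (β ≠ 0) is divisible by f(X), then n divides k and f_E(X) divides X^k − β. In particular, f_E(X) divides X^m − 1. -/
open Polynomial

/-- If a binomial `X^k − β` is divisible by the squarefree `f` (of order `m`, minimal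
binomial order `n`, minimal binomial multiple `g`), then `n ∣ k` and `g ∣ X^k − β`;
in particular `g ∣ X^m − 1`. -/
theorem stmt_12 {F : Type*} [Field F] [Fintype F]
    (f : F[X]) (hsq : Squarefree f) (hdeg : 0 < f.natDegree) (h0 : f.coeff 0 ≠ 0)
    (m : ℕ) (hm : 0 < m) (hord : polyOrder f = m)
    (n : ℕ) (hn : minBinOrder f = n)
    (g : F[X]) (hg : IsMinBinMultiple f g) :
    (∀ (k : ℕ) (β : F), 0 < k → β ≠ 0 → f ∣ X ^ k - C β →
      n ∣ k ∧ g ∣ X ^ k - C β) ∧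
    g ∣ X ^ m - 1 := by
  obtain ⟨⟨n', lam, hn'pos, hlam, hgeq⟩, hfg, hmin⟩ := hg
  -- f divides X^m - 1
  have hfm : f ∣ X ^ m - 1 := by
    have hne : {m' | 0 < m' ∧ f ∣ X ^ m' - 1}.Nonempty := by
      by_contra h
      rw [Set.not_nonempty_iff_eq_empty] at h
      rw [polyOrder, h, Nat.sInf_empty] at hord
      omega
    have hmem := Nat.sInf_mem hne
    rw [polyOrder] at hord
    rw [hord] at hmem
    exact hmem.2
  -- the binomial set is nonempty, so n belongs to it
  have hBne : {n | 0 < n ∧ ∃ l : F, l ≠ 0 ∧ f ∣ X ^ n - C l}.Nonempty :=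
    ⟨m, hm, 1, one_ne_zero, by simpa using hfm⟩
  have hn_mem := Nat.sInf_mem hBne
  rw [minBinOrder] at hn
  rw [hn] at hn_mem
  obtain ⟨hnpos, μ, hμ, hfμ⟩ := hn_mem
  -- n' = n
  have hdegg : g.natDegree = n' := by
    rw [hgeq, natDegree_X_pow_sub_C]
  have hn'n : n' ≤ n := by
    have := hmin (X ^ n - C μ) ⟨n, μ, hnpos, hμ, rfl⟩ hfμ
    rwa [hdegg, natDegree_X_pow_sub_C] at this
  have hnn' : n ≤ n' := by
    rw [← hn]
    exact Nat.sInf_le ⟨hn'pos, lam, hlam, hgeq ▸ hfg⟩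
  have hEq : n' = n := le_antisymm hn'n hnn'
  subst hEq
  -- main claim
  have key : ∀ (k : ℕ) (β : F), 0 < k → β ≠ 0 → f ∣ X ^ k - C β →
      n' ∣ k ∧ g ∣ X ^ k - C β := by
    intro k β hk hβ hdvd
    set q := k / n' with hq
    set r := k % n' with hr
    have hk_eq : k = n' * q + r := (Nat.div_add_mod k n').symm
    have hrlt : r < n' := Nat.mod_lt _ hn'pos
    have hlamq : lam ^ q ≠ 0 := pow_ne_zero _ hlam
    have h1 : f ∣ X ^ (n' * q) - C (lam ^ q) := by
      refine hfg.trans ?_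
      rw [hgeq, pow_mul, C_pow]
      exact sub_dvd_pow_sub_pow _ _ _
    have h2 : f ∣ X ^ r - C (β * (lam ^ q)⁻¹) := by
      have h3 : f ∣ C (lam ^ q) * (X ^ r - C (β * (lam ^ q)⁻¹)) := by
        have hβ' : lam ^ q * (β * (lam ^ q)⁻¹) = β := by field_simp
        have heq : C (lam ^ q) * (X ^ r - C (β * (lam ^ q)⁻¹)) =
            (X ^ k - C β) - X ^ r * (X ^ (n' * q) - C (lam ^ q)) := by
          rw [hk_eq, mul_sub, ← C_mul, hβ', pow_add]
          ring
        rw [heq]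
        exact dvd_sub hdvd (h1.mul_left _)
      have hu : IsUnit (C (lam ^ q)) := isUnit_C.mpr hlamq.isUnit
      exact hu.dvd_mul_left.mp h3
    rcases Nat.eq_zero_or_pos r with hr0 | hrpos
    · -- r = 0
      have hc : f ∣ C (1 - β * (lam ^ q)⁻¹) := by
        have : (X : F[X]) ^ r - C (β * (lam ^ q)⁻¹) = C (1 - β * (lam ^ q)⁻¹) := by
          rw [hr0, pow_zero, map_sub, map_one]
        rwa [this] at h2
      have hc0 : 1 - β * (lam ^ q)⁻¹ = 0 := by
        by_contra hcne
        have : IsUnit f := isUnit_of_dvd_unit hc (isUnit_C.mpr (Ne.isUnit hcne))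
        have := Polynomial.natDegree_eq_zero_of_isUnit this
        omega
      have hβeq : β = lam ^ q := by
        have h4 : β * (lam ^ q)⁻¹ = 1 := (sub_eq_zero.mp hc0).symm
        field_simp at h4
        exact h4
      constructor
      · exact ⟨q, by omega⟩
      · rw [hβeq, hgeq]
        have hkeq2 : k = n' * q := by omega
        rw [hkeq2, pow_mul, C_pow]
        exact sub_dvd_pow_sub_pow _ _ _
    · -- r > 0 : contradiction with minimality
      exfalso
      have hmem : r ∈ {n | 0 < n ∧ ∃ l : F, l ≠ 0 ∧ f ∣ X ^ n - C l} :=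
        ⟨hrpos, β * (lam ^ q)⁻¹, mul_ne_zero hβ (inv_ne_zero hlamq), h2⟩
      have := Nat.sInf_le hmem
      omega
  refine ⟨key, ?_⟩
  have := (key m 1 hm one_ne_zero (by simpa using hfm)).2
  simpa using this
end

section
/- Let f₁(X), f₂(X) be squarefree polynomials over F_q coprime to X with orders m₁, m₂, minimal binomial orders n₁, n₂, and primitive defining sets T₁ ⊆ Z/m₁Z, T₂ ⊆ Z/m₂Z. Choose γ ∈ T₁ and η ∈ T₂, set m = lcm(m₁, m₂) and d = gcd(mη/m₂ − mγ/m₁, m/n₁, m/n₂). Then the minimal binomial order of f = lcm(f₁, f₂) is m/d, and its minimal binomial multiple is X^{m/d} − ζ_m^{γm²/(m₁d)}. -/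
open Polynomial

namespace Stmt13Aux

lemma prim_pow_eq_pow_iff {K : Type*} [Field K] {ζ : K} {n : ℕ} (hn : 0 < n)
    (hζ : IsPrimitiveRoot ζ n) {i j : ℕ} : ζ ^ i = ζ ^ j ↔ i ≡ j [MOD n] := by
  have hu : IsUnit ζ := hζ.isUnit hn.ne'
  have hζu : IsPrimitiveRoot hu.unit n := hζ.isUnit_unit hn.ne'
  have hord : orderOf hu.unit = n := (hζu.eq_orderOf).symm
  constructor
  · intro h
    have : hu.unit ^ i = hu.unit ^ j := by
      ext
      simpa [Units.val_pow_eq_pow_val, hu.unit_spec] using h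
    rw [← hord]
    exact pow_eq_pow_iff_modEq.mp this
  · intro h
    have : hu.unit ^ i = hu.unit ^ j := pow_eq_pow_iff_modEq.mpr (hord ▸ h)
    calc ζ ^ i = ((hu.unit ^ i : Kˣ) : K) := by simp [hu.unit_spec]
      _ = ((hu.unit ^ j : Kˣ) : K) := by rw [this]
      _ = ζ ^ j := by simp [hu.unit_spec]

lemma descend {F K : Type*} [Field F] [Field K] (φ : F →+* K)
    (f : F[X]) (hdeg : 0 < f.natDegree) (n : ℕ) (lam : K)
    (h : f.map φ ∣ X ^ n - C lam) :
    ∃ c : F, φ c = lam ∧ f ∣ X ^ n - C c := by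
  have hf0 : f ≠ 0 := fun h0 => by simp [h0] at hdeg
  set f' := f * C f.leadingCoeff⁻¹ with hf'def
  have hmon : f'.Monic := monic_mul_leadingCoeff_inv hf0
  have hmapmon : (f'.map φ).Monic := hmon.map φ
  have hff' : f' * C f.leadingCoeff = f := by
    rw [hf'def, mul_assoc, ← C_mul, inv_mul_cancel₀ (leadingCoeff_ne_zero.mpr hf0), C_1, mul_one]
  have hf'dvd : f'.map φ ∣ X ^ n - C lam := by
    refine dvd_trans ?_ h
    exact ⟨C (φ f.leadingCoeff), by rw [← Polynomial.map_C, ← Polynomial.map_mul, hff']⟩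
  have hdegf' : 0 < (f'.map φ).degree := by
    rw [degree_map_eq_of_injective φ.injective, hf'def,
      degree_mul_leadingCoeff_inv _ hf0]
    exact natDegree_pos_iff_degree_pos.mp hdeg
  have hmod0 : (X ^ n - C lam) %ₘ (f'.map φ) = 0 :=
    (modByMonic_eq_zero_iff_dvd hmapmon).mpr hf'dvd
  have hXn : (X ^ n : K[X]) %ₘ (f'.map φ) = C lam := by
    have : (X ^ n : K[X]) = (X ^ n - C lam) + C lam := by ring
    rw [this, add_modByMonic, hmod0, zero_add,
      (modByMonic_eq_self_iff hmapmon).mpr (lt_of_le_of_lt (degree_C_le) hdegf')]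
  set r := (X ^ n : F[X]) %ₘ f' with hrdef
  have hrmap : r.map φ = C lam := by
    rw [hrdef, map_modByMonic φ hmon, Polynomial.map_pow, Polynomial.map_X, hXn]
  have hrdeg : r.natDegree = 0 := by
    have := natDegree_map_eq_of_injective φ.injective r
    rw [hrmap] at this
    simpa using this.symm
  have hrC : r = C (r.coeff 0) := eq_C_of_natDegree_eq_zero hrdeg
  refine ⟨r.coeff 0, ?_, ?_⟩
  · have : (r.map φ).coeff 0 = φ (r.coeff 0) := coeff_map φ 0
    rw [hrmap] at this
    simpa using this.symm
  · have hdiv : f' * (X ^ n /ₘ f') = X ^ n - r := by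
      have h2 := modByMonic_add_div (X ^ n : F[X]) f'
      rw [← hrdef] at h2
      linear_combination h2
    have : f ∣ X ^ n - r := Dvd.dvd.trans ⟨C f.leadingCoeff⁻¹, rfl⟩ ⟨_, hdiv.symm⟩
    rwa [hrC] at this

end Stmt13Aux

namespace Stmt13Aux

lemma dvd_of_isRoot {K : Type*} [Field K] [IsAlgClosed K] {p q : K[X]}
    (hp : p ≠ 0) (hnd : p.roots.Nodup) (hq : q ≠ 0)
    (h : ∀ α, p.IsRoot α → q.IsRoot α) : p ∣ q := by
  refine Splits.dvd_of_roots_le_roots (IsAlgClosed.splits p) hp ?_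
  rw [Multiset.le_iff_subset hnd]
  intro α hα
  exact (mem_roots hq).mpr (h α ((mem_roots hp).mp hα))

lemma char_lemma {F K : Type*} [Field F] [Field K] [IsAlgClosed K] (φ : F →+* K)
    (p : F[X]) (hdeg : 0 < p.natDegree)
    (hnd : (p.map φ).roots.Nodup)
    (M : ℕ) (hM : 0 < M)
    (hfin : ∀ α : K, (p.map φ).IsRoot α → α ^ M = 1)
    (a : K) (ha : (p.map φ).IsRoot a) :
    ∃ D : ℕ,
    (∀ n : ℕ, D ∣ n ↔ ∀ α : K, (p.map φ).IsRoot α → α ^ n = a ^ n) ∧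
    (∀ n : ℕ, 0 < n → D ∣ n → ∃ c : F, φ c = a ^ n ∧ c ≠ 0 ∧ p ∣ X ^ n - C c) ∧
    (∀ n : ℕ, 0 < n → ((∃ l : F, l ≠ 0 ∧ p ∣ X ^ n - C l) ↔ D ∣ n)) ∧
    minBinOrder p = D ∧ D ∣ M ∧ 0 < D := by
  have hp0 : p ≠ 0 := fun h0 => by simp [h0] at hdeg
  have hpm0 : p.map φ ≠ 0 := Polynomial.map_ne_zero hp0
  have ha0 : a ≠ 0 := by
    intro h0
    have := hfin a ha
    rw [h0, zero_pow hM.ne'] at this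
    exact zero_ne_one this
  classical
  set D : ℕ := ((p.map φ).roots.toFinset.lcm fun α => orderOf (α * a⁻¹)) with hD
  refine ⟨D, ?_⟩
  have key : ∀ n : ℕ, D ∣ n ↔ ∀ α : K, (p.map φ).IsRoot α → α ^ n = a ^ n := by
    intro n
    rw [hD, Finset.lcm_dvd_iff]
    constructor
    · intro h α hα
      have := h α (by rw [Multiset.mem_toFinset, mem_roots hpm0]; exact hα)
      have h1 : (α * a⁻¹) ^ n = 1 := orderOf_dvd_iff_pow_eq_one.mp this
      rw [mul_pow, inv_pow, mul_inv_eq_one₀ (pow_ne_zero n ha0)] at h1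
      exact h1
    · intro h α hα
      rw [Multiset.mem_toFinset, mem_roots hpm0] at hα
      apply orderOf_dvd_of_pow_eq_one
      rw [mul_pow, inv_pow, mul_inv_eq_one₀ (pow_ne_zero n ha0)]
      exact h α hα
  have construct : ∀ n : ℕ, 0 < n → D ∣ n →
      ∃ c : F, φ c = a ^ n ∧ c ≠ 0 ∧ p ∣ X ^ n - C c := by
    intro n hn hDn
    have hroots := (key n).mp hDn
    have hq0 : (X ^ n - C (a ^ n) : K[X]) ≠ 0 := X_pow_sub_C_ne_zero hn _
    have hdvd : p.map φ ∣ X ^ n - C (a ^ n) := by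
      refine dvd_of_isRoot hpm0 hnd hq0 (fun α hα => ?_)
      simp [IsRoot, hroots α hα]
    obtain ⟨c, hc1, hc2⟩ := descend φ p hdeg n (a ^ n) hdvd
    refine ⟨c, hc1, fun h0 => ?_, hc2⟩
    rw [h0, map_zero] at hc1
    exact pow_ne_zero n ha0 hc1.symm
  have hDM : D ∣ M := (key M).mpr (fun α hα => by rw [hfin α hα, hfin a ha])
  have hDpos : 0 < D := by
    rcases Nat.eq_zero_or_pos D with h0 | h
    · rw [h0] at hDM
      exact absurd (zero_dvd_iff.mp hDM) hM.ne'
    · exact h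
  have iff2 : ∀ n : ℕ, 0 < n → ((∃ l : F, l ≠ 0 ∧ p ∣ X ^ n - C l) ↔ D ∣ n) := by
    intro n hn
    constructor
    · rintro ⟨l, hl0, hdvd⟩
      have hmap : p.map φ ∣ X ^ n - C (φ l) := by
        have := Polynomial.map_dvd φ hdvd
        simpa using this
      have hroot : ∀ α : K, (p.map φ).IsRoot α → α ^ n = φ l := by
        intro α hα
        have := hα.dvd hmap
        simp only [IsRoot, eval_sub, eval_pow, eval_X, eval_C, sub_eq_zero] at this
        exact this
      refine (key n).mpr (fun α hα => ?_)
      rw [hroot α hα, hroot a ha]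
    · intro hDn
      obtain ⟨c, _, hc0, hdvd⟩ := construct n hn hDn
      exact ⟨c, hc0, hdvd⟩
  refine ⟨key, construct, iff2, ?_, hDM, hDpos⟩
  have hmem : D ∈ {n : ℕ | 0 < n ∧ ∃ l : F, l ≠ 0 ∧ p ∣ X ^ n - C l} :=
    ⟨hDpos, (iff2 D hDpos).mpr dvd_rfl⟩
  refine le_antisymm (Nat.sInf_le hmem) (le_csInf ⟨D, hmem⟩ ?_)
  rintro n ⟨hn, hl⟩
  exact Nat.le_of_dvd hn ((iff2 n hn).mp hl)

end Stmt13Aux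


/-- Proposition: the minimal binomial order of `lcm(f₁,f₂)` is `m/d` with
`d = gcd(mη/m₂ − mγ/m₁, m/n₁, m/n₂)`, `m = lcm(m₁,m₂)`, and its minimal binomial
multiple is `X^{m/d} − ζ_m^{γm²/(m₁d)}`. -/
theorem stmt_13 {F : Type*} [Field F] [Fintype F]
    (f₁ f₂ : F[X]) (hs₁ : Squarefree f₁) (hs₂ : Squarefree f₂)
    (h01 : f₁.coeff 0 ≠ 0) (h02 : f₂.coeff 0 ≠ 0)
    (hdeg₁ : 0 < f₁.natDegree) (hdeg₂ : 0 < f₂.natDegree)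
    (m₁ m₂ n₁ n₂ : ℕ) (hm₁0 : 0 < m₁) (hm₂0 : 0 < m₂)
    (hm₁ : polyOrder f₁ = m₁) (hm₂ : polyOrder f₂ = m₂)
    (hn₁ : minBinOrder f₁ = n₁) (hn₂ : minBinOrder f₂ = n₂)
    (m : ℕ) (hm : m = Nat.lcm m₁ m₂)
    (ζ : AlgebraicClosure F) (hζ : IsPrimitiveRoot ζ m)
    (T₁ : Finset (ZMod m₁)) (T₂ : Finset (ZMod m₂)) (a₁ a₂ : F)
    (hT₁ : f₁.map (algebraMap F (AlgebraicClosure F)) =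
      C ((algebraMap F (AlgebraicClosure F)) a₁) *
        ∏ x ∈ T₁, (X - C ((ζ ^ (m / m₁)) ^ x.val)))
    (hT₂ : f₂.map (algebraMap F (AlgebraicClosure F)) =
      C ((algebraMap F (AlgebraicClosure F)) a₂) *
        ∏ x ∈ T₂, (X - C ((ζ ^ (m / m₂)) ^ x.val)))
    (γ η : ℕ) (hγ : (γ : ZMod m₁) ∈ T₁) (hη : (η : ZMod m₂) ∈ T₂)
    (d : ℕ)
    (hd : d = Nat.gcd (((m / m₂ * η : ℕ) - (m / m₁ * γ : ℕ) : ℤ)).natAbs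
        (Nat.gcd (m / n₁) (m / n₂)))
    (f : F[X]) (hd1 : f₁ ∣ f) (hd2 : f₂ ∣ f)
    (hlcm : ∀ g : F[X], f₁ ∣ g → f₂ ∣ g → f ∣ g) :
    minBinOrder f = m / d ∧
    ∃ c : F, algebraMap F (AlgebraicClosure F) c = ζ ^ (γ * (m / m₁) * (m / d)) ∧
      IsMinBinMultiple f (X ^ (m / d) - C c) := by
  classical
  set φ := algebraMap F (AlgebraicClosure F) with hφ
  have φinj : Function.Injective φ := φ.injective
  have hm0 : 0 < m := hm ▸ Nat.lcm_pos hm₁0 hm₂0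
  have hm₁m : m₁ ∣ m := hm ▸ Nat.dvd_lcm_left _ _
  have hm₂m : m₂ ∣ m := hm ▸ Nat.dvd_lcm_right _ _
  haveI : NeZero m₁ := ⟨hm₁0.ne'⟩
  haveI : NeZero m₂ := ⟨hm₂0.ne'⟩
  have hf₁0 : f₁ ≠ 0 := fun h0 => by simp [h0] at hdeg₁
  have hf₂0 : f₂ ≠ 0 := fun h0 => by simp [h0] at hdeg₂
  have hfm₁0 : f₁.map φ ≠ 0 := Polynomial.map_ne_zero hf₁0
  have hfm₂0 : f₂.map φ ≠ 0 := Polynomial.map_ne_zero hf₂0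
  have ha₁0 : φ a₁ ≠ 0 := by
    intro h0
    rw [hT₁, h0, map_zero, zero_mul] at hfm₁0
    exact hfm₁0 rfl
  have ha₂0 : φ a₂ ≠ 0 := by
    intro h0
    rw [hT₂, h0, map_zero, zero_mul] at hfm₂0
    exact hfm₂0 rfl
  -- root characterizations
  have rootiff₁ : ∀ α : AlgebraicClosure F,
      (f₁.map φ).IsRoot α ↔ ∃ t ∈ T₁, (ζ ^ (m / m₁)) ^ t.val = α := by
    intro α
    rw [IsRoot.def, hT₁, eval_mul, eval_C, eval_prod]
    simp only [eval_sub, eval_X, eval_C]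
    rw [mul_eq_zero]
    constructor
    · rintro (h | h)
      · exact absurd h ha₁0
      · obtain ⟨t, ht, h⟩ := Finset.prod_eq_zero_iff.mp h
        exact ⟨t, ht, (sub_eq_zero.mp h).symm⟩
    · rintro ⟨t, ht, hteq⟩
      exact Or.inr (Finset.prod_eq_zero ht (by rw [hteq, sub_self]))
  have rootiff₂ : ∀ α : AlgebraicClosure F,
      (f₂.map φ).IsRoot α ↔ ∃ t ∈ T₂, (ζ ^ (m / m₂)) ^ t.val = α := by
    intro α
    rw [IsRoot.def, hT₂, eval_mul, eval_C, eval_prod]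
    simp only [eval_sub, eval_X, eval_C]
    rw [mul_eq_zero]
    constructor
    · rintro (h | h)
      · exact absurd h ha₂0
      · obtain ⟨t, ht, h⟩ := Finset.prod_eq_zero_iff.mp h
        exact ⟨t, ht, (sub_eq_zero.mp h).symm⟩
    · rintro ⟨t, ht, hteq⟩
      exact Or.inr (Finset.prod_eq_zero ht (by rw [hteq, sub_self]))
  -- powers of ζ
  have hpowm : ∀ (k v : ℕ), (((ζ ^ k) ^ v) ^ m) = 1 := by
    intro k v
    rw [← pow_mul, ← pow_mul, show k * (v * m) = m * (k * v) from by ring, pow_mul,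
      hζ.pow_eq_one, one_pow]
  have fin₁ : ∀ α : AlgebraicClosure F, (f₁.map φ).IsRoot α → α ^ m = 1 := by
    intro α hα
    obtain ⟨t, _, hteq⟩ := (rootiff₁ α).mp hα
    rw [← hteq]; exact hpowm _ _
  have fin₂ : ∀ α : AlgebraicClosure F, (f₂.map φ).IsRoot α → α ^ m = 1 := by
    intro α hα
    obtain ⟨t, _, hteq⟩ := (rootiff₂ α).mp hα
    rw [← hteq]; exact hpowm _ _
  -- nodup of roots of f₁, f₂
  have hnd₁ : (f₁.map φ).roots.Nodup :=
    nodup_roots ((PerfectField.separable_iff_squarefree.mpr hs₁).map)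
  have hnd₂ : (f₂.map φ).roots.Nodup :=
    nodup_roots ((PerfectField.separable_iff_squarefree.mpr hs₂).map)
  -- facts about f
  have hff₁f₂ : f ∣ f₁ * f₂ := hlcm _ (dvd_mul_right _ _) (dvd_mul_left _ _)
  have hf0 : f ≠ 0 := by
    intro h0
    rw [h0] at hff₁f₂
    exact mul_ne_zero hf₁0 hf₂0 (zero_dvd_iff.mp hff₁f₂)
  have hdegf : 0 < f.natDegree := hdeg₁.trans_le (natDegree_le_of_dvd hd1 hf0)
  have rootf : ∀ α : AlgebraicClosure F,
      (f.map φ).IsRoot α ↔ ((f₁.map φ).IsRoot α ∨ (f₂.map φ).IsRoot α) := by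
    intro α
    constructor
    · intro h
      have hdvd : f.map φ ∣ f₁.map φ * f₂.map φ := by
        have := Polynomial.map_dvd φ hff₁f₂
        rwa [Polynomial.map_mul] at this
      have := h.dvd hdvd
      rw [IsRoot.def, eval_mul, mul_eq_zero] at this
      exact this
    · rintro (h | h)
      exacts [h.dvd (Polynomial.map_dvd φ hd1), h.dvd (Polynomial.map_dvd φ hd2)]
  have finf : ∀ α : AlgebraicClosure F, (f.map φ).IsRoot α → α ^ m = 1 := by
    intro α hα
    rcases (rootf α).mp hα with h | h
    exacts [fin₁ α h, fin₂ α h]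
  -- f divides X^m - 1, hence nodup roots
  have hXm0 : (X ^ m - C (1 : AlgebraicClosure F)) ≠ 0 := X_pow_sub_C_ne_zero hm0 _
  have hfdvdXm : f ∣ X ^ m - C (1 : F) := by
    have step : ∀ g : F[X], g ≠ 0 → 0 < g.natDegree → (g.map φ).roots.Nodup →
        (∀ α : AlgebraicClosure F, (g.map φ).IsRoot α → α ^ m = 1) → g ∣ X ^ m - C (1 : F) := by
      intro g hg0 hgdeg hgnd hgfin
      have hK : g.map φ ∣ X ^ m - C (1 : AlgebraicClosure F) := by
        refine Stmt13Aux.dvd_of_isRoot (Polynomial.map_ne_zero hg0) hgnd hXm0 ?_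
        intro α hα
        simp [IsRoot.def, hgfin α hα]
      obtain ⟨c, hc1, hc2⟩ := Stmt13Aux.descend φ g hgdeg m 1 hK
      have : c = 1 := φinj (by rw [hc1, map_one])
      rwa [this] at hc2
    exact hlcm _ (step f₁ hf₁0 hdeg₁ hnd₁ fin₁) (step f₂ hf₂0 hdeg₂ hnd₂ fin₂)
  have hndf : (f.map φ).roots.Nodup := by
    have hdvdK : f.map φ ∣ X ^ m - C (1 : AlgebraicClosure F) := by
      have := Polynomial.map_dvd φ hfdvdXm
      simpa using this
    exact Multiset.nodup_of_le (Polynomial.roots.le_of_dvd hXm0 hdvdK)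
      (hζ.nthRoots_nodup one_ne_zero)
  -- base roots
  set a : AlgebraicClosure F := (ζ ^ (m / m₁)) ^ (γ : ZMod m₁).val with hadef
  set b : AlgebraicClosure F := (ζ ^ (m / m₂)) ^ (η : ZMod m₂).val with hbdef
  have aroot₁ : (f₁.map φ).IsRoot a := (rootiff₁ a).mpr ⟨_, hγ, rfl⟩
  have broot₂ : (f₂.map φ).IsRoot b := (rootiff₂ b).mpr ⟨_, hη, rfl⟩
  have arootf : (f.map φ).IsRoot a := (rootf a).mpr (Or.inl aroot₁)
  have brootf : (f.map φ).IsRoot b := (rootf b).mpr (Or.inr broot₂)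
  have ha0 : a ≠ 0 := by
    intro h0
    have := hpowm (m / m₁) (γ : ZMod m₁).val
    rw [← hadef, h0, zero_pow hm0.ne'] at this
    exact zero_ne_one this
  -- apply the characterization lemma three times
  obtain ⟨D₁, key₁, cons₁, iff₁, hmin₁, hD₁m, hD₁pos⟩ :=
    Stmt13Aux.char_lemma φ f₁ hdeg₁ hnd₁ m hm0 fin₁ a aroot₁
  obtain ⟨D₂, key₂, cons₂, iff₂, hmin₂, hD₂m, hD₂pos⟩ :=
    Stmt13Aux.char_lemma φ f₂ hdeg₂ hnd₂ m hm0 fin₂ b broot₂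
  obtain ⟨D, keyf, consf, ifff, hminf, hDm, hDpos⟩ :=
    Stmt13Aux.char_lemma φ f hdegf hndf m hm0 finf a arootf
  have hn₁D : n₁ = D₁ := by rw [← hn₁, hmin₁]
  have hn₂D : n₂ = D₂ := by rw [← hn₂, hmin₂]
  -- the cross order
  set R : ℕ := orderOf (b * a⁻¹) with hRdef
  have hbn_an : ∀ n : ℕ, ((b * a⁻¹) ^ n = 1 ↔ b ^ n = a ^ n) := fun n => by
    rw [mul_pow, inv_pow, mul_inv_eq_one₀ (pow_ne_zero n ha0)]
  have hsplit : ∀ n : ℕ, D ∣ n ↔ (D₁ ∣ n ∧ D₂ ∣ n ∧ R ∣ n) := by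
    intro n
    rw [keyf n, key₁ n, key₂ n]
    constructor
    · intro h
      have hb : b ^ n = a ^ n := h b brootf
      refine ⟨fun α hα => h α ((rootf α).mpr (Or.inl hα)), fun α hα => ?_, ?_⟩
      · rw [h α ((rootf α).mpr (Or.inr hα)), hb]
      · exact orderOf_dvd_of_pow_eq_one ((hbn_an n).mpr hb)
    · rintro ⟨h1, h2, h3⟩ α hα
      rcases (rootf α).mp hα with hr | hr
      · exact h1 α hr
      · rw [h2 α hr, (hbn_an n).mp (orderOf_dvd_iff_pow_eq_one.mp h3)]
  -- characterize R by divisibility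
  set E : ℕ := (((m / m₂ * η : ℕ) : ℤ) - ((m / m₁ * γ : ℕ) : ℤ)).natAbs with hEdef
  have dvd_iff_of_dvd_sub : ∀ x y : ℤ, (m : ℤ) ∣ x - y → ((m : ℤ) ∣ x ↔ (m : ℤ) ∣ y) := by
    intro x y h
    constructor
    · intro hx; have := hx.sub h; simpa using this
    · intro hy; have := h.add hy; simpa using this
  have hmodswap : ∀ n : ℕ,
      (m / m₂ * (η : ZMod m₂).val * n ≡ m / m₁ * (γ : ZMod m₁).val * n [MOD m])
      ↔ (m / m₂ * η * n ≡ m / m₁ * γ * n [MOD m]) := by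
    intro n
    have c2 : m / m₂ * (η : ZMod m₂).val * n ≡ m / m₂ * η * n [MOD m] := by
      rw [ZMod.val_natCast]
      have h2 := (Nat.mod_modEq η m₂).mul_left' (c := m / m₂)
      rw [Nat.div_mul_cancel hm₂m] at h2
      exact h2.mul_right n
    have c1 : m / m₁ * (γ : ZMod m₁).val * n ≡ m / m₁ * γ * n [MOD m] := by
      rw [ZMod.val_natCast]
      have h1 := (Nat.mod_modEq γ m₁).mul_left' (c := m / m₁)
      rw [Nat.div_mul_cancel hm₁m] at h1
      exact h1.mul_right n
    exact ⟨fun h => c2.symm.trans (h.trans c1), fun h => c2.trans (h.trans c1.symm)⟩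
  have hR : ∀ n : ℕ, R ∣ n ↔ m ∣ E * n := by
    intro n
    rw [hRdef, orderOf_dvd_iff_pow_eq_one, hbn_an n, hbdef, hadef]
    simp only [← pow_mul]
    rw [Stmt13Aux.prim_pow_eq_pow_iff hm0 hζ, hmodswap n, Nat.modEq_iff_dvd]
    rw [show ((m / m₁ * γ * n : ℕ) : ℤ) = ((m / m₁ * γ : ℕ) : ℤ) * n from by push_cast; ring,
        show ((m / m₂ * η * n : ℕ) : ℤ) = ((m / m₂ * η : ℕ) : ℤ) * n from by push_cast; ring,
        show ((m / m₁ * γ : ℕ) : ℤ) * n - ((m / m₂ * η : ℕ) : ℤ) * n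
          = -((((m / m₂ * η : ℕ) : ℤ) - ((m / m₁ * γ : ℕ) : ℤ)) * n) from by ring,
        dvd_neg, hEdef, ← Int.natAbs_dvd_natAbs (a := (m : ℤ)), Int.natAbs_mul]
    simp
  -- divisibility bookkeeping for d
  have du : d ∣ m / n₁ := hd ▸ (Nat.gcd_dvd_right _ _).trans (Nat.gcd_dvd_left _ _)
  have dv : d ∣ m / n₂ := hd ▸ (Nat.gcd_dvd_right _ _).trans (Nat.gcd_dvd_right _ _)
  have dE : d ∣ E := hd ▸ Nat.gcd_dvd_left _ _
  have hn₁m : n₁ ∣ m := hn₁D ▸ hD₁m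
  have hn₂m : n₂ ∣ m := hn₂D ▸ hD₂m
  have hn₁pos : 0 < n₁ := hn₁D ▸ hD₁pos
  have hn₂pos : 0 < n₂ := hn₂D ▸ hD₂pos
  have dm : d ∣ m := du.trans (Nat.div_dvd_of_dvd hn₁m)
  have d0 : 0 < d := by
    rcases Nat.eq_zero_or_pos d with h0 | h
    · exfalso
      rw [h0] at du
      have := zero_dvd_iff.mp du
      have hpos : 0 < m / n₁ := Nat.div_pos (Nat.le_of_dvd hm0 hn₁m) hn₁pos
      omega
    · exact h
  have hN0 : 0 < m / d := Nat.div_pos (Nat.le_of_dvd hm0 dm) d0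
  have hdN : d * (m / d) = m := Nat.mul_div_cancel' dm
  -- x ∣ m/d whenever d ∣ m/x (for x a divisor of m)
  have div_step : ∀ x : ℕ, x ∣ m → d ∣ m / x → x ∣ m / d := by
    intro x hxm hdx
    obtain ⟨k, hk⟩ := hdx
    have hxm' : x * (m / x) = m := Nat.mul_div_cancel' hxm
    have : m = d * (x * k) := by rw [← hxm', hk]; ring
    rw [this, Nat.mul_div_cancel_left _ d0]
    exact Dvd.intro k rfl
  -- R divides m/d
  have hRN : R ∣ m / d := by
    rw [hR]
    obtain ⟨k, hk⟩ := dE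
    refine ⟨k, ?_⟩
    rw [hk]
    calc d * k * (m / d) = d * (m / d) * k := by ring
      _ = m * k := by rw [hdN]
  -- D₁, D₂ divide m/d
  have hD₁N : D₁ ∣ m / d := hn₁D ▸ div_step n₁ hn₁m du
  have hD₂N : D₂ ∣ m / d := hn₂D ▸ div_step n₂ hn₂m dv
  have hDdvdN : D ∣ m / d := (hsplit _).mpr ⟨hD₁N, hD₂N, hRN⟩
  obtain ⟨hD₁D, hD₂D, hRD⟩ := (hsplit D).mp dvd_rfl
  have h1 : m ∣ E * D := (hR D).mp hRD
  have h2 : m ∣ m / n₁ * D := by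
    obtain ⟨j, hj⟩ := hn₁D ▸ hD₁D
    refine ⟨j, ?_⟩
    rw [hj]
    calc m / n₁ * (n₁ * j) = m / n₁ * n₁ * j := by ring
      _ = m * j := by rw [Nat.div_mul_cancel hn₁m]
  have h3 : m ∣ m / n₂ * D := by
    obtain ⟨j, hj⟩ := hn₂D ▸ hD₂D
    refine ⟨j, ?_⟩
    rw [hj]
    calc m / n₂ * (n₂ * j) = m / n₂ * n₂ * j := by ring
      _ = m * j := by rw [Nat.div_mul_cancel hn₂m]
  have hbez : m ∣ d * D := by
    have h1' : (m : ℤ) ∣ (E : ℤ) * D := by exact_mod_cast Int.natCast_dvd_natCast.mpr h1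
    have h2' : (m : ℤ) ∣ ((m / n₁ : ℕ) : ℤ) * D := by
      exact_mod_cast Int.natCast_dvd_natCast.mpr h2
    have h3' : (m : ℤ) ∣ ((m / n₂ : ℕ) : ℤ) * D := by
      exact_mod_cast Int.natCast_dvd_natCast.mpr h3
    have hw : ((Nat.gcd (m / n₁) (m / n₂) : ℕ) : ℤ)
        = ((m / n₁ : ℕ) : ℤ) * Nat.gcdA (m / n₁) (m / n₂)
          + ((m / n₂ : ℕ) : ℤ) * Nat.gcdB (m / n₁) (m / n₂) := Nat.gcd_eq_gcd_ab _ _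
    have hdz : (d : ℤ) = (E : ℤ) * Nat.gcdA E (Nat.gcd (m / n₁) (m / n₂))
        + ((Nat.gcd (m / n₁) (m / n₂) : ℕ) : ℤ) * Nat.gcdB E (Nat.gcd (m / n₁) (m / n₂)) := by
      rw [hd]
      exact Nat.gcd_eq_gcd_ab E (Nat.gcd (m / n₁) (m / n₂))
    have key : (d : ℤ) * D = Nat.gcdA E (Nat.gcd (m / n₁) (m / n₂)) * ((E : ℤ) * D)
        + Nat.gcdB E (Nat.gcd (m / n₁) (m / n₂)) * Nat.gcdA (m / n₁) (m / n₂)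
          * (((m / n₁ : ℕ) : ℤ) * D)
        + Nat.gcdB E (Nat.gcd (m / n₁) (m / n₂)) * Nat.gcdB (m / n₁) (m / n₂)
          * (((m / n₂ : ℕ) : ℤ) * D) := by
      linear_combination (D : ℤ) * hdz + ((D : ℤ) * Nat.gcdB E (Nat.gcd (m / n₁) (m / n₂))) * hw
    have hmdvd : (m : ℤ) ∣ (d : ℤ) * D := by
      rw [key]
      exact dvd_add (dvd_add (h1'.mul_left _) (h2'.mul_left _)) (h3'.mul_left _)
    exact_mod_cast hmdvd
  have hNdvdD : m / d ∣ D := by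
    obtain ⟨k, hk⟩ := hbez
    refine ⟨k, ?_⟩
    apply Nat.eq_of_mul_eq_mul_left d0
    rw [hk]
    calc m * k = d * (m / d) * k := by rw [hdN]
      _ = d * (m / d * k) := by ring
  have hDN : D = m / d := Nat.dvd_antisymm hDdvdN hNdvdD
  constructor
  · rw [hminf, hDN]
  · obtain ⟨c, hc, hc0, hdvdc⟩ := consf (m / d) hN0 hDdvdN
    refine ⟨c, ?_, ?_⟩
    · rw [hc, hadef]
      simp only [← pow_mul]
      rw [Stmt13Aux.prim_pow_eq_pow_iff hm0 hζ]
      have c1 : m / m₁ * (γ : ZMod m₁).val * (m / d) ≡ m / m₁ * γ * (m / d) [MOD m] := by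
        rw [ZMod.val_natCast]
        have h1 := (Nat.mod_modEq γ m₁).mul_left' (c := m / m₁)
        rw [Nat.div_mul_cancel hm₁m] at h1
        exact h1.mul_right _
      have heq : m / m₁ * γ * (m / d) = γ * (m / m₁) * (m / d) := by ring
      exact heq ▸ c1
    · refine ⟨⟨m / d, c, hN0, hc0, rfl⟩, hdvdc, ?_⟩
      rintro h ⟨k, l, hk0, hl0, rfl⟩ hfh
      rw [natDegree_X_pow_sub_C, natDegree_X_pow_sub_C]
      have hDk : D ∣ k := (ifff k hk0).mp ⟨l, hl0, hfh⟩
      rw [← hDN]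
      exact Nat.le_of_dvd hk0 hDk
end

section
/- Let f(X) be a squarefree polynomial over F_q of order m, whose defining set decomposes as T_f = ⊔_{i=1}^t c_{m/q}(γ_i) into q-cyclotomic cosets modulo m. Set d_i = γ_{i+1} − γ_i for 1 ≤ i ≤ t−1 and d_f = gcd(d₁, ..., d_{t−1}, m, q−1). Then the minimal binomial order of f is m/d_f, and the minimal binomial multiple of f is X^{m/d_f} − ζ_m^{γ₁ m/d_f}. -/
open Polynomial

/-- The `q`-cyclotomic coset modulo `m` containing `γ`: `{γ, γq, γq², ...} ⊆ ℤ/mℤ`. -/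
def cyclCoset (q m : ℕ) (γ : ℤ) : Finset (ZMod m) :=
  (Finset.range m).image (fun j => ((γ * (q : ℤ) ^ j : ℤ) : ZMod m))

section Aux

lemma aux2 {α : Type*} [CommMonoidWithZero α] [IsCancelMulZero α] [NormalizedGCDMonoid α]
    {m n a b : α} (h1 : m ∣ n * a) (h2 : m ∣ n * b) : m ∣ n * gcd a b := by
  have h3 : m ∣ gcd (n * a) (n * b) := dvd_gcd h1 h2
  exact h3.trans (gcd_mul_left' n a b).dvd

lemma aux_dvd_mul_gcd {α ι : Type*} [CommMonoidWithZero α] [IsCancelMulZero α] [NormalizedGCDMonoid α]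
    (s : Finset ι) (f : ι → α) (m n : α) (h : ∀ i ∈ s, m ∣ n * f i) :
    m ∣ n * s.gcd f := by
  classical
  induction s using Finset.induction_on with
  | empty => simp
  | insert _ _ hx ih =>
    rw [Finset.gcd_insert]
    exact aux2 (h _ (Finset.mem_insert_self _ _))
      (ih fun i hi => h i (Finset.mem_insert_of_mem hi))

lemma aux_fixed {F K : Type*} [Field F] [Fintype F] [Field K] (φ : F →+* K)
    {q : ℕ} (hq : Fintype.card F = q) {y : K} (hy : y ^ q = y) : ∃ c : F, φ c = y := by
  classical
  have hq2 : 1 < q := hq ▸ Fintype.one_lt_card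
  set P : K[X] := X ^ q - X with hP
  have hdeg : P.natDegree = q := by
    rw [hP]
    have h1 : natDegree (X : K[X]) < natDegree (X ^ q : K[X]) := by
      rw [natDegree_X, natDegree_X_pow]; omega
    rw [natDegree_sub_eq_left_of_natDegree_lt h1, natDegree_X_pow]
  have hP0 : P ≠ 0 := fun h => by rw [h, natDegree_zero] at hdeg; omega
  have hroots : ∀ z : K, z ^ q = z → z ∈ P.roots.toFinset := by
    intro z hz
    rw [Multiset.mem_toFinset, mem_roots hP0]
    simp [hP, IsRoot, hz]
  have hsub : (Finset.univ.image φ) ⊆ P.roots.toFinset := by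
    intro z hz
    rw [Finset.mem_image] at hz
    obtain ⟨c, -, rfl⟩ := hz
    refine hroots _ ?_
    rw [← map_pow, ← hq, FiniteField.pow_card]
  have hcard : P.roots.toFinset.card ≤ (Finset.univ.image φ).card := by
    rw [Finset.card_image_of_injective _ φ.injective, Finset.card_univ, hq]
    exact (P.roots.toFinset_card_le).trans ((P.card_roots').trans_eq hdeg)
  have heq := Finset.eq_of_subset_of_card_le hsub hcard
  have := hroots y hy
  rw [← heq, Finset.mem_image] at this
  obtain ⟨c, -, hc⟩ := this
  exact ⟨c, hc⟩

lemma aux_prod_dvd {K ι : Type*} [Field K] (T : Finset ι) (r : ι → K)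
    (hinj : Set.InjOn r T) (B : K[X]) :
    (∏ x ∈ T, (X - C (r x))) ∣ B ↔ ∀ x ∈ T, B.eval (r x) = 0 := by
  constructor
  · intro h x hx
    exact dvd_iff_isRoot.mp ((Finset.dvd_prod_of_mem (fun x => X - C (r x)) hx).trans h)
  · intro h
    refine Finset.prod_dvd_of_coprime ?_ fun x hx => dvd_iff_isRoot.mpr (h x hx)
    intro x hx y hy hxy
    exact isCoprime_X_sub_C_of_isUnit_sub
      (sub_ne_zero_of_ne fun he => hxy (hinj hx hy he)).isUnit

lemma mem_cyclCoset_self (q m : ℕ) (hm : 0 < m) (γ : ℤ) :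
    ((γ : ℤ) : ZMod m) ∈ cyclCoset q m γ :=
  Finset.mem_image.mpr ⟨0, Finset.mem_range.mpr hm, by simp⟩

end Aux

/-- For squarefree `f` of order `m` with defining set `T = ⊔ᵢ c_{m/q}(γᵢ)` and
`d_f = gcd(γ₂−γ₁, ..., γ_t−γ_{t−1}, m, q−1)`, the minimal binomial order of `f` is
`m/d_f` and its minimal binomial multiple is `X^{m/d_f} − ζ_m^{γ₁·m/d_f}`. -/
theorem stmt_14 {F : Type*} [Field F] [Fintype F] (q : ℕ) (hq : Fintype.card F = q)
    (f : F[X]) (hsq : Squarefree f) (hdeg : 0 < f.natDegree) (h0 : f.coeff 0 ≠ 0)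
    (m : ℕ) (hm : 0 < m) (hord : polyOrder f = m)
    (ζ : AlgebraicClosure F) (hζ : IsPrimitiveRoot ζ m)
    (t : ℕ) (ht : 0 < t) (γ : ℕ → ℤ)
    (T : Finset (ZMod m)) (a : F) (ha : a ≠ 0)
    (hT : f.map (algebraMap F (AlgebraicClosure F)) =
      C ((algebraMap F (AlgebraicClosure F)) a) * ∏ x ∈ T, (X - C (ζ ^ x.val)))
    (hTdec : T = (Finset.range t).biUnion (fun i => cyclCoset q m (γ i)))
    (hdisj : ∀ i < t, ∀ j < t, i ≠ j → Disjoint (cyclCoset q m (γ i)) (cyclCoset q m (γ j)))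
    (d : ℕ)
    (hd : d = Nat.gcd ((Finset.range (t - 1)).gcd (fun i => γ (i + 1) - γ i)).natAbs
        (Nat.gcd m (q - 1))) :
    minBinOrder f = m / d ∧
    ∃ c : F, algebraMap F (AlgebraicClosure F) c = ζ ^ (γ 0 * ((m / d : ℕ) : ℤ)) ∧
      IsMinBinMultiple f (X ^ (m / d) - C c) := by
  classical
  haveI : NeZero m := ⟨hm.ne'⟩
  set φ := algebraMap F (AlgebraicClosure F) with hφdef
  have hζ0 : ζ ≠ 0 := hζ.ne_zero hm.ne'
  have hq2 : 1 < q := hq ▸ Fintype.one_lt_card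
  have hzeq : ∀ A B : ℤ, ζ ^ A = ζ ^ B ↔ (m : ℤ) ∣ A - B := by
    intro A B
    rw [← hζ.zpow_eq_one_iff_dvd, zpow_sub₀ hζ0]
    exact (div_eq_one_iff_eq (zpow_ne_zero _ hζ0)).symm
  have hval : ∀ (x : ZMod m) (z : ℤ), x = (z : ZMod m) → (m : ℤ) ∣ (x.val : ℤ) - z := by
    intro x z h
    have h2 : ((x.val : ℤ) : ZMod m) = (z : ZMod m) := by
      rw [Int.cast_natCast, ZMod.natCast_rightInverse x, h]
    exact (dvd_sub_comm).mp ((ZMod.intCast_eq_intCast_iff _ _ _).mp h2).dvd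
  have hinj : Set.InjOn (fun x : ZMod m => ζ ^ x.val) T := by
    intro x hx y hy hxy
    have h1 := hζ.pow_inj (ZMod.val_lt x) (ZMod.val_lt y) hxy
    exact ZMod.val_injective m h1
  have keyF : ∀ (n : ℕ) (l : F), f ∣ X ^ n - C l ↔
      ∀ x ∈ T, ζ ^ ((x.val : ℤ) * n) = φ l := by
    intro n l
    have hu : IsUnit (C (φ a) : (AlgebraicClosure F)[X]) := isUnit_C.mpr
      (((map_ne_zero_iff φ (RingHom.injective φ)).mpr ha).isUnit)
    rw [← map_dvd_map' φ, Polynomial.map_sub, Polynomial.map_pow, map_X, map_C, hT,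
      hu.mul_left_dvd, aux_prod_dvd T _ hinj]
    refine forall₂_congr fun x hx => ?_
    rw [eval_sub, eval_pow, eval_X, eval_C, sub_eq_zero, ← pow_mul,
      ← zpow_natCast ζ (x.val * n), Nat.cast_mul]
  have horddvd : ∀ k : ℕ, f ∣ X ^ k - 1 ↔ ∀ x ∈ T, (m : ℤ) ∣ (x.val : ℤ) * k := by
    intro k
    have h1 : (X ^ k - 1 : F[X]) = X ^ k - C 1 := by rw [map_one]
    rw [h1, keyF]
    refine forall₂_congr fun x hx => ?_
    rw [map_one, show (1 : AlgebraicClosure F) = ζ ^ (0 : ℤ) from (zpow_zero ζ).symm,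
      hzeq, sub_zero]
  -- the gcd of the defining set with m is 1, from `polyOrder f = m`
  set G : ℕ := gcd (T.gcd ZMod.val) m with hGdef
  have hGm : G ∣ m := gcd_dvd_right _ _
  have hG0 : 0 < G := Nat.pos_of_ne_zero fun h => hm.ne' ((gcd_eq_zero_iff _ _).mp h).2
  have hGS : 0 < m / G ∧ f ∣ X ^ (m / G) - 1 := by
    refine ⟨Nat.div_pos (Nat.le_of_dvd hm hGm) hG0, ?_⟩
    rw [horddvd]
    intro x hx
    obtain ⟨w, hw⟩ : G ∣ x.val := (gcd_dvd_left _ _).trans (Finset.gcd_dvd hx)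
    have h1 : x.val * (m / G) = m * w := by
      rw [hw, Nat.mul_comm G w, Nat.mul_assoc, Nat.mul_div_cancel' hGm, Nat.mul_comm]
    have h2 : m ∣ x.val * (m / G) := ⟨w, h1⟩
    exact_mod_cast Int.natCast_dvd_natCast.mpr h2
  have hGlb : ∀ k, 0 < k → f ∣ X ^ k - 1 → (m / G) ∣ k := by
    intro k hk hdvd
    have h1 : ∀ x ∈ T, m ∣ k * x.val := by
      intro x hx
      have h2 := (horddvd k).mp hdvd x hx
      have h3 : (m : ℤ) ∣ ((k * x.val : ℕ) : ℤ) := by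
        obtain ⟨u, hu⟩ := h2
        exact ⟨u, by push_cast; linarith⟩
      exact_mod_cast h3
    have h2 : m ∣ k * T.gcd ZMod.val := aux_dvd_mul_gcd T ZMod.val m k h1
    have h3 : m ∣ k * G := aux2 h2 (dvd_mul_left m k)
    have h4 : (m / G) * G ∣ k * G := by rw [Nat.div_mul_cancel hGm]; exact h3
    exact (Nat.mul_dvd_mul_iff_right hG0).mp h4
  have hordeq : polyOrder f = m / G := by
    apply le_antisymm
    · exact Nat.sInf_le ⟨hGS.1, hGS.2⟩
    · have hmem2 := Nat.sInf_mem (⟨m / G, hGS.1, hGS.2⟩ :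
        Set.Nonempty {k | 0 < k ∧ f ∣ X ^ k - 1})
      exact Nat.le_of_dvd hmem2.1 (hGlb _ hmem2.1 hmem2.2)
  have hG1 : G = 1 := by
    rw [hord] at hordeq
    have h5 : m * G = m * 1 := by
      conv_lhs => rw [hordeq]
      rw [Nat.div_mul_cancel hGm, mul_one]
    exact Nat.eq_of_mul_eq_mul_left hm h5
  -- membership facts
  have hmemT : ∀ x ∈ T, ∃ i < t, ∃ j : ℕ, x = ((γ i * (q : ℤ) ^ j : ℤ) : ZMod m) := by
    intro x hx
    rw [hTdec, Finset.mem_biUnion] at hx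
    obtain ⟨i, hi, hxi⟩ := hx
    obtain ⟨j, hj, hxj⟩ := Finset.mem_image.mp hxi
    exact ⟨i, Finset.mem_range.mp hi, j, hxj.symm⟩
  have hbase : ∀ i < t, ((γ i : ℤ) : ZMod m) ∈ T := by
    intro i hi
    rw [hTdec, Finset.mem_biUnion]
    exact ⟨i, Finset.mem_range.mpr hi, mem_cyclCoset_self q m hm (γ i)⟩
  -- facts about d
  have hdm : d ∣ m := by
    rw [hd]; exact (Nat.gcd_dvd_right _ _).trans (Nat.gcd_dvd_left _ _)
  have hdq1 : d ∣ q - 1 := by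
    rw [hd]; exact (Nat.gcd_dvd_right _ _).trans (Nat.gcd_dvd_right _ _)
  have hd0 : 0 < d := by
    rw [hd]
    exact Nat.gcd_pos_of_pos_right _ (Nat.gcd_pos_of_pos_left _ hm)
  have hn0pos : 0 < m / d := Nat.div_pos (Nat.le_of_dvd hm hdm) hd0
  have hdgd : (d : ℤ) ∣ (Finset.range (t - 1)).gcd (fun i => γ (i + 1) - γ i) := by
    have h1 : (d : ℤ) ∣ ((((Finset.range (t - 1)).gcd fun i => γ (i + 1) - γ i).natAbs : ℕ) : ℤ) :=
      Int.natCast_dvd_natCast.mpr (hd ▸ Nat.gcd_dvd_left _ _)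
    exact h1.trans (Int.natAbs_dvd.mpr dvd_rfl)
  have hqc : ((q - 1 : ℕ) : ℤ) = (q : ℤ) - 1 := by
    rw [Nat.cast_sub hq2.le]; push_cast; ring
  -- Part A : sufficiency
  have hA : ∀ n : ℕ, (m / d) ∣ n →
      ∃ c : F, φ c = ζ ^ (γ 0 * (n : ℤ)) ∧ c ≠ 0 ∧ f ∣ X ^ n - C c := by
    intro n hn
    obtain ⟨e, rfl⟩ := hn
    have hmd : (m : ℤ) = ((m / d : ℕ) : ℤ) * d := by
      exact_mod_cast (Nat.div_mul_cancel hdm).symm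
    have F1 : (m : ℤ) ∣ ((m / d * e : ℕ) : ℤ) * ((q : ℤ) - 1) := by
      obtain ⟨w, hw⟩ := hdq1
      have hqw : (q : ℤ) - 1 = (d : ℤ) * w := by rw [← hqc, hw]; push_cast; ring
      refine ⟨(e : ℤ) * w, ?_⟩
      rw [hqw, hmd]; push_cast; ring
    have F2 : ∀ i, i < t - 1 → (m : ℤ) ∣ ((m / d * e : ℕ) : ℤ) * (γ (i + 1) - γ i) := by
      intro i hi
      obtain ⟨w, hw⟩ := hdgd.trans (Finset.gcd_dvd (Finset.mem_range.mpr hi))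
      refine ⟨(e : ℤ) * w, ?_⟩
      rw [hw, hmd]; push_cast; ring
    have F3 : ∀ i, i < t → (m : ℤ) ∣ ((m / d * e : ℕ) : ℤ) * (γ i - γ 0) := by
      intro i hi
      induction i with
      | zero => simp
      | succ i ih =>
        have h1 := F2 i (by omega)
        have h2 := ih (by omega)
        have h3 : ((m / d * e : ℕ) : ℤ) * (γ (i + 1) - γ 0) =
            ((m / d * e : ℕ) : ℤ) * (γ (i + 1) - γ i) +
            ((m / d * e : ℕ) : ℤ) * (γ i - γ 0) := by ring
        rw [h3]; exact dvd_add h1 h2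
    have F4 : ∀ x ∈ T, (m : ℤ) ∣ ((m / d * e : ℕ) : ℤ) * ((x.val : ℤ) - γ 0) := by
      intro x hx
      obtain ⟨i, hi, j, hxj⟩ := hmemT x hx
      have h1 : (m : ℤ) ∣ ((x.val : ℤ) - γ i * (q : ℤ) ^ j) := hval x _ hxj
      have h2 : (m : ℤ) ∣ ((m / d * e : ℕ) : ℤ) * (γ i * ((q : ℤ) ^ j - 1)) := by
        obtain ⟨s, hs⟩ := sub_dvd_pow_sub_pow (q : ℤ) 1 j
        obtain ⟨u, hu⟩ := F1
        refine ⟨u * (γ i * s), ?_⟩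
        have h5 : (q : ℤ) ^ j - 1 = ((q : ℤ) - 1) * s := by simpa using hs
        rw [h5]
        linear_combination (γ i * s) * hu
      have h4 := F3 i hi
      have h6 : ((m / d * e : ℕ) : ℤ) * ((x.val : ℤ) - γ 0) =
          ((m / d * e : ℕ) : ℤ) * ((x.val : ℤ) - γ i * (q : ℤ) ^ j) +
          (((m / d * e : ℕ) : ℤ) * (γ i * ((q : ℤ) ^ j - 1)) +
           ((m / d * e : ℕ) : ℤ) * (γ i - γ 0)) := by ring
      rw [h6]
      exact dvd_add (h1.mul_left _) (dvd_add h2 h4)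
    set L := ζ ^ (γ 0 * ((m / d * e : ℕ) : ℤ)) with hL
    have hL1 : L ^ (q - 1) = 1 := by
      rw [hL, ← zpow_natCast (ζ ^ (γ 0 * ((m / d * e : ℕ) : ℤ))) (q - 1), ← zpow_mul,
        show (1 : AlgebraicClosure F) = ζ ^ (0 : ℤ) from (zpow_zero ζ).symm, hzeq, sub_zero]
      obtain ⟨u, hu⟩ := F1
      refine ⟨γ 0 * u, ?_⟩
      rw [hqc]
      linear_combination γ 0 * hu
    have hLq : L ^ q = L := by
      have hq1 : q = (q - 1) + 1 := by omega
      rw [hq1, pow_succ, hL1, one_mul]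
    obtain ⟨c, hc⟩ := aux_fixed φ hq hLq
    have hc0 : c ≠ 0 := by
      intro h; rw [h, map_zero] at hc
      exact (zpow_ne_zero _ hζ0) hc.symm
    refine ⟨c, hc, hc0, ?_⟩
    rw [keyF]
    intro x hx
    rw [hc, hL, hzeq]
    obtain ⟨u, hu⟩ := F4 x hx
    exact ⟨u, by linear_combination hu⟩
  -- Part B : necessity
  have hB : ∀ (n : ℕ) (l : F), l ≠ 0 → f ∣ X ^ n - C l → (m / d) ∣ n := by
    intro n l hl hfd
    have hcond := (keyF n l).mp hfd
    have hstep1 : ∀ x ∈ T, m ∣ n * (q - 1) * x.val := by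
      intro x hx
      have h1 : (φ l) ^ (q - 1) = 1 := by
        rw [← map_pow]
        have := FiniteField.pow_card_sub_one_eq_one l hl
        rw [hq] at this
        rw [this, map_one]
      have h2 : ζ ^ (((x.val : ℤ) * n) * ((q - 1 : ℕ) : ℤ)) = 1 := by
        rw [zpow_mul, hcond x hx, zpow_natCast, h1]
      rw [show (1 : AlgebraicClosure F) = ζ ^ (0 : ℤ) from (zpow_zero ζ).symm, hzeq,
        sub_zero] at h2
      have h3 : (m : ℤ) ∣ ((n * (q - 1) * x.val : ℕ) : ℤ) := by
        obtain ⟨u, hu⟩ := h2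
        refine ⟨u, ?_⟩
        push_cast
        linear_combination hu
      exact_mod_cast h3
    have hstep2 : m ∣ n * (q - 1) * T.gcd ZMod.val :=
      aux_dvd_mul_gcd T ZMod.val m (n * (q - 1)) hstep1
    have hstep3 : m ∣ n * (q - 1) * G := aux2 hstep2 (dvd_mul_left m (n * (q - 1)))
    have hstep4 : m ∣ n * (q - 1) := by rwa [hG1, mul_one] at hstep3
    have hstep5 : ∀ i ∈ Finset.range (t - 1), (m : ℤ) ∣ (n : ℤ) * (γ (i + 1) - γ i) := by
      intro i hi
      rw [Finset.mem_range] at hi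
      have hi1 : i < t := by omega
      have hi2 : i + 1 < t := by omega
      have e1 := hcond _ (hbase (i + 1) hi2)
      have e2 := hcond _ (hbase i hi1)
      have e3 : ζ ^ (((((γ (i + 1) : ℤ) : ZMod m)).val : ℤ) * n) =
          ζ ^ (((((γ i : ℤ) : ZMod m)).val : ℤ) * n) := by rw [e1, e2]
      rw [hzeq] at e3
      have e4 := hval ((γ (i + 1) : ℤ) : ZMod m) (γ (i + 1)) rfl
      have e5 := hval ((γ i : ℤ) : ZMod m) (γ i) rfl
      obtain ⟨u1, hu1⟩ := e3
      obtain ⟨u2, hu2⟩ := e4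
      obtain ⟨u3, hu3⟩ := e5
      exact ⟨u1 - n * u2 + n * u3, by linear_combination hu1 - (n : ℤ) * hu2 + (n : ℤ) * hu3⟩
    have hstep6 : (m : ℤ) ∣ (n : ℤ) * (Finset.range (t - 1)).gcd (fun i => γ (i + 1) - γ i) :=
      aux_dvd_mul_gcd _ _ _ _ hstep5
    have hstep7 : m ∣ n * ((Finset.range (t - 1)).gcd (fun i => γ (i + 1) - γ i)).natAbs := by
      have h1 := Int.natAbs_dvd_natAbs.mpr hstep6
      rwa [Int.natAbs_mul, Int.natAbs_natCast, Int.natAbs_natCast] at h1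
    have hstep8 : m ∣ n * Nat.gcd m (q - 1) := aux2 (dvd_mul_left m n) hstep4
    have hstep9 : m ∣ n * d := by rw [hd]; exact aux2 hstep7 hstep8
    have h10 : (m / d) * d ∣ n * d := by rw [Nat.div_mul_cancel hdm]; exact hstep9
    exact (Nat.mul_dvd_mul_iff_right hd0).mp h10
  -- assembly
  obtain ⟨c, hc1, hc2, hc3⟩ := hA (m / d) dvd_rfl
  constructor
  · have hmem : (m / d) ∈ {n | 0 < n ∧ ∃ l : F, l ≠ 0 ∧ f ∣ X ^ n - C l} :=
      ⟨hn0pos, c, hc2, hc3⟩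
    apply le_antisymm (Nat.sInf_le hmem)
    have hmem2 := Nat.sInf_mem (Set.nonempty_of_mem hmem)
    obtain ⟨hpos, l, hl, hdl⟩ := hmem2
    exact Nat.le_of_dvd hpos (hB _ l hl hdl)
  · refine ⟨c, hc1, ⟨m / d, c, hn0pos, hc2, rfl⟩, hc3, ?_⟩
    rintro h ⟨k, l, hk, hl, rfl⟩ hdvd
    rw [natDegree_X_pow_sub_C, natDegree_X_pow_sub_C]
    exact Nat.le_of_dvd hk (hB k l hl hdvd)
end

section
/- Let f(X) be a squarefree polynomial over F_q of order m with defining set T_f = ⊔_{i=1}^t c_{m/q}(γ_i), d_i = γ_{i+1} − γ_i, and d_f = gcd(d₁, ..., d_{t−1}, m, q−1). Then the following are equivalent: (1) f(X) is free of binomials; (2) d_f = 1; (3) the minimal equal-difference subset of Z/mZ defined over F_q containing T_f is all of Z/mZ. -/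
open Polynomial

section Helpers

theorem keyRange {F : Type*} [Field F] [Fintype F] (μ : AlgebraicClosure F)
    (hμ : μ ^ (Fintype.card F) = μ) : ∃ c : F, algebraMap F (AlgebraicClosure F) c = μ := by
  classical
  set q := Fintype.card F with hq
  set φ := algebraMap F (AlgebraicClosure F) with hφ
  have hq2 : 1 < q := Fintype.one_lt_card
  by_contra hcon
  push_neg at hcon
  set P : (AlgebraicClosure F)[X] := X ^ q - X with hP
  have hPne : P ≠ 0 := FiniteField.X_pow_card_sub_X_ne_zero (AlgebraicClosure F) hq2
  have hdeg : P.natDegree = q := FiniteField.X_pow_card_sub_X_natDegree_eq (AlgebraicClosure F) hq2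
  set s : Finset (AlgebraicClosure F) := Finset.univ.image φ with hs
  have hcard : s.card = q := by
    rw [hs, Finset.card_image_of_injective _ (φ.injective), Finset.card_univ, hq]
  have hμs : μ ∉ s := by
    simp only [hs, Finset.mem_image]
    rintro ⟨c, -, hc⟩
    exact hcon c hc
  have hsub : insert μ s ⊆ P.roots.toFinset := by
    intro y hy
    rw [Multiset.mem_toFinset, mem_roots hPne]
    rcases Finset.mem_insert.mp hy with h | h
    · rw [h]
      simp [hP, IsRoot, hμ]
    · rw [hs, Finset.mem_image] at h
      obtain ⟨c, -, hc⟩ := h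
      rw [← hc]
      simp only [hP, IsRoot, eval_sub, eval_pow, eval_X]
      rw [← map_pow, FiniteField.pow_card, sub_self]
  have h1 : (insert μ s).card ≤ P.roots.toFinset.card := Finset.card_le_card hsub
  rw [Finset.card_insert_of_notMem hμs, hcard] at h1
  have h2 : P.roots.toFinset.card ≤ Multiset.card P.roots := Multiset.toFinset_card_le _
  have h3 : Multiset.card P.roots ≤ q := hdeg ▸ P.card_roots'
  omega

theorem keyDvd {F : Type*} [Field F] {m : ℕ} (hm : 0 < m)
    {ζ : AlgebraicClosure F} (hζ : IsPrimitiveRoot ζ m)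
    {f : F[X]} {T : Finset (ZMod m)} {a : F} (ha : a ≠ 0)
    (hT : f.map (algebraMap F (AlgebraicClosure F)) =
      C ((algebraMap F (AlgebraicClosure F)) a) * ∏ x ∈ T, (X - C (ζ ^ x.val)))
    {k : ℕ} (hk : 0 < k) (lam : F) :
    f ∣ X ^ k - C lam ↔
      ∀ x ∈ T, ζ ^ (k * x.val) = algebraMap F (AlgebraicClosure F) lam := by
  classical
  haveI : NeZero m := ⟨hm.ne'⟩
  set φ := algebraMap F (AlgebraicClosure F) with hφ
  have hmap : (X ^ k - C lam : F[X]).map φ = X ^ k - C (φ lam) := by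
    simp [Polynomial.map_sub, Polynomial.map_pow]
  constructor
  · intro hdvd x hx
    have h1 : (f.map φ) ∣ (X ^ k - C (φ lam)) := by
      rw [← hmap]; exact Polynomial.map_dvd φ hdvd
    have hroot : (f.map φ).eval (ζ ^ x.val) = 0 := by
      rw [hT]
      rw [eval_mul]
      have : ((∏ y ∈ T, (X - C (ζ ^ y.val))).eval (ζ ^ x.val)) = 0 := by
        rw [eval_prod]
        exact Finset.prod_eq_zero hx (by simp)
      rw [this, mul_zero]
    have := eval_eq_zero_of_dvd_of_eval_eq_zero h1 hroot
    simp only [eval_sub, eval_pow, eval_X] at this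
    rw [← pow_mul, mul_comm x.val k] at this
    rw [eval_C] at this
    exact sub_eq_zero.mp this
  · intro h
    rw [← Polynomial.map_dvd_map' φ, hmap, hT]
    have hunit : IsUnit (C (φ a)) := by
      refine isUnit_C.mpr (isUnit_iff_ne_zero.mpr ?_)
      simpa using ha
    rw [hunit.mul_left_dvd]
    set g : (AlgebraicClosure F)[X] := X ^ k - C (φ lam) with hg
    have hgne : g ≠ 0 := by
      intro h0
      have : g.natDegree = k := natDegree_X_pow_sub_C
      rw [h0] at this
      simp at this
      omega
    have hinj : ∀ x ∈ T, ∀ y ∈ T, ζ ^ x.val = ζ ^ y.val → x = y := by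
      intro x _ y _ hxy
      have := hζ.pow_inj (ZMod.val_lt x) (ZMod.val_lt y) hxy
      exact ZMod.val_injective m this
    have hnodup : (T.val.map (fun x : ZMod m => ζ ^ x.val)).Nodup :=
      Multiset.Nodup.map_on (fun x hx y hy => hinj x hx y hy) T.nodup
    have hle : (T.val.map (fun x : ZMod m => ζ ^ x.val)) ≤ g.roots := by
      rw [Multiset.le_iff_count]
      intro c
      by_cases hc : c ∈ T.val.map (fun x : ZMod m => ζ ^ x.val)
      · have h1 : Multiset.count c (T.val.map (fun x : ZMod m => ζ ^ x.val)) = 1 :=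
          Multiset.count_eq_one_of_mem hnodup hc
        rw [h1]
        rw [count_roots]
        obtain ⟨x, hx, rfl⟩ := Multiset.mem_map.mp hc
        rw [Nat.one_le_iff_ne_zero]
        have hroot : g.IsRoot (ζ ^ x.val) := by
          simp only [hg, IsRoot, eval_sub, eval_pow, eval_X]
          rw [← pow_mul, mul_comm x.val k, h x hx, eval_C, sub_self]
        exact ((rootMultiplicity_pos hgne).mpr hroot).ne'
      · rw [Multiset.count_eq_zero_of_notMem hc]
        exact Nat.zero_le _
    calc ∏ x ∈ T, (X - C (ζ ^ x.val))
        = ((T.val.map (fun x : ZMod m => ζ ^ x.val)).map (fun c => X - C c)).prod := by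
          rw [Multiset.map_map]; rfl
      _ ∣ (g.roots.map (fun c => X - C c)).prod :=
          Multiset.prod_dvd_prod_of_le (Multiset.map_le_map hle)
      _ ∣ g := g.prod_multiset_X_sub_C_dvd

theorem keyCoprime {F : Type*} [Field F] {m : ℕ} (hm : 0 < m)
    {ζ : AlgebraicClosure F} (hζ : IsPrimitiveRoot ζ m)
    {f : F[X]} {T : Finset (ZMod m)} {a : F} (ha : a ≠ 0)
    (hT : f.map (algebraMap F (AlgebraicClosure F)) =
      C ((algebraMap F (AlgebraicClosure F)) a) * ∏ x ∈ T, (X - C (ζ ^ x.val)))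
    (hord : polyOrder f = m) :
    Nat.Coprime m (T.gcd (fun x => x.val)) := by
  classical
  set G := Nat.gcd m (T.gcd (fun x => x.val)) with hG
  have hGm : G ∣ m := Nat.gcd_dvd_left _ _
  have hGpos : 0 < G := Nat.gcd_pos_of_pos_left _ hm
  have hkpos : 0 < m / G := Nat.div_pos (Nat.le_of_dvd hm hGm) hGpos
  have hdvd : f ∣ X ^ (m / G) - C (1 : F) := by
    rw [keyDvd hm hζ ha hT hkpos]
    intro x hx
    rw [map_one]
    have h1 : G ∣ x.val := (Nat.gcd_dvd_right _ _).trans (Finset.gcd_dvd hx)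
    obtain ⟨c, hc⟩ := h1
    rw [hζ.pow_eq_one_iff_dvd, hc, ← mul_assoc, Nat.div_mul_cancel hGm]
    exact Dvd.intro c rfl
  have hle : polyOrder f ≤ m / G := by
    apply Nat.sInf_le
    refine ⟨hkpos, ?_⟩
    rwa [map_one] at hdvd
  rw [hord] at hle
  have : m / G = m := le_antisymm (Nat.div_le_self _ _) hle
  have hG1 : G = 1 := by
    have h2 := Nat.div_div_self hGm hm.ne'
    rw [this, Nat.div_self hm] at h2
    exact h2.symm
  exact hG1

theorem keyQCoprime {F : Type*} [Field F] [Fintype F] {q m : ℕ}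
    (hq : Fintype.card F = q) (hm : 0 < m)
    {ζ : AlgebraicClosure F} (hζ : IsPrimitiveRoot ζ m) :
    Nat.Coprime q m := by
  set p := ringChar F with hp
  haveI : CharP F p := ringChar.charP F
  obtain ⟨n, hpprime, hcard⟩ := FiniteField.card F p
  haveI : Fact p.Prime := ⟨hpprime⟩
  haveI : CharP (AlgebraicClosure F) p :=
    charP_of_injective_algebraMap (algebraMap F (AlgebraicClosure F)).injective p
  by_contra hco
  obtain ⟨r, hrprime, hrq, hrm⟩ := Nat.Prime.not_coprime_iff_dvd.mp hco
  have hrp : r = p := by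
    rw [← hq, hcard] at hrq
    exact (Nat.prime_dvd_prime_iff_eq hrprime hpprime).mp (hrprime.dvd_of_dvd_pow hrq)
  subst hrp
  have h1 : (ζ ^ (m / p)) ^ p = 1 := by
    rw [← pow_mul, Nat.div_mul_cancel hrm, hζ.pow_eq_one]
  have h2 : ζ ^ (m / p) = 1 := by
    have := frobenius_inj (AlgebraicClosure F) p
    apply this
    rw [frobenius_def, frobenius_def, h1, one_pow]
  have h3 : m ∣ m / p := hζ.pow_eq_one_iff_dvd _ |>.mp h2
  have h4 : m / p < m := Nat.div_lt_self hm hrprime.one_lt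
  have h5 : 0 < m / p := Nat.div_pos (Nat.le_of_dvd hm hrm) hrprime.pos
  have h6 : m ≤ m / p := Nat.le_of_dvd h5 h3
  omega

theorem cyclCoset_mul_q {q m : ℕ} (hm : 0 < m) (hco : Nat.Coprime q m) (γ : ℤ)
    {x : ZMod m} (hx : x ∈ cyclCoset q m γ) : (q : ZMod m) * x ∈ cyclCoset q m γ := by
  classical
  haveI : NeZero m := ⟨hm.ne'⟩
  obtain ⟨j, hj, rfl⟩ := Finset.mem_image.mp hx
  set u : (ZMod m)ˣ := ZMod.unitOfCoprime q hco with hu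
  have hucoe : (u : ZMod m) = (q : ZMod m) := rfl
  set e := orderOf u with he
  have hepos : 0 < e := orderOf_pos u
  have hem : e ≤ m := by
    have h1 : e ≤ Fintype.card (ZMod m)ˣ := orderOf_le_card_univ
    have h2 : Fintype.card (ZMod m)ˣ = Nat.totient m := ZMod.card_units_eq_totient m
    have h3 : Nat.totient m ≤ m := Nat.totient_le m
    omega
  refine Finset.mem_image.mpr ⟨(j + 1) % e, Finset.mem_range.mpr (by
    have := Nat.mod_lt (j+1) hepos; omega), ?_⟩
  have hpow : (u : ZMod m) ^ ((j + 1) % e) = (u : ZMod m) ^ (j + 1) := by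
    have := pow_mod_orderOf (x := u) (n := j + 1)
    rw [← he] at this
    calc ((u : ZMod m)) ^ ((j+1) % e) = ((u ^ ((j+1) % e) : (ZMod m)ˣ) : ZMod m) := by
          rw [Units.val_pow_eq_pow_val]
      _ = ((u ^ (j+1) : (ZMod m)ˣ) : ZMod m) := by rw [this]
      _ = (u : ZMod m) ^ (j+1) := by rw [Units.val_pow_eq_pow_val]
  push_cast
  rw [hucoe] at hpow
  rw [hpow]
  ring

theorem teleD (γ : ℕ → ℤ) (t : ℕ) (D : ℤ) (hD : ∀ j, j + 1 < t → D ∣ (γ (j+1) - γ j)) :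
    ∀ i, i < t → D ∣ (γ i - γ 0) := by
  intro i
  induction i with
  | zero => intro _; simp
  | succ n ih =>
    intro h
    have h1 := hD n h
    have h2 := ih (by omega)
    have h3 : γ (n+1) - γ 0 = (γ (n+1) - γ n) + (γ n - γ 0) := by ring
    rw [h3]
    exact dvd_add h1 h2

end Helpers

/-- For squarefree `f` of order `m` with defining set `T = ⊔ᵢ c_{m/q}(γᵢ)` and
`d_f = gcd(γ₂−γ₁, ..., γ_t−γ_{t−1}, m, q−1)`, the following are equivalent:
(1) `f` is free of binomials; (2) `d_f = 1`; (3) the only equal-difference subset of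
`ℤ/mℤ` defined over `F_q` containing `T` is all of `ℤ/mℤ`. -/
theorem stmt_15 {F : Type*} [Field F] [Fintype F] (q : ℕ) (hq : Fintype.card F = q)
    (f : F[X]) (hsq : Squarefree f) (hdeg : 0 < f.natDegree) (h0 : f.coeff 0 ≠ 0)
    (m : ℕ) (hm : 0 < m) (hord : polyOrder f = m)
    (ζ : AlgebraicClosure F) (hζ : IsPrimitiveRoot ζ m)
    (t : ℕ) (ht : 0 < t) (γ : ℕ → ℤ)
    (T : Finset (ZMod m)) (a : F) (ha : a ≠ 0)
    (hT : f.map (algebraMap F (AlgebraicClosure F)) =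
      C ((algebraMap F (AlgebraicClosure F)) a) * ∏ x ∈ T, (X - C (ζ ^ x.val)))
    (hTdec : T = (Finset.range t).biUnion (fun i => cyclCoset q m (γ i)))
    (hdisj : ∀ i < t, ∀ j < t, i ≠ j → Disjoint (cyclCoset q m (γ i)) (cyclCoset q m (γ j)))
    (d : ℕ)
    (hd : d = Nat.gcd ((Finset.range (t - 1)).gcd (fun i => γ (i + 1) - γ i)).natAbs
        (Nat.gcd m (q - 1))) :
    (FreeOfBinomials f ↔ d = 1) ∧
    (FreeOfBinomials f ↔
      ∀ (d' : ℕ) (E : Finset (ZMod m)), IsEqDiffOver q m d' E → T ⊆ E →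
        ∀ x : ZMod m, x ∈ E) := by
  classical
  haveI : NeZero m := ⟨hm.ne'⟩
  have hq2 : 1 < q := hq ▸ Fintype.one_lt_card
  have hco : Nat.Coprime q m := keyQCoprime hq hm hζ
  have hg0 : Nat.Coprime m (T.gcd (fun x => x.val)) := keyCoprime hm hζ ha hT hord
  have horderζ : orderOf ζ = m := hζ.eq_orderOf.symm
  have hvalN : ∀ z : ZMod m, (((z.val : ℕ)) : ZMod m) = z := fun z =>
    ZMod.natCast_rightInverse z
  have hvalId : ∀ z : ZMod m, (((z.val : ℤ)) : ZMod m) = z := by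
    intro z
    exact_mod_cast ZMod.natCast_rightInverse z
  have hcast : ∀ (z : ZMod m) (n : ℤ), ((n : ZMod m) = z) → ((z.val : ℤ) ≡ n [ZMOD m]) := by
    intro z n h
    rw [← ZMod.intCast_eq_intCast_iff, hvalId, h]
  have hclos : ∀ x ∈ T, (q : ZMod m) * x ∈ T := by
    intro x hx
    rw [hTdec] at hx ⊢
    obtain ⟨i, hi, hx⟩ := Finset.mem_biUnion.mp hx
    exact Finset.mem_biUnion.mpr ⟨i, hi, cyclCoset_mul_q hm hco _ hx⟩
  have hγT : ∀ i, i < t → ((γ i : ℤ) : ZMod m) ∈ T := by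
    intro i hi
    rw [hTdec]
    refine Finset.mem_biUnion.mpr ⟨i, Finset.mem_range.mpr hi, ?_⟩
    exact Finset.mem_image.mpr ⟨0, Finset.mem_range.mpr hm, by simp⟩
  have hζne : ζ ≠ 0 := by
    intro h
    have h1 : ζ ^ m = 1 := hζ.pow_eq_one
    rw [h, zero_pow hm.ne'] at h1
    exact zero_ne_one h1
  have hpowinj : ∀ a b : ℕ, ζ ^ a = ζ ^ b → a ≡ b [MOD m] := by
    have key : ∀ a b : ℕ, b ≤ a → ζ ^ a = ζ ^ b → a ≡ b [MOD m] := by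
      intro a b h hab
      have hz : ζ ^ b ≠ 0 := pow_ne_zero _ hζne
      have h1 : ζ ^ (a - b) * ζ ^ b = 1 * ζ ^ b := by
        rw [← pow_add, Nat.sub_add_cancel h, hab, one_mul]
      have h2 : ζ ^ (a - b) = 1 := mul_right_cancel₀ hz h1
      have h3 : m ∣ a - b := (hζ.pow_eq_one_iff_dvd _).mp h2
      exact ((Nat.modEq_iff_dvd' h).mpr h3).symm
    intro a b hab
    rcases le_total b a with h | h
    · exact key a b h hab
    · exact (key b a h hab.symm).symm
  have hmemT : ∀ x ∈ T, ∃ i, i < t ∧ ∃ j : ℕ, ((γ i * (q:ℤ) ^ j : ℤ) : ZMod m) = x := by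
    intro x hx
    rw [hTdec] at hx
    obtain ⟨i, hi, hx⟩ := Finset.mem_biUnion.mp hx
    obtain ⟨j, _, hj⟩ := Finset.mem_image.mp hx
    exact ⟨i, Finset.mem_range.mp hi, j, hj⟩
  -- arithmetic facts about d
  set A : ℤ := (Finset.range (t - 1)).gcd (fun i => γ (i + 1) - γ i) with hA
  have hdm : d ∣ m := hd ▸ (Nat.gcd_dvd_right _ _).trans (Nat.gcd_dvd_left m (q-1))
  have hdq1 : d ∣ q - 1 := hd ▸ (Nat.gcd_dvd_right _ _).trans (Nat.gcd_dvd_right m (q-1))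
  have hdpos : 0 < d := by
    rw [hd]
    exact Nat.gcd_pos_of_pos_right _ (Nat.gcd_pos_of_pos_left _ hm)
  have hdΔ : ∀ j, j < t - 1 → (d:ℤ) ∣ (γ (j+1) - γ j) := by
    intro j hj
    have h1 : (d:ℤ) ∣ ((A.natAbs : ℕ) : ℤ) :=
      Int.natCast_dvd_natCast.mpr (hd ▸ Nat.gcd_dvd_left _ _)
    have h2 : ((A.natAbs : ℕ) : ℤ) ∣ A := Int.natAbs_dvd.mpr dvd_rfl
    exact (h1.trans h2).trans (Finset.gcd_dvd (Finset.mem_range.mpr hj))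
  set n0 : ℕ := ((γ 0) % (m:ℤ)).toNat with hn0def
  have hn0 : (n0 : ℤ) = (γ 0) % (m:ℤ) :=
    Int.toNat_of_nonneg (Int.emod_nonneg _ (by exact_mod_cast hm.ne'))
  have hdq1' : (d:ℤ) ∣ (q:ℤ) - 1 := by
    have h1 := Int.natCast_dvd_natCast.mpr hdq1
    rwa [Nat.cast_sub hq2.le] at h1
  have hdiff : ∀ i, i < t → ∀ j : ℕ, (d:ℤ) ∣ (γ i * (q:ℤ)^j - (n0:ℤ)) := by
    intro i hi j
    have h1 : (d:ℤ) ∣ γ i * ((q:ℤ)^j - 1) := by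
      refine Dvd.dvd.mul_left ?_ _
      have h0 := sub_dvd_pow_sub_pow (q:ℤ) 1 j
      rw [one_pow] at h0
      exact hdq1'.trans h0
    have h2 : (d:ℤ) ∣ γ i - γ 0 :=
      teleD γ t (d:ℤ) (fun j hj => hdΔ j (by omega)) i hi
    have h3 : (d:ℤ) ∣ (γ 0 - (n0:ℤ)) := by
      have he : (γ 0 : ℤ) - (n0:ℤ) = (m:ℤ) * ((γ 0) / (m:ℤ)) := by
        rw [hn0, Int.emod_def]
        ring
      rw [he]
      exact Dvd.dvd.mul_right (Int.natCast_dvd_natCast.mpr hdm) _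
    have he : γ i * (q:ℤ)^j - (n0:ℤ) =
        γ i * ((q:ℤ)^j - 1) + (γ i - γ 0) + (γ 0 - (n0:ℤ)) := by ring
    rw [he]
    exact dvd_add (dvd_add h1 h2) h3
  -- the three main implications
  have main1 : d = 1 → FreeOfBinomials f := by
    intro hd1
    intro k lam hk hklt hlam hdvd
    rw [hord] at hklt
    have hall := (keyDvd hm hζ ha hT hk lam).mp hdvd
    have hpair : ∀ x ∈ T, ∀ y ∈ T, ((k * x.val : ℕ) : ℤ) ≡ ((k * y.val : ℕ) : ℤ) [ZMOD m] := by
      intro x hx y hy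
      have h1 : ζ ^ (k * x.val) = ζ ^ (k * y.val) := by rw [hall x hx, hall y hy]
      have h2 : k * x.val ≡ k * y.val [MOD m] := hpowinj _ _ h1
      exact Int.natCast_modEq_iff.mpr h2
    -- divisibility of differences
    have hΔ : ∀ j, j < t - 1 → (m:ℤ) ∣ (k:ℤ) * (γ (j+1) - γ j) := by
      intro j hj
      have hj1 : j + 1 < t := by omega
      have hjt : j < t := by omega
      set x : ZMod m := ((γ j : ℤ) : ZMod m) with hx
      set y : ZMod m := ((γ (j+1) : ℤ) : ZMod m) with hy
      have e1 : ((k * x.val : ℕ) : ℤ) ≡ (k:ℤ) * γ j [ZMOD m] := by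
        push_cast
        exact (hcast x _ rfl).mul_left _
      have e2 : ((k * y.val : ℕ) : ℤ) ≡ (k:ℤ) * γ (j+1) [ZMOD m] := by
        push_cast
        exact (hcast y _ rfl).mul_left _
      have e3 := (e2.symm.trans (hpair y (hγT _ hj1) x (hγT _ hjt))).trans e1
      have := Int.ModEq.dvd e3
      have heq : (k:ℤ) * γ j - (k:ℤ) * γ (j+1) = -((k:ℤ) * (γ (j+1) - γ j)) := by ring
      rw [heq] at this
      exact (dvd_neg.mp this)
    -- m ∣ k * (q-1)
    have hq1x : ∀ x ∈ T, m ∣ (k * (q - 1)) * x.val := by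
      intro x hx
      have hqx := hclos x hx
      have e1 : ((k * ((q : ZMod m) * x).val : ℕ) : ℤ) ≡
          (k:ℤ) * ((q:ℤ) * (x.val:ℤ)) [ZMOD m] := by
        push_cast
        exact Int.ModEq.mul_left _
          (hcast ((q : ZMod m) * x) ((q : ℤ) * (x.val : ℤ)) (by push_cast [hvalId]; ring))
      have e2 : ((k * x.val : ℕ) : ℤ) ≡ (k:ℤ) * (x.val:ℤ) [ZMOD m] := by push_cast; rfl
      have e3 := (e1.symm.trans (hpair _ hqx x hx)).trans e2
      have hdv := Int.ModEq.dvd e3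
      have : (m:ℤ) ∣ (((k * (q-1)) * x.val : ℕ) : ℤ) := by
        have heq : (((k * (q-1)) * x.val : ℕ) : ℤ) =
            -((k:ℤ) * (x.val:ℤ) - (k:ℤ) * ((q:ℤ) * (x.val:ℤ))) := by
          push_cast [Nat.cast_sub hq2.le]
          ring
        rw [heq]
        exact dvd_neg.mpr hdv
      exact_mod_cast this
    have hkq1 : m ∣ k * (q - 1) := by
      have h1 : m ∣ T.gcd (fun x => (k * (q - 1)) * x.val) :=
        Finset.dvd_gcd (fun x hx => hq1x x hx)
      rw [Finset.gcd_mul_left] at h1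
      have hnorm : normalize (k * (q-1)) = k * (q-1) := normalize_eq _
      rw [hnorm] at h1
      exact hg0.dvd_of_dvd_mul_right h1
    -- assemble: m ∣ k * d
    have hkA : m ∣ k * A.natAbs := by
      have h1 : (m:ℤ) ∣ (Finset.range (t-1)).gcd (fun j => (k:ℤ) * (γ (j+1) - γ j)) :=
        Finset.dvd_gcd (fun j hj => hΔ j (Finset.mem_range.mp hj))
      rw [Finset.gcd_mul_left] at h1
      have hnorm : normalize ((k:ℕ):ℤ) = ((k:ℕ):ℤ) := by
        rw [Int.normalize_of_nonneg (by positivity)]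
      rw [hnorm, ← hA] at h1
      have h2 := Int.natAbs_dvd_natAbs.mpr h1
      simpa [Int.natAbs_mul] using h2
    have hkd : m ∣ k * d := by
      rw [hd, ← Nat.gcd_mul_left, ← Nat.gcd_mul_left]
      exact Nat.dvd_gcd hkA (Nat.dvd_gcd (dvd_mul_left m k) hkq1)
    rw [hd1, mul_one] at hkd
    have := Nat.le_of_dvd hk hkd
    omega
  have main2 : FreeOfBinomials f → d = 1 := by
    intro hfree
    by_contra hd1
    have hd2 : 1 < d := by omega
    set k := m / d with hkdef
    have hkd : k * d = m := Nat.div_mul_cancel hdm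
    have hkpos : 0 < k := Nat.div_pos (Nat.le_of_dvd hm hdm) hdpos
    have hklt : k < m := Nat.div_lt_self hm hd2
    have hpowcong : ∀ a b : ℕ, a ≡ b [MOD m] → ζ ^ a = ζ ^ b := by
      have key : ∀ a : ℕ, ζ ^ a = ζ ^ (a % m) := by
        intro a
        conv_lhs => rw [← Nat.mod_add_div a m]
        rw [pow_add, pow_mul, hζ.pow_eq_one, one_pow, mul_one]
      intro a b hab
      rw [key a, key b, hab]
    have hμall : ∀ x ∈ T, ζ ^ (k * x.val) = ζ ^ (k * n0) := by
      intro x hx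
      obtain ⟨i, hi, j, hj⟩ := hmemT x hx
      have c1 : ((x.val:ℕ):ℤ) ≡ γ i * (q:ℤ)^j [ZMOD m] := hcast x _ hj
      have c3 : (k:ℤ) * (x.val:ℤ) ≡ (k:ℤ) * (γ i * (q:ℤ)^j) [ZMOD m] := c1.mul_left _
      have c4 : (k:ℤ) * (γ i * (q:ℤ)^j) ≡ (k:ℤ) * (n0:ℤ) [ZMOD m] := by
        rw [Int.modEq_iff_dvd]
        obtain ⟨w, hw⟩ := hdiff i hi j
        refine ⟨-w, ?_⟩
        have : (γ i * (q:ℤ)^j - (n0:ℤ)) = (d:ℤ) * w := hw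
        have hmz : (m:ℤ) = (k:ℤ) * (d:ℤ) := by exact_mod_cast hkd.symm
        rw [hmz]
        linear_combination (-(k:ℤ)) * this
      have c5 := c3.trans c4
      apply hpowcong
      rw [← Int.natCast_modEq_iff]
      push_cast
      exact c5
    set μ := ζ ^ (k * n0) with hμdef
    have hμ0 : μ ≠ 0 := pow_ne_zero _ hζne
    have hμq : μ ^ q = μ := by
      have h1 : μ ^ (q - 1) = 1 := by
        rw [hμdef, ← pow_mul, hζ.pow_eq_one_iff_dvd]
        obtain ⟨e, he⟩ := hdq1
        refine ⟨n0 * e, ?_⟩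
        rw [he, ← hkd]
        ring
      have h2 : q - 1 + 1 = q := by omega
      calc μ ^ q = μ ^ (q - 1 + 1) := by rw [h2]
        _ = μ ^ (q-1) * μ := pow_succ μ _
        _ = μ := by rw [h1, one_mul]
    obtain ⟨lam, hlam⟩ := keyRange μ (by rw [hq]; exact hμq)
    have hlam0 : lam ≠ 0 := by
      intro h
      rw [h, map_zero] at hlam
      exact hμ0 hlam.symm
    have hdvd : f ∣ X ^ k - C lam :=
      (keyDvd hm hζ ha hT hkpos lam).mpr (fun x hx => by rw [hμall x hx, hlam])
    exact hfree k lam hkpos (by rw [hord]; exact hklt) hlam0 hdvd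
  have main3 : d = 1 → ∀ (d' : ℕ) (E : Finset (ZMod m)), IsEqDiffOver q m d' E → T ⊆ E →
      ∀ x : ZMod m, x ∈ E := by
    intro hd1 d' E hEq hTE x
    obtain ⟨hd'm, hd'pos, γ', hE, hγ'q⟩ := hEq
    have hd'mZ : (d':ℤ) ∣ (m:ℤ) := Int.natCast_dvd_natCast.mpr hd'm
    have hEmod : ∀ y ∈ E, ((y.val:ℤ)) ≡ (γ':ℤ) [ZMOD d'] := by
      intro y hy
      rw [hE] at hy
      obtain ⟨i, -, hi⟩ := Finset.mem_image.mp hy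
      have c1 : ((y.val:ℤ)) ≡ ((γ' + i * d' : ℕ):ℤ) [ZMOD m] := by
        refine hcast y _ ?_
        rw [← hi]
        push_cast
        ring
      have c2 := c1.of_dvd hd'mZ
      have c3 : ((γ' + i * d' : ℕ):ℤ) ≡ (γ':ℤ) [ZMOD d'] := by
        rw [Int.modEq_iff_dvd]
        refine ⟨-(i:ℤ), ?_⟩
        push_cast
        ring
      exact c2.trans c3
    have hTmod : ∀ y ∈ T, ((y.val:ℤ)) ≡ (γ':ℤ) [ZMOD d'] := fun y hy => hEmod y (hTE hy)
    have hd'Δ : ∀ j, j < t - 1 → (d':ℤ) ∣ (γ (j+1) - γ j) := by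
      intro j hj
      have hj1 : j + 1 < t := by omega
      have hjt : j < t := by omega
      have c1 : (γ j : ℤ) ≡ (γ':ℤ) [ZMOD d'] := by
        have h1 := hcast (((γ j : ℤ) : ZMod m)) (γ j) rfl
        exact ((h1.of_dvd hd'mZ).symm.trans (hTmod _ (hγT j hjt)))
      have c2 : (γ (j+1) : ℤ) ≡ (γ':ℤ) [ZMOD d'] := by
        have h1 := hcast (((γ (j+1) : ℤ) : ZMod m)) (γ (j+1)) rfl
        exact ((h1.of_dvd hd'mZ).symm.trans (hTmod _ (hγT (j+1) hj1)))
      have c3 : (γ j : ℤ) ≡ (γ (j+1) : ℤ) [ZMOD d'] := c1.trans c2.symm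
      exact Int.ModEq.dvd c3
    have hd'q : d' ∣ q - 1 := by
      have hq1x : ∀ x ∈ T, d' ∣ (q - 1) * x.val := by
        intro y hy
        have hqy := hclos y hy
        have c1 : (((q:ZMod m) * y).val : ℤ) ≡ (q:ℤ) * (y.val:ℤ) [ZMOD m] :=
          hcast ((q : ZMod m) * y) ((q : ℤ) * (y.val : ℤ)) (by push_cast [hvalId]; ring)
        have c2 : (q:ℤ) * (y.val:ℤ) ≡ (y.val:ℤ) [ZMOD d'] :=
          ((c1.of_dvd hd'mZ).symm.trans (hTmod _ hqy)).trans (hTmod y hy).symm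
        have c3 := Int.ModEq.dvd c2
        have : (d':ℤ) ∣ (((q-1) * y.val : ℕ):ℤ) := by
          have heq : (((q-1) * y.val : ℕ):ℤ) =
              -((y.val:ℤ) - (q:ℤ) * (y.val:ℤ)) := by
            push_cast [Nat.cast_sub hq2.le]
            ring
          rw [heq]
          exact dvd_neg.mpr c3
        exact_mod_cast this
      have h1 : d' ∣ T.gcd (fun x => (q - 1) * x.val) :=
        Finset.dvd_gcd (fun x hx => hq1x x hx)
      rw [Finset.gcd_mul_left, normalize_eq] at h1
      exact (Nat.Coprime.coprime_dvd_left hd'm hg0).dvd_of_dvd_mul_right h1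
    have hd'd : d' ∣ d := by
      rw [hd]
      refine Nat.dvd_gcd ?_ (Nat.dvd_gcd hd'm hd'q)
      have h1 : (d':ℤ) ∣ A := Finset.dvd_gcd (fun j hj => hd'Δ j (Finset.mem_range.mp hj))
      have h2 := Int.natAbs_dvd_natAbs.mpr h1
      simpa using h2
    have hd'1 : d' = 1 := Nat.dvd_one.mp (hd1 ▸ hd'd)
    subst hd'1
    rw [hE]
    refine Finset.mem_image.mpr ⟨(x - (γ':ZMod m)).val, Finset.mem_range.mpr ?_, ?_⟩
    · rw [Nat.div_one]
      exact ZMod.val_lt _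
    · rw [mul_one]
      push_cast
      rw [hvalN]
      ring
  have main4 : (∀ (d' : ℕ) (E : Finset (ZMod m)), IsEqDiffOver q m d' E → T ⊆ E →
      ∀ x : ZMod m, x ∈ E) → d = 1 := by
    intro hS3
    by_contra hd1
    have hd2 : 1 < d := by omega
    set E := (Finset.range (m / d)).image (fun i => ((n0 + i * d : ℕ) : ZMod m)) with hE
    have hmd : 0 < m / d := Nat.div_pos (Nat.le_of_dvd hm hdm) hdpos
    have hEq : IsEqDiffOver q m d E := by
      refine ⟨hdm, hdpos, n0, hE, ?_⟩
      have h1 : q ≡ 1 [MOD d] := ((Nat.modEq_iff_dvd' hq2.le).mpr hdq1).symm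
      calc n0 * q ≡ n0 * 1 [MOD d] := h1.mul_left n0
        _ = n0 := mul_one n0
    have hTE : T ⊆ E := by
      intro x hx
      obtain ⟨i, hi, j, hj⟩ := hmemT x hx
      obtain ⟨w, hw⟩ := hdiff i hi j
      set i0 : ℕ := (w % ((m/d : ℕ):ℤ)).toNat with hi0
      have hi0nn : (0:ℤ) ≤ w % ((m/d:ℕ):ℤ) := Int.emod_nonneg _ (by exact_mod_cast hmd.ne')
      have hi0lt : (w % ((m/d:ℕ):ℤ)) < ((m/d:ℕ):ℤ) :=
        Int.emod_lt_of_pos _ (by exact_mod_cast hmd)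
      have hi0c : (i0:ℤ) = w % ((m/d:ℕ):ℤ) := Int.toNat_of_nonneg hi0nn
      rw [hE]
      refine Finset.mem_image.mpr ⟨i0, Finset.mem_range.mpr (by omega), ?_⟩
      rw [← hj]
      have hmod : ((n0 + i0 * d : ℕ) : ℤ) ≡ (γ i * (q:ℤ)^j) [ZMOD m] := by
        rw [Int.modEq_iff_dvd]
        refine ⟨w / ((m/d:ℕ):ℤ), ?_⟩
        have e2 : (w:ℤ) - (i0:ℤ) = ((m/d:ℕ):ℤ) * (w / ((m/d:ℕ):ℤ)) := by
          rw [hi0c, Int.emod_def]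
          ring
        have e3 : ((m/d:ℕ):ℤ) * (d:ℤ) = (m:ℤ) := by
          exact_mod_cast Nat.div_mul_cancel hdm
        have e4 : ((n0 + i0 * d : ℕ) : ℤ) = (n0:ℤ) + (i0:ℤ) * (d:ℤ) := by push_cast; ring
        rw [e4]
        linear_combination hw + (d:ℤ) * e2 + (w / ((m/d:ℕ):ℤ)) * e3
      have := (ZMod.intCast_eq_intCast_iff _ _ _).mpr hmod
      exact_mod_cast this
    have hall := hS3 d E hEq hTE
    have h1 : Finset.univ ⊆ E := fun x _ => hall x
    have h2 : m ≤ E.card := by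
      have h3 := Finset.card_le_card h1
      rwa [Finset.card_univ, ZMod.card m] at h3
    have h3 : E.card ≤ m / d := by
      rw [hE]
      exact (Finset.card_image_le).trans (le_of_eq (Finset.card_range _))
    have h4 : m / d < m := Nat.div_lt_self hm hd2
    omega
  constructor
  · exact ⟨main2, main1⟩
  · exact ⟨fun h => main3 (main2 h), fun h => main1 (main4 h)⟩
end

section
/- Let f(X) = f₁(X)^{h₁}···f_t(X)^{h_t} be a polynomial over F_q of characteristic p, coprime to X, with distinct irreducible factors f_i and multiplicities h_i. Suppose rad(f) = f₁···f_t has minimal binomial order n and minimal binomial multiple X^n − λ. Let u be the smallest nonnegative integer with p^u ≥ h_i for all i. Then the minimal binomial order of f is p^u·n and the minimal binomial multiple of f is X^{p^u n} − λ^{p^u}. -/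
open Polynomial

/-- If `f = f₁^{h₁}···f_t^{h_t}` with distinct irreducible `fᵢ`, `rad(f) = ∏ fᵢ` has
minimal binomial multiple `X^n − λ`, and `u` is minimal with `p^u ≥ hᵢ` for all `i`,
then the minimal binomial multiple of `f` is `X^{p^u n} − λ^{p^u}`, of degree `p^u·n`. -/
theorem stmt_16 {F : Type*} [Field F] [Fintype F] (p : ℕ) [Fact p.Prime] [CharP F p]
    (t : ℕ) (ht : 0 < t) (fi : Fin t → F[X]) (h : Fin t → ℕ)
    (hirr : ∀ i, Irreducible (fi i)) (hmonic : ∀ i, (fi i).Monic)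
    (hdist : ∀ i j, i ≠ j → fi i ≠ fi j)
    (hh : ∀ i, 0 < h i) (h0 : ∀ i, (fi i).coeff 0 ≠ 0)
    (f : F[X]) (hf : f = ∏ i, fi i ^ h i)
    (n : ℕ) (l : F) (hl : l ≠ 0)
    (hradmin : IsMinBinMultiple (∏ i, fi i) (X ^ n - C l))
    (hn : minBinOrder (∏ i, fi i) = n)
    (u : ℕ) (hu : ∀ i, h i ≤ p ^ u) (humin : ∀ u', (∀ i, h i ≤ p ^ u') → u ≤ u') :
    minBinOrder f = p ^ u * n ∧
    IsMinBinMultiple f (X ^ (p ^ u * n) - C (l ^ p ^ u)) := by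

  have hp : p.Prime := Fact.out
  -- p^u n is positive once n is
  have hnpos : 0 < n := by
    obtain ⟨n', l', hn'pos, hl', heq⟩ := hradmin.1
    have := congrArg natDegree heq
    rw [natDegree_X_pow_sub_C, natDegree_X_pow_sub_C] at this
    omega
  have hppos : 0 < p ^ u := pow_pos hp.pos u
  -- surjectivity of the iterated Frobenius
  have hsurj : ∀ (a : ℕ) (c : F), ∃ d : F, d ^ p ^ a = c := by
    intro a c
    have hinj : Function.Injective (fun x : F => x ^ p ^ a) := by
      intro x y hxy
      have hz : (x - y) ^ p ^ a = 0 := by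
        rw [sub_pow_char_pow]; simpa using sub_eq_zero.mpr hxy
      have := pow_eq_zero_iff (pow_ne_zero a hp.ne_zero) |>.mp hz
      exact sub_eq_zero.mp this
    exact Finite.injective_iff_surjective.mp hinj c
  -- fi are prime
  have hprime : ∀ i, Prime (fi i) := fun i => (hirr i).prime
  -- f divides X^{p^u n} - C (l^{p^u})
  have hfrob0 : (X ^ n - C l : F[X]) ^ p ^ u = X ^ (p ^ u * n) - C (l ^ p ^ u) := by
    rw [sub_pow_char_pow, ← pow_mul, ← C_pow, mul_comm n (p ^ u)]
  have hdvdmain : f ∣ X ^ (p ^ u * n) - C (l ^ p ^ u) := by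
    rw [← hfrob0]
    calc f = ∏ i, fi i ^ h i := hf
      _ ∣ ∏ i, fi i ^ p ^ u :=
          Finset.prod_dvd_prod_of_dvd _ _ (fun i _ => pow_dvd_pow _ (hu i))
      _ = (∏ i, fi i) ^ p ^ u := by rw [Finset.prod_pow]
      _ ∣ (X ^ n - C l) ^ p ^ u := pow_dvd_pow_of_dvd hradmin.2.1 _
  -- the key minimality lemma
  have key : ∀ (m : ℕ) (μ : F), 0 < m → μ ≠ 0 → f ∣ X ^ m - C μ → p ^ u * n ≤ m := by
    intro m μ hm hμ hdvd
    set a := m.factorization p with ha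
    set m' := m / p ^ a with hm'
    have hma : p ^ a * m' = m := Nat.ordProj_mul_ordCompl_eq_self m p
    have hm'pos : 0 < m' := Nat.ordCompl_pos p hm.ne'
    have hpm' : ¬ p ∣ m' := Nat.not_dvd_ordCompl hp hm.ne'
    obtain ⟨μ', hμ'⟩ := hsurj a μ
    have hμ'0 : μ' ≠ 0 := by
      rintro rfl
      rw [zero_pow (pow_ne_zero a hp.ne_zero)] at hμ'
      exact hμ hμ'.symm
    have hfrob : (X ^ m' - C μ' : F[X]) ^ p ^ a = X ^ m - C μ := by
      rw [sub_pow_char_pow, ← pow_mul, ← C_pow, hμ', mul_comm m' (p ^ a), hma]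
    have hsep : (X ^ m' - C μ' : F[X]).Separable :=
      separable_X_pow_sub_C' p m' μ' hpm' hμ'0
    have hsq : Squarefree (X ^ m' - C μ' : F[X]) := hsep.squarefree
    have hdvdg : ∀ i, fi i ∣ X ^ m' - C μ' := by
      intro i
      have h1 : fi i ∣ X ^ m - C μ :=
        dvd_trans (dvd_trans (dvd_pow_self _ (hh i).ne')
          (hf ▸ Finset.dvd_prod_of_mem (fun i => fi i ^ h i) (Finset.mem_univ i))) hdvd
      rw [← hfrob] at h1
      exact (hprime i).dvd_of_dvd_pow h1
    have hcop : ((Finset.univ : Finset (Fin t)) : Set (Fin t)).Pairwise (Function.onFun IsCoprime fi) := by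
      intro i _ j _ hij
      refine (hirr i).coprime_iff_not_dvd.mpr (fun hd => ?_)
      exact hdist i j hij (eq_of_monic_of_associated (hmonic i) (hmonic j)
        ((hirr i).associated_of_dvd (hirr j) hd))
    have hrad : (∏ i, fi i) ∣ X ^ m' - C μ' :=
      Finset.prod_dvd_of_coprime hcop (fun i _ => hdvdg i)
    have h1 : n ≤ m' := by
      rw [← hn]; exact Nat.sInf_le ⟨hm'pos, μ', hμ'0, hrad⟩
    have h2 : ∀ i, h i ≤ p ^ a := by
      intro i
      have hi1 : fi i ^ h i ∣ (X ^ m' - C μ') ^ p ^ a := by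
        rw [hfrob]
        exact dvd_trans (hf ▸ Finset.dvd_prod_of_mem (fun i => fi i ^ h i)
          (Finset.mem_univ i)) hdvd
      obtain ⟨c, hc⟩ := hdvdg i
      have hfc : ¬ fi i ∣ c := by
        intro hd
        exact (hirr i).not_isUnit (hsq (fi i) (by rw [hc]; exact mul_dvd_mul_left _ hd))
      have hi2 : fi i ^ h i ∣ fi i ^ p ^ a * c ^ p ^ a := by
        rw [← mul_pow, ← hc]; exact hi1
      have hi3 : fi i ^ h i ∣ fi i ^ p ^ a :=
        (hprime i).pow_dvd_of_dvd_mul_right (h i) (fun hd => hfc ((hprime i).dvd_of_dvd_pow hd)) hi2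
      exact (pow_dvd_pow_iff (hmonic i).ne_zero (hirr i).not_isUnit).mp hi3
    have h3 : u ≤ a := humin a h2
    calc p ^ u * n ≤ p ^ a * m' :=
          Nat.mul_le_mul (Nat.pow_le_pow_right hp.pos h3) h1
      _ = m := hma
  have hmem : p ^ u * n ∈ {k | 0 < k ∧ ∃ l : F, l ≠ 0 ∧ f ∣ X ^ k - C l} :=
    ⟨Nat.mul_pos hppos hnpos, l ^ p ^ u, pow_ne_zero _ hl, hdvdmain⟩
  have horder : minBinOrder f = p ^ u * n := by
    have hne : {k | 0 < k ∧ ∃ l : F, l ≠ 0 ∧ f ∣ X ^ k - C l}.Nonempty := ⟨_, hmem⟩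
    have hmem' := Nat.sInf_mem hne
    obtain ⟨hpos', μ, hμ, hdvd'⟩ := hmem'
    exact le_antisymm (Nat.sInf_le hmem) (key _ μ hpos' hμ hdvd')
  refine ⟨horder, ⟨p ^ u * n, l ^ p ^ u, Nat.mul_pos hppos hnpos, pow_ne_zero _ hl, rfl⟩,
    hdvdmain, ?_⟩
  rintro g ⟨k, μ, hk, hμ, rfl⟩ hdvd'
  rw [natDegree_X_pow_sub_C, natDegree_X_pow_sub_C]
  exact key k μ hk hμ hdvd'
end

section
/- Let f(X) be a nonconstant polynomial over F_q coprime to X. Then f(X) is free of binomials if and only if its radical rad(f) is free of binomials. -/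
open Polynomial

section Aux

variable {F : Type*} [Field F]

lemma aux_dvd_mod {g : F[X]} {b : ℕ} (hb : 0 < b) (hgb : g ∣ X ^ b - 1)
    (a : ℕ) (μ : F) (h : g ∣ X ^ a - C μ) : g ∣ X ^ (a % b) - C μ := by
  induction a using Nat.strong_induction_on with
  | _ a ih =>
    rcases lt_or_ge a b with hab | hab
    · rwa [Nat.mod_eq_of_lt hab]
    · obtain ⟨c, rfl⟩ : ∃ c, a = c + b := ⟨a - b, by omega⟩
      have key : X ^ (c + b) - C μ = X ^ c * (X ^ b - 1) + (X ^ c - C μ) := by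
        rw [pow_add]; ring
      have h2 : g ∣ X ^ c - C μ := by
        have h3 : g ∣ X ^ c * (X ^ b - 1) := Dvd.dvd.mul_left hgb _
        have := dvd_sub h h3
        rw [key] at this
        simpa using this
      have := ih c (by omega) h2
      rwa [Nat.add_mod_right]

lemma aux_sq_dvd {s : F[X]} {g : F[X]} (hg : Squarefree g)
    (h : ∀ π : F[X], Prime π → π ∣ g → π ∣ s) : g ∣ s := by
  revert hg h
  induction g using UniqueFactorizationMonoid.induction_on_prime with
  | h₁ => intro hg _; exact absurd hg not_squarefree_zero
  | h₂ x hx => intro _ _; exact hx.dvd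
  | h₃ a p ha hp ih =>
    intro hg h
    have hpa : ¬ p ∣ a := fun hd => hp.not_unit (hg p (mul_dvd_mul_left p hd))
    have hcop : IsCoprime p a := (hp.irreducible.coprime_iff_not_dvd).mpr hpa
    have hasq : Squarefree a := hg.squarefree_of_dvd (dvd_mul_left a p)
    have has : a ∣ s := ih hasq (fun π hπ hπa => h π hπ (hπa.trans (dvd_mul_left a p)))
    have hps : p ∣ s := h p hp (dvd_mul_right p a)
    exact hcop.mul_dvd hps has

lemma aux_dvd_pow {f g s : F[X]} (hf : f ≠ 0) (hg : g ≠ 0) (hs : Squarefree s)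
    (hrad : ∀ π : F[X], Prime π → π ∣ f → π ∣ g) {n : ℕ} (hfs : f ∣ s ^ n) :
    f ∣ g ^ n := by
  classical
  have hs0 : s ≠ 0 := hs.ne_zero
  open UniqueFactorizationMonoid in
  rw [dvd_iff_normalizedFactors_le_normalizedFactors hf (pow_ne_zero _ hg),
    normalizedFactors_pow, Multiset.le_iff_count]
  rw [UniqueFactorizationMonoid.dvd_iff_normalizedFactors_le_normalizedFactors hf
    (pow_ne_zero _ hs0), UniqueFactorizationMonoid.normalizedFactors_pow,
    Multiset.le_iff_count] at hfs
  intro π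
  by_cases hπ : π ∈ UniqueFactorizationMonoid.normalizedFactors f
  · have hc := hfs π
    rw [Multiset.count_nsmul] at hc ⊢
    have hs1 : Multiset.count π (UniqueFactorizationMonoid.normalizedFactors s) ≤ 1 :=
      Multiset.nodup_iff_count_le_one.mp
        ((UniqueFactorizationMonoid.squarefree_iff_nodup_normalizedFactors hs0).mp hs) π
    have hcf : Multiset.count π (UniqueFactorizationMonoid.normalizedFactors f) ≤ n := by
      calc Multiset.count π (UniqueFactorizationMonoid.normalizedFactors f)
          ≤ n * Multiset.count π (UniqueFactorizationMonoid.normalizedFactors s) := hc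
        _ ≤ n * 1 := Nat.mul_le_mul_left n hs1
        _ = n := Nat.mul_one n
    have hπp : Prime π := UniqueFactorizationMonoid.prime_of_normalized_factor π hπ
    have hπf : π ∣ f := UniqueFactorizationMonoid.dvd_of_mem_normalizedFactors hπ
    obtain ⟨q, hq, hassoc⟩ :=
      UniqueFactorizationMonoid.exists_mem_normalizedFactors_of_dvd hg hπp.irreducible
        (hrad π hπp hπf)
    have hπq : π = q := by
      have h1 := UniqueFactorizationMonoid.normalize_normalized_factor π hπ
      have h2 := UniqueFactorizationMonoid.normalize_normalized_factor q hq
      calc π = normalize π := h1.symm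
        _ = normalize q := normalize_eq_normalize hassoc.dvd hassoc.symm.dvd
        _ = q := h2
    have hcnt : 1 ≤ Multiset.count π (UniqueFactorizationMonoid.normalizedFactors g) := by
      rw [hπq]; exact Multiset.one_le_count_iff_mem.mpr hq
    calc Multiset.count π (UniqueFactorizationMonoid.normalizedFactors f) ≤ n := hcf
      _ = n * 1 := (Nat.mul_one n).symm
      _ ≤ n * Multiset.count π (UniqueFactorizationMonoid.normalizedFactors g) :=
        Nat.mul_le_mul_left n hcnt
  · simp [Multiset.count_eq_zero_of_notMem hπ]

lemma aux_exists_ord [Fintype F] {f : F[X]} (hf0 : f.coeff 0 ≠ 0) :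
    ∃ m, 0 < m ∧ f ∣ X ^ m - 1 := by
  have hfne : f ≠ 0 := fun h => hf0 (by simp [h])
  have hfin : Finite (AdjoinRoot f) :=
    Finite.of_equiv _ (AdjoinRoot.powerBasis hfne).basis.equivFun.toEquiv.symm
  have key : ∀ a b : ℕ, a < b → (AdjoinRoot.root f) ^ a = (AdjoinRoot.root f) ^ b →
      ∃ m, 0 < m ∧ f ∣ X ^ m - 1 := by
    intro a b hab heq
    obtain ⟨c, hc, rfl⟩ : ∃ c, 0 < c ∧ b = c + a := ⟨b - a, by omega, by omega⟩
    have hdvd : f ∣ X ^ (c + a) - X ^ a := by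
      rw [← AdjoinRoot.mk_eq_zero, map_sub, map_pow, map_pow, AdjoinRoot.mk_X, heq, sub_self]
    have hfac : (X : F[X]) ^ (c + a) - X ^ a = X ^ a * (X ^ c - 1) := by
      rw [pow_add]; ring
    rw [hfac] at hdvd
    have hcop0 : IsCoprime (X : F[X]) f := (Polynomial.irreducible_X).coprime_iff_not_dvd.mpr
        (by rw [Polynomial.X_dvd_iff]; exact hf0)
    have hcop : IsCoprime f ((X : F[X]) ^ a) := IsCoprime.pow_right hcop0.symm
    exact ⟨c, hc, hcop.dvd_of_dvd_mul_left hdvd⟩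
  obtain ⟨a, b, hab, heq⟩ :=
    Finite.exists_ne_map_eq_of_infinite (fun n : ℕ => (AdjoinRoot.root f) ^ n)
  rcases hab.lt_or_gt with h1 | h1
  · exact key a b h1 heq
  · exact key b a h1 heq.symm

end Aux

/-- A nonconstant polynomial `f` over `F_q` coprime to `X` is free of binomials iff
its radical `g` (the monic squarefree polynomial with the same irreducible factors,
i.e. the product of the distinct monic irreducible factors of `f`) is free of binomials. -/
theorem stmt_17 {F : Type*} [Field F] [Fintype F]
    (f : F[X]) (hdeg : 0 < f.natDegree) (h0 : f.coeff 0 ≠ 0)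
    (g : F[X]) (hgm : g.Monic) (hgsq : Squarefree g)
    (hrad : ∀ π : F[X], Prime π → (π ∣ f ↔ π ∣ g)) :
    FreeOfBinomials f ↔ FreeOfBinomials g := by
  classical
  have hf0 : f ≠ 0 := fun h => h0 (by simp [h])
  have hg0 : g ≠ 0 := hgm.ne_zero
  -- g is not a unit
  obtain ⟨π₀, hπ₀irr, hπ₀f⟩ :=
    WfDvdMonoid.exists_irreducible_factor (Polynomial.not_isUnit_of_natDegree_pos f hdeg) hf0
  have hπ₀p : Prime π₀ := hπ₀irr.prime
  have hπ₀g : π₀ ∣ g := (hrad π₀ hπ₀p).mp hπ₀f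
  have hgu : ¬ IsUnit g := fun hu => hπ₀p.not_unit (isUnit_of_dvd_unit hπ₀g hu)
  -- g is coprime to X
  have hgX : g.coeff 0 ≠ 0 := by
    intro hc
    exact h0 (Polynomial.X_dvd_iff.mp ((hrad X Polynomial.prime_X).mpr
      (Polynomial.X_dvd_iff.mpr hc)))
  -- orders exist
  obtain ⟨mf, hmf⟩ := aux_exists_ord h0
  obtain ⟨mg, hmg⟩ := aux_exists_ord hgX
  have hof : 0 < polyOrder f ∧ f ∣ X ^ (polyOrder f) - 1 :=
    Nat.sInf_mem (⟨mf, hmf⟩ : {m | 0 < m ∧ f ∣ X ^ m - 1}.Nonempty)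
  have hog : 0 < polyOrder g ∧ g ∣ X ^ (polyOrder g) - 1 :=
    Nat.sInf_mem (⟨mg, hmg⟩ : {m | 0 < m ∧ g ∣ X ^ m - 1}.Nonempty)
  -- characteristic
  set p := ringChar F with hpdef
  haveI : CharP F p := ringChar.charP F
  have hp : p.Prime := CharP.char_is_prime F p
  haveI : Fact p.Prime := ⟨hp⟩
  haveI : CharP F[X] p := Polynomial.instCharP p
  -- Frobenius surjectivity
  have frob : ∀ (a : ℕ) (l : F), ∃ μ : F, μ ^ p ^ a = l := by
    intro a l
    have hinj : Function.Injective (fun x : F => x ^ p ^ a) := by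
      intro x y hxy
      have : (x - y) ^ p ^ a = 0 := by
        rw [sub_pow_char_pow]; simpa using sub_eq_zero_of_eq hxy
      have := pow_eq_zero_iff (pow_ne_zero a hp.ne_zero) |>.mp this
      exact sub_eq_zero.mp this
    exact Finite.surjective_of_injective hinj l
  constructor
  · -- f free → g free
    intro hffree k l hk hkord hl hdvd
    -- decompose polyOrder f = p ^ b * m'
    obtain ⟨b, m', hpm', hofeq⟩ :=
      Nat.exists_eq_pow_mul_and_not_dvd hof.1.ne' p hp.ne_one
    have hm'pos : 0 < m' := by
      rcases Nat.eq_zero_or_pos m' with h | h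
      · exfalso; rw [h, Nat.mul_zero] at hofeq; exact hof.1.ne' hofeq
      · exact h
    -- s = X ^ m' - 1 is squarefree
    have hssep : (X ^ m' - 1 : F[X]).Separable := by
      have := Polynomial.separable_X_pow_sub_C' p m' (1 : F) hpm' one_ne_zero
      simpa using this
    have hssf : Squarefree (X ^ m' - 1 : F[X]) := hssep.squarefree
    -- f ∣ s ^ (p ^ b)
    have hfs : f ∣ (X ^ m' - 1 : F[X]) ^ p ^ b := by
      have : ((X : F[X]) ^ m' - 1) ^ p ^ b = X ^ (polyOrder f) - 1 := by
        rw [sub_pow_char_pow, ← pow_mul, one_pow, hofeq, Nat.mul_comm]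
      rw [this]; exact hof.2
    -- f ∣ g ^ (p ^ b)
    have hfg : f ∣ g ^ p ^ b :=
      aux_dvd_pow hf0 hg0 hssf (fun π hπ hπf => (hrad π hπ).mp hπf) hfs
    -- g ∣ X ^ m' - 1, hence polyOrder g ≤ m'
    have hgs : g ∣ (X ^ m' - 1 : F[X]) :=
      aux_sq_dvd hgsq (fun π hπ hπg =>
        hπ.dvd_of_dvd_pow (dvd_trans ((hrad π hπ).mpr hπg) hfs))
    have hogle : polyOrder g ≤ m' := Nat.sInf_le (show m' ∈ {m | 0 < m ∧ g ∣ X ^ m - 1} from ⟨hm'pos, hgs⟩)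
    -- build the contradicting binomial for f
    have hdvd2 : f ∣ X ^ (k * p ^ b) - C (l ^ p ^ b) := by
      have : (X ^ k - C l : F[X]) ^ p ^ b = X ^ (k * p ^ b) - C (l ^ p ^ b) := by
        rw [sub_pow_char_pow, ← pow_mul, ← C_pow]
      rw [← this]
      exact hfg.trans (pow_dvd_pow_of_dvd hdvd _)
    have hlt : k * p ^ b < polyOrder f := by
      rw [hofeq, Nat.mul_comm (p ^ b) m']
      exact (Nat.mul_lt_mul_right (Nat.pow_pos hp.pos)).mpr (lt_of_lt_of_le hkord hogle)
    exact hffree (k * p ^ b) (l ^ p ^ b)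
      (Nat.mul_pos hk (Nat.pow_pos hp.pos)) hlt (pow_ne_zero _ hl) hdvd2
  · -- g free → f free
    intro hgfree k l hk hkord hl hdvd
    obtain ⟨a, k', hpk', hkeq⟩ := Nat.exists_eq_pow_mul_and_not_dvd hk.ne' p hp.ne_one
    obtain ⟨μ, hμ⟩ := frob a l
    have hμ0 : μ ≠ 0 := fun h => hl (by rw [← hμ, h, zero_pow (pow_ne_zero a hp.ne_zero)])
    have hk'pos : 0 < k' := by
      rcases Nat.eq_zero_or_pos k' with h | h
      · exfalso; rw [h, Nat.mul_zero] at hkeq; omega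
      · exact h
    have hpow : (X ^ k' - C μ : F[X]) ^ p ^ a = X ^ k - C l := by
      rw [sub_pow_char_pow, ← pow_mul, ← C_pow, hμ, hkeq, Nat.mul_comm]
    -- g divides X ^ k' - C μ
    have hgs : g ∣ (X ^ k' - C μ : F[X]) := by
      refine aux_sq_dvd hgsq (fun π hπ hπg => ?_)
      have hπf : π ∣ f := (hrad π hπ).mpr hπg
      have : π ∣ (X ^ k' - C μ : F[X]) ^ p ^ a := by rw [hpow]; exact hπf.trans hdvd
      exact hπ.dvd_of_dvd_pow this
    -- reduce modulo polyOrder g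
    have hr : g ∣ X ^ (k' % polyOrder g) - C μ := aux_dvd_mod hog.1 hog.2 k' μ hgs
    rcases Nat.eq_zero_or_pos (k' % polyOrder g) with hz | hz
    · -- then μ = 1, l = 1, and f ∣ X ^ k - 1 with k < polyOrder f: contradiction
      rw [hz, pow_zero] at hr
      have hμ1 : μ = 1 := by
        by_contra hne
        have : IsUnit ((1 : F[X]) - C μ) := by
          rw [← Polynomial.C_1, ← C_sub]
          exact Polynomial.isUnit_C.mpr (isUnit_iff_ne_zero.mpr (sub_ne_zero.mpr
            (fun h => hne h.symm)))
        exact hgu (isUnit_of_dvd_unit hr this)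
      have hl1 : l = 1 := by rw [← hμ, hμ1, one_pow]
      have : f ∣ X ^ k - 1 := by
        rw [← Polynomial.C_1, ← hl1]; exact hdvd
      exact absurd (Nat.sInf_le (show k ∈ {m | 0 < m ∧ f ∣ X ^ m - 1} from ⟨hk, this⟩)) (Nat.not_le.mpr hkord)
    · exact hgfree (k' % polyOrder g) μ hz
        (Nat.mod_lt k' hog.1) hμ0 hr
end

section
/- Let f(X) be a nonconstant polynomial over F_q of characteristic p, coprime to X, and let m be the order of rad(f). Then f(X) is a binomial (of the form a(X^k − λ), λ ≠ 0) if and only if there exists a nonnegative integer v such that f(X) = c·rad(f)^{p^v} for a scalar c, and the primitive defining set of rad(f) is an equal-difference subset of Z/mZ. -/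
open Polynomial

theorem my_sqf_dvd {α : Type*} [CommMonoidWithZero α] [UniqueFactorizationMonoid α]
    [Nontrivial α] {h : α} :
    ∀ {g : α}, Squarefree g → (∀ π, Prime π → π ∣ g → π ∣ h) → g ∣ h := by
  intro g
  induction g using UniqueFactorizationMonoid.induction_on_prime with
  | h₁ => intro hs _; exact absurd hs not_squarefree_zero
  | h₂ x hx => intro _ _; exact hx.dvd
  | h₃ a p ha hp ih =>
    intro hs H
    have hph : p ∣ h := H p hp (dvd_mul_right p a)
    have hsa : Squarefree a := hs.squarefree_of_dvd (dvd_mul_left a p)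
    have ha' : a ∣ h := ih hsa (fun π hπ hd => H π hπ (hd.mul_left p))
    exact (IsRelPrime.of_squarefree_mul hs).mul_dvd hph ha'

theorem my_sqf_eq {F : Type*} [Field F] {g h : F[X]} (hg : Squarefree g) (hh : Squarefree h)
    (hgm : g.Monic) (hhm : h.Monic) (H : ∀ π : F[X], Prime π → (π ∣ g ↔ π ∣ h)) : g = h :=
  Polynomial.eq_of_monic_of_associated hgm hhm
    (associated_of_dvd_dvd (my_sqf_dvd hg fun π hπ hd => (H π hπ).1 hd)
      (my_sqf_dvd hh fun π hπ hd => (H π hπ).2 hd))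

section helpers
variable {K : Type*} [CommRing K] [IsDomain K] {m : ℕ} {ζ : K}

omit [IsDomain K] in
theorem my_pow_val (hζ : IsPrimitiveRoot ζ m) (hm : 0 < m) (n : ℕ) :
    ζ ^ ((n : ZMod m)).val = ζ ^ n := by
  haveI : NeZero m := ⟨hm.ne'⟩
  rw [ZMod.val_natCast]
  conv_rhs => rw [← Nat.mod_add_div n m]
  rw [pow_add, pow_mul, hζ.pow_eq_one, one_pow, mul_one]

theorem my_inj (hζ : IsPrimitiveRoot ζ m) (hm : 0 < m) :
    Function.Injective (fun x : ZMod m => ζ ^ x.val) := by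
  haveI : NeZero m := ⟨hm.ne'⟩
  intro x y hxy
  exact ZMod.val_injective m (hζ.pow_inj (ZMod.val_lt x) (ZMod.val_lt y) hxy)

/-- products of distinct linear factors equal implies finsets equal -/
theorem my_prod_eq {S T : Finset (ZMod m)} (hζ : IsPrimitiveRoot ζ m) (hm : 0 < m)
    (h : ∏ x ∈ T, (X - C (ζ ^ x.val)) = ∏ x ∈ S, (X - C (ζ ^ x.val))) : T = S := by
  have key : ∀ (U : Finset (ZMod m)),
      (∏ x ∈ U, (X - C (ζ ^ x.val))).roots = U.val.map (fun x => ζ ^ x.val) := by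
    intro U
    have h2 : Multiset.map (fun x : ZMod m => X - C (ζ ^ x.val)) U.val
        = Multiset.map (fun a => X - C a) (U.val.map fun x => ζ ^ x.val) := by
      rw [Multiset.map_map]; rfl
    rw [Finset.prod, h2]
    exact roots_multiset_prod_X_sub_C _
  have := (key T).symm.trans (h ▸ key S)
  exact Finset.val_injective (Multiset.map_injective (my_inj hζ hm) this)

theorem my_coset_prod (hζ : IsPrimitiveRoot ζ m) (hm : 0 < m) (γ : ZMod m) {d : ℕ}
    (hd : d ∣ m) (hd0 : 0 < d) :
    ∏ x ∈ (Finset.range (m / d)).image (fun i => γ + ((i * d : ℕ) : ZMod m)),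
        (X - C (ζ ^ x.val))
      = X ^ (m / d) - C ((ζ ^ γ.val) ^ (m / d)) := by
  haveI : NeZero m := ⟨hm.ne'⟩
  set k := m / d with hk
  have hmdk : m = d * k := (Nat.mul_div_cancel' hd).symm
  have hk0 : 0 < k := Nat.div_pos (Nat.le_of_dvd hm hd) hd0
  have hω : IsPrimitiveRoot (ζ ^ d) k := hζ.pow hm hmdk
  rw [X_pow_sub_C_eq_prod hω hk0 rfl]
  rw [Finset.prod_image]
  · refine Finset.prod_congr rfl fun i hi => ?_
    have hi' : i < k := Finset.mem_range.mp hi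
    have h1 : γ + ((i * d : ℕ) : ZMod m) = ((γ.val + i * d : ℕ) : ZMod m) := by
      push_cast [ZMod.natCast_val, ZMod.cast_id]; ring
    rw [h1, my_pow_val hζ hm, pow_add, ← pow_mul, mul_comm d i, pow_mul, mul_comm]
  · intro i hi j hj hij
    have h2 : ((i * d : ℕ) : ZMod m) = ((j * d : ℕ) : ZMod m) := add_left_cancel hij
    have hiv : i * d < m := by
      rw [hmdk, mul_comm d k]; exact (Nat.mul_lt_mul_right hd0).mpr (Finset.mem_range.mp hi)
    have hjv : j * d < m := by
      rw [hmdk, mul_comm d k]; exact (Nat.mul_lt_mul_right hd0).mpr (Finset.mem_range.mp hj)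
    have := congrArg ZMod.val h2
    rw [ZMod.val_natCast, ZMod.val_natCast, Nat.mod_eq_of_lt hiv, Nat.mod_eq_of_lt hjv] at this
    exact Nat.eq_of_mul_eq_mul_right hd0 this

end helpers

/-- A nonconstant `f` over `F_q` (char `p`), coprime to `X`, with radical `g` of order
`m` and primitive defining set `T`, is a binomial iff `f = c·g^{p^v}` for some `v ≥ 0`
and scalar `c`, and `T` is an equal-difference subset of `ℤ/mℤ`. -/
theorem stmt_18 {F : Type*} [Field F] [Fintype F] (p : ℕ) [Fact p.Prime] [CharP F p]
    (f : F[X]) (hdeg : 0 < f.natDegree) (h0 : f.coeff 0 ≠ 0)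
    (g : F[X]) (hgm : g.Monic) (hgsq : Squarefree g)
    (hrad : ∀ π : F[X], Prime π → (π ∣ f ↔ π ∣ g))
    (m : ℕ) (hm : 0 < m) (hdvd : g ∣ X ^ m - 1)
    (hmin : ∀ k, 0 < k → g ∣ X ^ k - 1 → m ≤ k)
    (ζ : AlgebraicClosure F) (hζ : IsPrimitiveRoot ζ m)
    (T : Finset (ZMod m))
    (hT : g.map (algebraMap F (AlgebraicClosure F)) = ∏ x ∈ T, (X - C (ζ ^ x.val))) :
    (∃ (k : ℕ) (l a : F), 0 < k ∧ l ≠ 0 ∧ f = C a * (X ^ k - C l)) ↔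
      ((∃ (v : ℕ) (c : F), f = C c * g ^ p ^ v) ∧ IsEqDiff m T) := by
  have pp : p.Prime := Fact.out
  set algF := algebraMap F (AlgebraicClosure F) with halgF
  have halg : Function.Injective algF := algF.injective
  constructor
  · rintro ⟨k, l, a, hk0, hl0, hf⟩
    have ha0 : a ≠ 0 := by
      rintro rfl
      rw [map_zero, zero_mul] at hf
      rw [hf, natDegree_zero] at hdeg
      exact lt_irrefl 0 hdeg
    set v := k.factorization p with hv
    set k' := k / p ^ v with hk'
    have hpk : p ^ v * k' = k := Nat.ordProj_mul_ordCompl_eq_self k p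
    have hk'p : ¬ p ∣ k' := Nat.not_dvd_ordCompl pp hk0.ne'
    have hk'0 : 0 < k' := Nat.ordCompl_pos p hk0.ne'
    obtain ⟨μ, hμ⟩ : ∃ μ : F, μ ^ p ^ v = l := by
      have hinj : Function.Injective (fun x : F => x ^ p ^ v) := by
        have := (iterateFrobenius F p v).injective
        intro x y hxy
        exact this (by simpa [iterateFrobenius_def] using hxy)
      obtain ⟨μ, hμ⟩ := (Finite.injective_iff_surjective.mp hinj) l
      exact ⟨μ, hμ⟩
    have hμ0 : μ ≠ 0 := by
      rintro rfl
      rw [zero_pow (pow_ne_zero v pp.ne_zero)] at hμ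
      exact hl0 hμ.symm
    have hwm : (X ^ k' - C μ).Monic := monic_X_pow_sub_C μ hk'0.ne'
    have hwsq : Squarefree (X ^ k' - C μ) := (separable_X_pow_sub_C' p k' μ hk'p hμ0).squarefree
    have hfw : f = C a * (X ^ k' - C μ) ^ p ^ v := by
      rw [hf]
      congr 1
      rw [sub_pow_char_pow, ← pow_mul, mul_comm k' (p ^ v), hpk, ← C_pow, hμ]
    have hg' : g = X ^ k' - C μ := by
      refine my_sqf_eq hgsq hwsq hgm hwm fun π hπ => ?_
      rw [← hrad π hπ, hfw, hπ.dvd_mul]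
      constructor
      · rintro (hd | hd)
        · exact absurd (isUnit_of_dvd_unit hd (isUnit_C.mpr ha0.isUnit)) hπ.not_unit
        · exact hπ.dvd_of_dvd_pow hd
      · intro hd
        exact Or.inr (hd.trans (dvd_pow_self _ (pow_ne_zero v pp.ne_zero)))
    have hgmap : g.map algF = X ^ k' - C (algF μ) := by
      rw [hg', Polynomial.map_sub, Polynomial.map_pow, map_X, map_C]
    -- first conjunct
    refine ⟨⟨v, a, by rw [hfw, hg']⟩, ?_⟩
    -- T is nonempty
    have hTne : T.Nonempty := by
      rw [Finset.nonempty_iff_ne_empty]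
      rintro rfl
      rw [Finset.prod_empty] at hT
      have := congrArg natDegree (hgmap.symm.trans hT)
      rw [natDegree_X_pow_sub_C, natDegree_one] at this
      exact hk'0.ne' this
    obtain ⟨γ0, hγ0⟩ := hTne
    have hroot : (ζ ^ γ0.val) ^ k' = algF μ := by
      have h3 := congrArg (eval (ζ ^ γ0.val)) (hgmap.symm.trans hT)
      rw [eval_prod, Finset.prod_eq_zero hγ0 (by simp)] at h3
      rw [eval_sub, eval_pow, eval_X, eval_C] at h3
      exact sub_eq_zero.mp h3
    haveI : CharP (AlgebraicClosure F) p := charP_of_injective_algebraMap halg p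
    haveI : NeZero ((k' : AlgebraicClosure F)) := ⟨by
      rw [Ne, CharP.cast_eq_zero_iff (AlgebraicClosure F) p k']; exact hk'p⟩
    obtain ⟨η, hη⟩ := HasEnoughRootsOfUnity.exists_primitiveRoot (AlgebraicClosure F) k'
    have hαη : eval (ζ ^ γ0.val * η) (∏ x ∈ T, (X - C (ζ ^ x.val))) = 0 := by
      rw [← hT, hgmap]
      simp [mul_pow, hη.pow_eq_one, hroot]
    rw [eval_prod] at hαη
    obtain ⟨x, hxT, hx⟩ := Finset.prod_eq_zero_iff.mp hαη
    rw [eval_sub, eval_X, eval_C, sub_eq_zero] at hx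
    have hηm : η ^ m = 1 := by
      have h4 := congrArg (· ^ m) hx
      simp only [mul_pow] at h4
      have hA : (ζ ^ γ0.val) ^ m = 1 := by
        rw [← pow_mul, mul_comm, pow_mul, hζ.pow_eq_one, one_pow]
      have hB : (ζ ^ x.val) ^ m = 1 := by
        rw [← pow_mul, mul_comm, pow_mul, hζ.pow_eq_one, one_pow]
      rw [hA, one_mul, hB] at h4
      exact h4
    have hk'm : k' ∣ m := hη.dvd_of_pow_eq_one m hηm
    have hdm' : m / k' ∣ m := ⟨k', (Nat.div_mul_cancel hk'm).symm⟩
    have hd0' : 0 < m / k' := Nat.div_pos (Nat.le_of_dvd hm hk'm) hk'0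
    have hmd : m / (m / k') = k' := Nat.div_div_self hk'm hm.ne'
    refine ⟨γ0, m / k', hdm', hd0', ?_⟩
    refine my_prod_eq hζ hm ?_
    rw [← hT, hgmap, my_coset_prod hζ hm γ0 hdm' hd0', hmd, hroot]
  · rintro ⟨⟨v, c, hf⟩, γ, d, hdm, hd0, hE⟩
    have hc0 : c ≠ 0 := by
      rintro rfl
      rw [map_zero, zero_mul] at hf
      rw [hf, natDegree_zero] at hdeg
      exact lt_irrefl 0 hdeg
    set k' := m / d with hk'
    have hk'0 : 0 < k' := Nat.div_pos (Nat.le_of_dvd hm hdm) hd0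
    have hgmap : g.map algF = X ^ k' - C ((ζ ^ γ.val) ^ k') := by
      rw [hT, hE, my_coset_prod hζ hm γ hdm hd0]
    set β := (ζ ^ γ.val) ^ k' with hβ
    set μ := -(g.coeff 0) with hμ
    have hcoeff : algF (g.coeff 0) = -β := by
      have := congrArg (fun q => q.coeff 0) hgmap
      have h0k : ¬ (0 = k') := fun h => hk'0.ne' h.symm
      simpa [coeff_map, coeff_X_pow, h0k] using this
    have hμβ : algF μ = β := by rw [hμ, map_neg, hcoeff, neg_neg]
    have hg' : g = X ^ k' - C μ := by
      apply map_injective algF halg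
      rw [Polynomial.map_sub, Polynomial.map_pow, map_X, map_C, hμβ, hgmap]
    have hζ0 : ζ ≠ 0 := hζ.ne_zero hm.ne'
    have hμ0 : μ ≠ 0 := by
      intro e
      rw [e, map_zero] at hμβ
      exact pow_ne_zero k' (pow_ne_zero γ.val hζ0) hμβ.symm
    refine ⟨k' * p ^ v, μ ^ p ^ v, c, Nat.mul_pos hk'0 (pow_pos pp.pos v),
      pow_ne_zero _ hμ0, ?_⟩
    rw [hf, hg']
    congr 1
    rw [sub_pow_char_pow, ← pow_mul, ← C_pow]
end

section
/- Let λ ∈ F_q^*, N a positive integer, and f(X) a monic divisor of X^N − λ with deg f < N. The λ-constacyclic code C = (f(X)) ⊆ F_q[X]/(X^N − λ) has minimum Hamming distance 2 if and only if the minimal binomial multiple of f(X) is a proper divisor of X^N − λ (i.e., divides X^N − λ and has degree < N). -/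
open Polynomial

/-- The `λ`-constacyclic code `(f) ⊆ F_q[X]/(X^N − λ)` (codewords: residues `g` of
degree `< N` divisible by `f`; weight = number of nonzero coefficients) has minimum
Hamming distance `2` iff the minimal binomial multiple of `f` is a proper divisor of
`X^N − λ`. -/
theorem stmt_19 {F : Type*} [Field F] [Fintype F]
    (N : ℕ) (hN : 0 < N) (l : F) (hl : l ≠ 0)
    (f : F[X]) (hmonic : f.Monic) (hdvd : f ∣ X ^ N - C l)
    (hdeg : f.natDegree < N) (hne : 0 < f.natDegree) :
    ((∃ g : F[X], g ≠ 0 ∧ f ∣ g ∧ g.natDegree < N ∧ g.support.card = 2) ∧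
      (∀ g : F[X], g ≠ 0 → f ∣ g → g.natDegree < N → 2 ≤ g.support.card)) ↔
    (∃ b : F[X], IsMinBinMultiple f b ∧ b ∣ X ^ N - C l ∧ b.natDegree < N) := by
  
  -- f is coprime to X
  have hcop : IsCoprime f (X : F[X]) := by
    rw [isCoprime_comm]
    refine Polynomial.irreducible_X.coprime_iff_not_dvd.2 fun h => ?_
    have h2 : (X : F[X]) ∣ X ^ N - C l := h.trans hdvd
    rw [X_dvd_iff] at h2
    rw [coeff_sub, coeff_X_pow, if_neg (by omega), coeff_C] at h2
    simp [hl] at h2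
  -- weight ≥ 2 always holds
  have hw2 : ∀ g : F[X], g ≠ 0 → f ∣ g → 2 ≤ g.support.card := by
    intro g hg0 hfg
    have h0 : g.support.card ≠ 0 := by
      simpa [Finset.card_eq_zero, Polynomial.support_eq_empty] using hg0
    have h1 : g.support.card ≠ 1 := by
      intro h1
      obtain ⟨k, x, hx, rfl⟩ := Polynomial.card_support_eq_one.mp h1
      have hdX : f ∣ X ^ k := by
        have hxx : C x⁻¹ * (C x * X ^ k) = X ^ k := by
          rw [← mul_assoc, ← C_mul, inv_mul_cancel₀ hx, C_1, one_mul]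
        exact hxx ▸ hfg.mul_left _
      have := Polynomial.natDegree_eq_zero_of_isUnit
        ((hcop.pow_right).isUnit_of_dvd hdX)
      omega
    omega
  -- the set of binomial degrees
  set S : Set ℕ := {n | 0 < n ∧ ∃ μ : F, μ ≠ 0 ∧ f ∣ X ^ n - C μ} with hS
  have hNS : N ∈ S := ⟨hN, l, hl, hdvd⟩
  have hSne : S.Nonempty := ⟨N, hNS⟩
  set n := sInf S with hn
  obtain ⟨hnpos, μ, hμ, hfn⟩ := Nat.sInf_mem hSne
  have hmin : ∀ k ∈ S, n ≤ k := fun k hk => Nat.sInf_le hk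
  -- f divides no nonzero constant
  have hconst : ∀ c : F, f ∣ C c → c = 0 := by
    intro c hc
    by_contra h
    have : f.natDegree ≤ (C c).natDegree :=
      Polynomial.natDegree_le_of_dvd hc (by simp [h])
    simp [Polynomial.natDegree_C] at this
    omega
  -- descent: every element of S is a multiple of n with compatible constant
  have descent : ∀ m : ℕ, ∀ ν : F, 0 < m → ν ≠ 0 → f ∣ X ^ m - C ν →
      ∃ q : ℕ, m = n * q ∧ ν = μ ^ q := by
    intro m
    induction m using Nat.strong_induction_on with
    | _ m ih =>
      intro ν hm hν hfm
      rcases lt_trichotomy m n with hlt | heq | hgt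
      · exact absurd (hmin m ⟨hm, ν, hν, hfm⟩) (by omega)
      · subst heq
        refine ⟨1, by omega, ?_⟩
        have hc : f ∣ C (μ - ν) := by
          have h3 : (X ^ n - C ν) - (X ^ n - C μ) = C (μ - ν) := by
            rw [C_sub]; ring
          exact h3 ▸ dvd_sub hfm hfn
        have h7 : μ = ν := sub_eq_zero.mp (hconst _ hc)
        rw [pow_one, h7]
      · have hx : (X : F[X]) ^ m = X ^ (m - n) * X ^ n := by
          rw [← pow_add]; congr 1; omega
        have hd : f ∣ (X ^ m - C ν) - X ^ (m - n) * (X ^ n - C μ) :=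
          dvd_sub hfm (Dvd.dvd.mul_left hfn _)
        have he : (X ^ m - C ν) - X ^ (m - n) * (X ^ n - C μ)
            = C μ * X ^ (m - n) - C ν := by
          rw [hx]; ring
        rw [he] at hd
        have hd2 : f ∣ X ^ (m - n) - C (μ⁻¹ * ν) := by
          have h4 : C μ⁻¹ * (C μ * X ^ (m - n) - C ν)
              = X ^ (m - n) - C (μ⁻¹ * ν) := by
            rw [mul_sub, ← mul_assoc, ← C_mul, inv_mul_cancel₀ hμ, C_1, one_mul, ← C_mul]
          exact h4 ▸ hd.mul_left _
        obtain ⟨q, hq1, hq2⟩ := ih (m - n) (by omega) (μ⁻¹ * ν) (by omega)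
          (mul_ne_zero (inv_ne_zero hμ) hν) hd2
        refine ⟨q + 1, by rw [mul_add, mul_one, ← hq1]; omega, ?_⟩
        rw [inv_mul_eq_iff_eq_mul₀ hμ] at hq2
        rw [hq2, pow_succ]; ring
  constructor
  · rintro ⟨⟨g, hg0, hfg, hgN, hg2⟩, -⟩
    obtain ⟨k, m, hkm, x, y, hx, hy, rfl⟩ := Polynomial.card_support_eq_two.mp hg2
    have hdeg_g : (C x * X ^ k + C y * X ^ m).natDegree = m := by
      rw [natDegree_add_eq_right_of_natDegree_lt, natDegree_C_mul_X_pow m y hy]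
      rw [natDegree_C_mul_X_pow m y hy, natDegree_C_mul_X_pow k x hx]; exact hkm
    rw [hdeg_g] at hgN
    have hsplit : C x * X ^ k + C y * X ^ m = X ^ k * (C x + C y * X ^ (m - k)) := by
      have hxx : (X : F[X]) ^ m = X ^ k * X ^ (m - k) := by
        rw [← pow_add]; congr 1; omega
      rw [hxx]; ring
    rw [hsplit] at hfg
    have hf1 : f ∣ C x + C y * X ^ (m - k) := (hcop.pow_right).dvd_of_dvd_mul_left hfg
    have hf2 : f ∣ X ^ (m - k) - C (-(y⁻¹ * x)) := by
      have h5 : C y⁻¹ * (C x + C y * X ^ (m - k)) = X ^ (m - k) - C (-(y⁻¹ * x)) := by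
        rw [mul_add, ← C_mul, ← mul_assoc, ← C_mul, inv_mul_cancel₀ hy, C_1, one_mul,
          C_neg, sub_neg_eq_add, add_comm]
      exact h5 ▸ hf1.mul_left _
    have hmkS : m - k ∈ S :=
      ⟨by omega, _, neg_ne_zero.2 (mul_ne_zero (inv_ne_zero hy) hx), hf2⟩
    have hnN : n < N := lt_of_le_of_lt (hmin _ hmkS) (by omega)
    refine ⟨X ^ n - C μ, ⟨⟨n, μ, hnpos, hμ, rfl⟩, hfn, ?_⟩, ?_, ?_⟩
    · rintro h ⟨p, c, hp, hc, rfl⟩ hfh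
      rw [natDegree_X_pow_sub_C, natDegree_X_pow_sub_C]
      exact hmin p ⟨hp, c, hc, hfh⟩
    · obtain ⟨q, hq1, hq2⟩ := descent N l hN hl hdvd
      have h6 : X ^ N - C l = (X ^ n) ^ q - (C μ : F[X]) ^ q := by
        rw [← pow_mul, ← C_pow, ← hq1, ← hq2]
      rw [h6]; exact sub_dvd_pow_sub_pow _ _ q
    · rw [natDegree_X_pow_sub_C]; exact hnN
  · rintro ⟨b, ⟨⟨p, c, hp, hc, rfl⟩, hfb, -⟩, hbdvd, hbdeg⟩
    rw [natDegree_X_pow_sub_C] at hbdeg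
    have hsupp : (X ^ p - C c : F[X]).support.card = 2 := by
      apply Polynomial.card_support_eq_two.mpr
      refine ⟨0, p, hp, -c, 1, neg_ne_zero.2 hc, one_ne_zero, ?_⟩
      rw [pow_zero, mul_one, C_1, one_mul, C_neg]; ring
    have hb0 : (X ^ p - C c : F[X]) ≠ 0 := fun h => by simp [h] at hsupp
    exact ⟨⟨_, hb0, hfb, by rwa [natDegree_X_pow_sub_C], hsupp⟩,
      fun g hg0 hfg _ => hw2 g hg0 hfg⟩
end
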